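/- arXiv:2405.20891 — 6 statements merged into one kernel-verified Lean document; each statement's English description precedes it below -/
import Mathlib

section
/- Let M be a maximal independent set of the Kneser graph Γ_d on chambers of PG(d,q), and let f be a coflag of M-weight two, with (P₁,f,H₁) and (P₂,f,H₂) the two chambers of M containing f. Then P₁ ≠ P₂ and H₁ ≠ H₂, and every chamber (Q,g,R) of M whose coflag g is f-opposite to f satisfies either (P₁ ≤ R and Q ≤ H₂) or (P₂ ≤ R and Q ≤ H₁). -/
/-- A chamber of `PG(d,q)`: a tuple `(S₀,…,S_{d−1})` of subspaces of `F^{d+1}` with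
`S_i` of linear dimension `i+1` and `S_i ≤ S_{i+1}`. -/
def IsChamberD (F : Type) [Field F] (d : ℕ) (C : Fin d → Submodule F (Fin (d+1) → F)) : Prop :=
  (∀ i : Fin d, Module.finrank F ↥(C i) = i.val + 1) ∧ ∀ i j : Fin d, i ≤ j → C i ≤ C j

/-- Two chambers of `PG(d,q)` are opposite: `S_i ∩ R_{d−1−i} = 0` for all `i`. -/
def OppD (F : Type) [Field F] (d : ℕ) (C D : Fin d → Submodule F (Fin (d+1) → F)) : Prop :=
  ∀ i : Fin d, C i ⊓ D ⟨d - 1 - i.val, by have := i.isLt; omega⟩ = ⊥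

/-- An independent set of the Kneser graph `Γ_d`: a set of pairwise non-opposite chambers. -/
def IndepD (F : Type) [Field F] (d : ℕ)
    (M : Set (Fin d → Submodule F (Fin (d+1) → F))) : Prop :=
  (∀ C ∈ M, IsChamberD F d C) ∧ ∀ C ∈ M, ∀ D ∈ M, ¬ OppD F d C D

/-- A maximal independent set of `Γ_d`. -/
def MaxIndepD (F : Type) [Field F] (d : ℕ)
    (M : Set (Fin d → Submodule F (Fin (d+1) → F))) : Prop :=
  IndepD F d M ∧
  ∀ C : Fin d → Submodule F (Fin (d+1) → F),
    IsChamberD F d C → (∀ D ∈ M, ¬ OppD F d C D) → C ∈ M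

/-- A coflag of `PG(d,q)`: a tuple `(S₁,…,S_{d−2})` (re-indexed by `Fin (d-2)`) of
subspaces of `F^{d+1}`, the `i`-th entry of linear dimension `i+2`, nested. -/
def IsCoflagD (F : Type) [Field F] (d : ℕ)
    (f : Fin (d-2) → Submodule F (Fin (d+1) → F)) : Prop :=
  (∀ i, Module.finrank F ↥(f i) = i.val + 2) ∧ ∀ i j, i ≤ j → f i ≤ f j

/-- Two coflags are f-opposite: each pair of entries intersects trivially or spans. -/
def FOppD (F : Type) [Field F] (d : ℕ)
    (f g : Fin (d-2) → Submodule F (Fin (d+1) → F)) : Prop :=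
  ∀ i j, f i ⊓ g j = ⊥ ∨ f i ⊔ g j = ⊤

/-- The coflag `(S₁,…,S_{d−2})` of a chamber `(S₀,…,S_{d−1})`. -/
def coflagOf (F : Type) [Field F] {d : ℕ} (hd : 3 ≤ d)
    (C : Fin d → Submodule F (Fin (d+1) → F)) :
    Fin (d-2) → Submodule F (Fin (d+1) → F) :=
  fun i => C ⟨i.val + 1, by have := i.isLt; omega⟩

/-- The point `S₀` of a chamber. -/
def pointOf (F : Type) [Field F] {d : ℕ} (hd : 3 ≤ d)
    (C : Fin d → Submodule F (Fin (d+1) → F)) : Submodule F (Fin (d+1) → F) :=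
  C ⟨0, by omega⟩

/-- The hyperplane `S_{d−1}` of a chamber. -/
def hypOf (F : Type) [Field F] {d : ℕ} (hd : 3 ≤ d)
    (C : Fin d → Submodule F (Fin (d+1) → F)) : Submodule F (Fin (d+1) → F) :=
  C ⟨d - 1, by omega⟩

/-- The tuple `(P, f, H)` written as a chamber-shaped tuple `(S₀,…,S_{d−1})`. -/
def assembleD (F : Type) [Field F] {d : ℕ} (hd : 3 ≤ d)
    (P : Submodule F (Fin (d+1) → F)) (f : Fin (d-2) → Submodule F (Fin (d+1) → F))
    (H : Submodule F (Fin (d+1) → F)) : Fin d → Submodule F (Fin (d+1) → F) :=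
  fun i =>
    if h0 : i.val = 0 then P
    else if h1 : i.val = d - 1 then H
    else f ⟨i.val - 1, by have := i.isLt; omega⟩

/-- The `M`-weight of a coflag `f`: the number of chambers of `M` whose coflag is `f`. -/
noncomputable def weightD (F : Type) [Field F] {d : ℕ} (hd : 3 ≤ d)
    (M : Set (Fin d → Submodule F (Fin (d+1) → F)))
    (f : Fin (d-2) → Submodule F (Fin (d+1) → F)) : ℕ :=
  Set.ncard {C | C ∈ M ∧ coflagOf F hd C = f}

/-- The `M`-weight of an incident coflag–hyperplane pair `(f,H)`: the number of chambers
of `M` containing both `f` and `H`. -/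
noncomputable def weightFHD (F : Type) [Field F] {d : ℕ} (hd : 3 ≤ d)
    (M : Set (Fin d → Submodule F (Fin (d+1) → F)))
    (f : Fin (d-2) → Submodule F (Fin (d+1) → F))
    (H : Submodule F (Fin (d+1) → F)) : ℕ :=
  Set.ncard {C | C ∈ M ∧ coflagOf F hd C = f ∧ hypOf F hd C = H}


open Module Submodule

open Module Submodule

section Helpers

variable {F : Type} [Field F] {d : ℕ}

private lemma frV : Module.finrank F (Fin (d+1) → F) = d + 1 := by
  simp [Module.finrank_pi]

private lemma le_of_inf_ne_bot' {Q X : Submodule F (Fin (d+1) → F)}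
    (hQ : Module.finrank F Q = 1) (h : Q ⊓ X ≠ ⊥) : Q ≤ X := by
  obtain ⟨x, hx, hx0⟩ := Submodule.exists_mem_ne_zero_of_ne_bot h
  have hsp : Submodule.span F {x} ≤ Q := by
    rw [Submodule.span_singleton_le_iff_mem]; exact hx.1
  have heq : Submodule.span F {x} = Q :=
    Submodule.eq_of_le_of_finrank_le hsp (by rw [finrank_span_singleton hx0, hQ])
  rw [← heq, Submodule.span_singleton_le_iff_mem]; exact hx.2

private lemma inf_bot_of_sup_top {s t : Submodule F (Fin (d+1) → F)}
    (h : s ⊔ t = ⊤) (hst : Module.finrank F s + Module.finrank F t = d + 1) :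
    s ⊓ t = ⊥ := by
  have h1 := Submodule.finrank_sup_add_finrank_inf_eq s t
  rw [h, finrank_top, frV] at h1
  exact Submodule.finrank_eq_zero.mp (by omega)

private lemma inf_span_bot {w : Fin (d+1) → F} {S : Submodule F (Fin (d+1) → F)}
    (hw : w ∉ S) : S ⊓ Submodule.span F {w} = ⊥ := by
  rw [eq_bot_iff]
  rintro x ⟨hx2, hx1⟩
  obtain ⟨c, rfl⟩ := Submodule.mem_span_singleton.mp hx1
  rcases eq_or_ne c 0 with rfl | hc
  · simp
  · exact absurd (by simpa [smul_smul, inv_mul_cancel₀ hc] using S.smul_mem c⁻¹ hx2) hw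

private lemma inf_hyp {S H₁ H₂ : Submodule F (Fin (d+1) → F)}
    (hS : finrank F S = d - 1) (h1 : finrank F H₁ = d) (h2 : finrank F H₂ = d)
    (hSH1 : S ≤ H₁) (hSH2 : S ≤ H₂) (hne : H₁ ≠ H₂) : H₁ ⊓ H₂ = S := by
  have hlt : H₁ ⊓ H₂ < H₁ := by
    rcases (inf_le_left : H₁ ⊓ H₂ ≤ H₁).lt_or_eq with h | h
    · exact h
    · exact absurd (Submodule.eq_of_le_of_finrank_le (inf_eq_left.mp h) (by omega)) hne
  have hfr := Submodule.finrank_lt_finrank_of_lt hlt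
  rw [h1] at hfr
  refine (Submodule.eq_of_le_of_finrank_le (le_inf hSH1 hSH2) ?_).symm
  omega

private lemma sup_points {S P₁ P₂ : Submodule F (Fin (d+1) → F)}
    (hS : finrank F S = 2) (h1 : finrank F P₁ = 1) (h2 : finrank F P₂ = 1)
    (hP1 : P₁ ≤ S) (hP2 : P₂ ≤ S) (hne : P₁ ≠ P₂) : P₁ ⊔ P₂ = S := by
  have hinf : P₁ ⊓ P₂ = ⊥ := by
    rcases (inf_le_left : P₁ ⊓ P₂ ≤ P₁).lt_or_eq with h | h
    · have hh := Submodule.finrank_lt_finrank_of_lt h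
      rw [h1] at hh
      exact Submodule.finrank_eq_zero.mp (by omega)
    · exact absurd (Submodule.eq_of_le_of_finrank_le (inf_eq_left.mp h) (by omega)) hne
  have hsum := Submodule.finrank_sup_add_finrank_inf_eq P₁ P₂
  rw [hinf, finrank_bot] at hsum
  apply Submodule.eq_of_le_of_finrank_le (sup_le hP1 hP2)
  omega

private lemma third_point {S P₁ P₂ : Submodule F (Fin (d+1) → F)}
    (hS : finrank F S = 2) (h1 : finrank F P₁ = 1) (h2 : finrank F P₂ = 1)
    (hP1 : P₁ ≤ S) (hP2 : P₂ ≤ S) (hne : P₁ ≠ P₂) :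
    ∃ P' : Submodule F (Fin (d+1) → F),
      finrank F P' = 1 ∧ P' ≤ S ∧ P' ≠ P₁ ∧ P' ≠ P₂ := by
  obtain ⟨u, hu, hu0⟩ := Submodule.exists_mem_ne_zero_of_ne_bot
    (show P₁ ≠ ⊥ by intro h; rw [h, finrank_bot] at h1; omega)
  obtain ⟨v, hv, hv0⟩ := Submodule.exists_mem_ne_zero_of_ne_bot
    (show P₂ ≠ ⊥ by intro h; rw [h, finrank_bot] at h2; omega)
  have hPu : P₁ = Submodule.span F {u} := (Submodule.eq_of_le_of_finrank_le
    ((Submodule.span_singleton_le_iff_mem _ _).mpr hu)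
    (by rw [finrank_span_singleton hu0, h1])).symm
  have hPv : P₂ = Submodule.span F {v} := (Submodule.eq_of_le_of_finrank_le
    ((Submodule.span_singleton_le_iff_mem _ _).mpr hv)
    (by rw [finrank_span_singleton hv0, h2])).symm
  have hW : u + v ≠ 0 := by
    intro h
    apply hne
    have hvP1 : v ∈ P₁ := by
      have hveq : v = -u := eq_neg_of_add_eq_zero_right h
      rw [hveq]; exact P₁.neg_mem hu
    have hle : P₂ ≤ P₁ := by rw [hPv]; exact (Submodule.span_singleton_le_iff_mem _ _).mpr hvP1
    exact (Submodule.eq_of_le_of_finrank_le hle (by omega)).symm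
  refine ⟨Submodule.span F {u+v}, finrank_span_singleton hW, ?_, ?_, ?_⟩
  · rw [Submodule.span_singleton_le_iff_mem]; exact S.add_mem (hP1 hu) (hP2 hv)
  · intro h
    have huv : u + v ∈ P₁ := by rw [← h]; exact Submodule.mem_span_singleton_self _
    have hvP1 : v ∈ P₁ := by simpa using P₁.sub_mem huv hu
    apply hne
    have hle : P₂ ≤ P₁ := by rw [hPv]; exact (Submodule.span_singleton_le_iff_mem _ _).mpr hvP1
    exact (Submodule.eq_of_le_of_finrank_le hle (by omega)).symm
  · intro h
    have huv : u + v ∈ P₂ := by rw [← h]; exact Submodule.mem_span_singleton_self _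
    have huP2 : u ∈ P₂ := by simpa using P₂.sub_mem huv hv
    apply hne
    have hle : P₁ ≤ P₂ := by rw [hPu]; exact (Submodule.span_singleton_le_iff_mem _ _).mpr huP2
    exact Submodule.eq_of_le_of_finrank_le hle (by omega)

private lemma third_hyp {S H₁ H₂ : Submodule F (Fin (d+1) → F)}
    (hS : finrank F S = d - 1) (h1 : finrank F H₁ = d) (h2 : finrank F H₂ = d)
    (hSH1 : S ≤ H₁) (hSH2 : S ≤ H₂) (hne : H₁ ≠ H₂) (hd1 : 1 ≤ d) :
    ∃ H' : Submodule F (Fin (d+1) → F),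
      finrank F H' = d ∧ S ≤ H' ∧ H' ≠ H₁ ∧ H' ≠ H₂ := by
  have h12 : ¬ H₁ ≤ H₂ := fun h => hne (Submodule.eq_of_le_of_finrank_le h (by omega))
  have h21 : ¬ H₂ ≤ H₁ := fun h => hne (Submodule.eq_of_le_of_finrank_le h (by omega)).symm
  obtain ⟨v₁, hv1, hv1'⟩ := SetLike.not_le_iff_exists.mp h12
  obtain ⟨v₂, hv2, hv2'⟩ := SetLike.not_le_iff_exists.mp h21
  have hwH1 : v₁ + v₂ ∉ H₁ := fun h => hv2' (by simpa using H₁.sub_mem h hv1)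
  have hwH2 : v₁ + v₂ ∉ H₂ := fun h => hv1' (by simpa using H₂.sub_mem h hv2)
  have hwS : v₁ + v₂ ∉ S := fun h => hwH1 (hSH1 h)
  have hw0 : v₁ + v₂ ≠ 0 := fun h => hwH1 (by rw [h]; exact H₁.zero_mem)
  refine ⟨S ⊔ Submodule.span F {v₁ + v₂}, ?_, le_sup_left, ?_, ?_⟩
  · have hsum := Submodule.finrank_sup_add_finrank_inf_eq S (Submodule.span F {v₁ + v₂})
    rw [inf_span_bot hwS, finrank_bot, finrank_span_singleton hw0, hS] at hsum
    omega
  · intro h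
    apply hwH1; rw [← h]
    exact Submodule.mem_sup_right (Submodule.mem_span_singleton_self _)
  · intro h
    apply hwH2; rw [← h]
    exact Submodule.mem_sup_right (Submodule.mem_span_singleton_self _)

end Helpers

section Bounds
private lemma bA {d : ℕ} (hd : 3 ≤ d) : 0 < d := by omega
private lemma bB {d : ℕ} (hd : 3 ≤ d) : 1 < d := by omega
private lemma bC {d : ℕ} (hd : 3 ≤ d) : d - 1 < d := by omega
private lemma bD {d : ℕ} (hd : 3 ≤ d) : d - 2 < d := by omega
private lemma bE {d : ℕ} (hd : 3 ≤ d) : 0 < d - 2 := by omega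
private lemma bF {d : ℕ} (hd : 3 ≤ d) : d - 3 < d - 2 := by omega
private lemma bG {d iv : ℕ} (h : iv < d - 2) : iv + 1 < d := by omega
private lemma bH {d iv : ℕ} (h : iv < d - 2) : iv + 1 - 1 < d - 2 := by omega
private lemma bI {d iv : ℕ} (hd : 3 ≤ d) (hiv : iv < d) (hl : iv ≠ d - 1) : iv - 1 < d - 2 := by
  omega
private lemma bJ {d iv : ℕ} (hd : 3 ≤ d) : d - 1 - iv < d := by omega
private lemma bK {d iv : ℕ} (hd : 3 ≤ d) (hiv : iv < d) (hz : iv ≠ 0) : d - 2 - iv < d - 2 := by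
  omega
private lemma bL {d iv : ℕ} (hd : 3 ≤ d) : d - 2 - iv + 1 < d := by omega
private lemma bM {d : ℕ} (hd : 3 ≤ d) : d - 2 ≤ d - 1 := by omega
private lemma bN {d jv : ℕ} (h : jv < d - 2) : jv ≤ d - 3 := by omega
private lemma bP {d jv : ℕ} (h : jv < d - 2) : jv + 1 ≠ d - 1 := by omega
private lemma bQ {d : ℕ} (hd : 3 ≤ d) : 1 ≠ d - 1 := by omega
private lemma bR {d : ℕ} (hd : 3 ≤ d) : d - 2 ≠ 0 := by omega
private lemma bS {d : ℕ} (hd : 3 ≤ d) : d - 2 ≠ d - 1 := by omega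
private lemma bT {d : ℕ} : d - 1 - 1 = d - 2 := by omega
private lemma bU {d : ℕ} (hd : 3 ≤ d) : d - 1 - (d - 2) = 1 := by omega
private lemma bV {d : ℕ} : d - 2 - 1 = d - 3 := by omega
private lemma bW {d iv : ℕ} (hd : 3 ≤ d) (hiv : iv < d) (hl : iv ≠ d - 1) :
    d - 1 - iv = d - 2 - iv + 1 := by omega
private lemma bX {d : ℕ} (hd : 3 ≤ d) : 1 ≤ d := by omega
private lemma bY {d : ℕ} (hd : 3 ≤ d) : d - 1 ≠ 0 := by omega
private lemma bZ {d iv : ℕ} (hd : 3 ≤ d) (hiv : iv < d) (hz : iv ≠ 0) (hl : iv ≠ d - 1) :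
    d - 1 - iv ≠ 0 := by omega
private lemma bZ2 {d iv : ℕ} (hiv : iv < d) (hz : iv ≠ 0) : d - 1 - iv ≠ d - 1 := by omega
end Bounds

section AsmHelpers

variable {F : Type} [Field F] {d : ℕ} (hd : 3 ≤ d)

private lemma asm_zero (P : Submodule F (Fin (d+1) → F))
    (f : Fin (d-2) → Submodule F (Fin (d+1) → F)) (H : Submodule F (Fin (d+1) → F))
    (h : 0 < d) : assembleD F hd P f H ⟨0, h⟩ = P := by
  simp [assembleD]

private lemma asm_last (P : Submodule F (Fin (d+1) → F))
    (f : Fin (d-2) → Submodule F (Fin (d+1) → F)) (H : Submodule F (Fin (d+1) → F))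
    (h : d - 1 < d) : assembleD F hd P f H ⟨d-1, h⟩ = H := by
  have h0 : ¬ (d - 1 = 0) := by omega
  simp [assembleD, h0]

private lemma asm_mid' (P : Submodule F (Fin (d+1) → F))
    (f : Fin (d-2) → Submodule F (Fin (d+1) → F)) (H : Submodule F (Fin (d+1) → F))
    (iv : ℕ) (hiv : iv < d) (h0 : iv ≠ 0) (h1 : iv ≠ d - 1) (hsub : iv - 1 < d - 2) :
    assembleD F hd P f H ⟨iv, hiv⟩ = f ⟨iv - 1, hsub⟩ := by
  simp [assembleD, h0, h1]

private lemma coflag_asm (P : Submodule F (Fin (d+1) → F))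
    (f : Fin (d-2) → Submodule F (Fin (d+1) → F)) (H : Submodule F (Fin (d+1) → F)) :
    coflagOf F hd (assembleD F hd P f H) = f := by
  funext j
  have hj := j.isLt
  have h : coflagOf F hd (assembleD F hd P f H) j
      = assembleD F hd P f H ⟨j.val + 1, by omega⟩ := rfl
  rw [h, asm_mid' hd P f H (j.val + 1) (by omega) (by omega) (by omega) (by omega)]
  have e : (⟨j.val + 1 - 1, by omega⟩ : Fin (d-2)) = j :=
    Fin.ext (show j.val + 1 - 1 = j.val by omega)
  rw [e]

private lemma isChamber_asm (P : Submodule F (Fin (d+1) → F))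
    (f : Fin (d-2) → Submodule F (Fin (d+1) → F)) (H : Submodule F (Fin (d+1) → F))
    (hP : Module.finrank F P = 1) (hH : Module.finrank F H = d)
    (hf : ∀ j : Fin (d-2), Module.finrank F (f j) = j.val + 2)
    (hmono : ∀ i j : Fin (d-2), i ≤ j → f i ≤ f j)
    (hPf : P ≤ f ⟨0, by omega⟩)
    (hfH : ∀ j, f j ≤ H) :
    IsChamberD F d (assembleD F hd P f H) := by
  constructor
  · rintro ⟨iv, hiv⟩
    by_cases hi0 : iv = 0
    · subst hi0
      rw [asm_zero]
      show Module.finrank F ↥P = 0 + 1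
      omega
    · by_cases hiL : iv = d - 1
      · subst hiL
        rw [asm_last]
        show Module.finrank F ↥H = d - 1 + 1
        omega
      · rw [asm_mid' hd P f H iv hiv hi0 hiL (by omega)]
        have h2 : Module.finrank F ↥(f ⟨iv - 1, by omega⟩) = iv - 1 + 2 := hf _
        show Module.finrank F ↥(f ⟨iv - 1, by omega⟩) = iv + 1
        omega
  · rintro ⟨iv, hiv⟩ ⟨jv, hjv⟩ hij
    have hij' : iv ≤ jv := hij
    by_cases hi0 : iv = 0
    · subst hi0
      rw [asm_zero]
      by_cases hj0 : jv = 0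
      · subst hj0; rw [asm_zero]
      · by_cases hjL : jv = d - 1
        · subst hjL; rw [asm_last]
          exact hPf.trans (hfH _)
        · rw [asm_mid' hd P f H jv hjv hj0 hjL (by omega)]
          exact hPf.trans (hmono ⟨0, by omega⟩ ⟨jv - 1, by omega⟩ (Nat.zero_le _))
    · by_cases hiL : iv = d - 1
      · have hjL : jv = d - 1 := by omega
        subst hiL; subst hjL
        rw [asm_last]
      · rw [asm_mid' hd P f H iv hiv hi0 hiL (by omega)]
        by_cases hj0 : jv = 0
        · exact absurd hij' (by omega)
        · by_cases hjL : jv = d - 1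
          · subst hjL; rw [asm_last]
            exact hfH _
          · rw [asm_mid' hd P f H jv hjv hj0 hjL (by omega)]
            exact hmono _ _ (show iv - 1 ≤ jv - 1 by omega)

private lemma opp_get {C D : Fin d → Submodule F (Fin (d+1) → F)} (h : OppD F d C D)
    (iv : ℕ) (hiv : iv < d) (jv : ℕ) (hjv : jv < d) (hsum : jv = d - 1 - iv) :
    C ⟨iv, hiv⟩ ⊓ D ⟨jv, hjv⟩ = ⊥ := by
  subst hsum
  exact h ⟨iv, hiv⟩

private lemma decode (P : Submodule F (Fin (d+1) → F))
    (f : Fin (d-2) → Submodule F (Fin (d+1) → F)) (H : Submodule F (Fin (d+1) → F))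
    (D : Fin d → Submodule F (Fin (d+1) → F))
    (hmid : ∀ (iv : ℕ) (hiv : iv < d) (h0 : iv ≠ 0) (h1 : iv ≠ d - 1),
      f ⟨iv - 1, by omega⟩ ⊓ D ⟨d - 1 - iv, by omega⟩ = ⊥)
    (hno : ¬ OppD F d (assembleD F hd P f H) D) :
    P ⊓ D ⟨d - 1, by omega⟩ ≠ ⊥ ∨ H ⊓ D ⟨0, by omega⟩ ≠ ⊥ := by
  by_contra hcon
  push_neg at hcon
  apply hno
  rintro ⟨iv, hiv⟩
  show assembleD F hd P f H ⟨iv, hiv⟩ ⊓ D ⟨d - 1 - iv, by omega⟩ = ⊥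
  by_cases h0 : iv = 0
  · subst h0
    rw [asm_zero]
    exact hcon.1
  · by_cases h1 : iv = d - 1
    · subst h1
      rw [asm_last]
      have e : (⟨d - 1 - (d - 1), by omega⟩ : Fin d) = ⟨0, by omega⟩ :=
        Fin.ext (show d - 1 - (d - 1) = 0 by omega)
      rw [e]
      exact hcon.2
    · rw [asm_mid' hd P f H iv hiv h0 h1 (by omega)]
      exact hmid iv hiv h0 h1

end AsmHelpers

/-- If a coflag `f` has `M`-weight two, `(P₁,f,H₁)` and `(P₂,f,H₂)` being the two
chambers of `M` containing `f`, then `P₁ ≠ P₂`, `H₁ ≠ H₂`, and every chamber `(Q,g,R)`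
of `M` with `g` f-opposite to `f` satisfies `(P₁ ≤ R ∧ Q ≤ H₂)` or `(P₂ ≤ R ∧ Q ≤ H₁)`. -/
theorem statement_8 (q : ℕ) (F : Type) [Field F] [Fintype F]
    (hq : Fintype.card F = q) (d : ℕ) (hd : 3 ≤ d)
    (M : Set (Fin d → Submodule F (Fin (d+1) → F))) (hM : MaxIndepD F d M)
    (P₁ P₂ H₁ H₂ : Submodule F (Fin (d+1) → F))
    (f : Fin (d-2) → Submodule F (Fin (d+1) → F))
    (h1 : assembleD F hd P₁ f H₁ ∈ M) (h2 : assembleD F hd P₂ f H₂ ∈ M)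
    (hne : assembleD F hd P₁ f H₁ ≠ assembleD F hd P₂ f H₂)
    (hw : weightD F hd M f = 2) :
    P₁ ≠ P₂ ∧ H₁ ≠ H₂ ∧
    ∀ C ∈ M, FOppD F d (coflagOf F hd C) f →
      (P₁ ≤ hypOf F hd C ∧ pointOf F hd C ≤ H₂) ∨
      (P₂ ≤ hypOf F hd C ∧ pointOf F hd C ≤ H₁) := by
  classical
  obtain ⟨⟨hChAll, hNopp⟩, hMax⟩ := hM
  have hCh1 : IsChamberD F d (assembleD F hd P₁ f H₁) := hChAll _ h1
  have hCh2 : IsChamberD F d (assembleD F hd P₂ f H₂) := hChAll _ h2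
  -- basic dimension facts
  have frP1 : Module.finrank F ↥P₁ = 1 := by
    have h : Module.finrank F ↥(assembleD F hd P₁ f H₁ ⟨0, bA hd⟩) = 0 + 1 :=
      hCh1.1 ⟨0, bA hd⟩
    rw [asm_zero] at h; omega
  have frP2 : Module.finrank F ↥P₂ = 1 := by
    have h : Module.finrank F ↥(assembleD F hd P₂ f H₂ ⟨0, bA hd⟩) = 0 + 1 :=
      hCh2.1 ⟨0, bA hd⟩
    rw [asm_zero] at h; omega
  have frH1 : Module.finrank F ↥H₁ = d := by
    have h : Module.finrank F ↥(assembleD F hd P₁ f H₁ ⟨d - 1, bC hd⟩) = d - 1 + 1 :=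
      hCh1.1 ⟨d - 1, bC hd⟩
    rw [asm_last] at h; omega
  have frH2 : Module.finrank F ↥H₂ = d := by
    have h : Module.finrank F ↥(assembleD F hd P₂ f H₂ ⟨d - 1, bC hd⟩) = d - 1 + 1 :=
      hCh2.1 ⟨d - 1, bC hd⟩
    rw [asm_last] at h; omega
  have frf : ∀ j : Fin (d-2), Module.finrank F ↥(f j) = j.val + 2 := by
    intro j
    have h : Module.finrank F ↥(assembleD F hd P₁ f H₁ ⟨j.val + 1, bG j.isLt⟩)
        = j.val + 1 + 1 := hCh1.1 ⟨j.val + 1, bG j.isLt⟩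
    rw [asm_mid' hd P₁ f H₁ (j.val + 1) (bG j.isLt) (Nat.succ_ne_zero _) (bP j.isLt)
      (bH j.isLt)] at h
    have e : (⟨j.val + 1 - 1, bH j.isLt⟩ : Fin (d-2)) = j := Fin.ext (Nat.add_sub_cancel _ 1)
    rw [e] at h
    omega
  have frf0 : Module.finrank F ↥(f ⟨0, bE hd⟩) = 2 := frf ⟨0, bE hd⟩
  have frft : Module.finrank F ↥(f ⟨d - 3, bF hd⟩) = d - 1 := by
    have h : Module.finrank F ↥(f ⟨d - 3, bF hd⟩) = d - 3 + 2 := frf ⟨d - 3, bF hd⟩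
    omega
  have fmono : ∀ i j : Fin (d-2), i ≤ j → f i ≤ f j := by
    intro i j hij
    have h := hCh1.2 ⟨i.val + 1, bG i.isLt⟩ ⟨j.val + 1, bG j.isLt⟩
      (show i.val + 1 ≤ j.val + 1 from Nat.succ_le_succ hij)
    rw [asm_mid' hd P₁ f H₁ (i.val + 1) (bG i.isLt) (Nat.succ_ne_zero _) (bP i.isLt)
          (bH i.isLt),
        asm_mid' hd P₁ f H₁ (j.val + 1) (bG j.isLt) (Nat.succ_ne_zero _) (bP j.isLt)
          (bH j.isLt)] at h
    have ei : (⟨i.val + 1 - 1, bH i.isLt⟩ : Fin (d-2)) = i := Fin.ext (Nat.add_sub_cancel _ 1)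
    have ej : (⟨j.val + 1 - 1, bH j.isLt⟩ : Fin (d-2)) = j := Fin.ext (Nat.add_sub_cancel _ 1)
    rwa [ei, ej] at h
  have hP1f : P₁ ≤ f ⟨0, bE hd⟩ := by
    have h := hCh1.2 ⟨0, bA hd⟩ ⟨1, bB hd⟩ (Nat.zero_le 1)
    rwa [asm_zero, asm_mid' hd P₁ f H₁ 1 (bB hd) one_ne_zero (bQ hd) (bE hd)] at h
  have hP2f : P₂ ≤ f ⟨0, bE hd⟩ := by
    have h := hCh2.2 ⟨0, bA hd⟩ ⟨1, bB hd⟩ (Nat.zero_le 1)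
    rwa [asm_zero, asm_mid' hd P₂ f H₂ 1 (bB hd) one_ne_zero (bQ hd) (bE hd)] at h
  have htop1 : f ⟨d - 3, bF hd⟩ ≤ H₁ := by
    have h := hCh1.2 ⟨d - 2, bD hd⟩ ⟨d - 1, bC hd⟩ (bM hd)
    rw [asm_mid' hd P₁ f H₁ (d - 2) (bD hd) (bR hd) (bS hd) (bI hd (bD hd) (bS hd)),
        asm_last] at h
    have e : (⟨d - 2 - 1, bI hd (bD hd) (bS hd)⟩ : Fin (d-2)) = ⟨d - 3, bF hd⟩ := Fin.ext bV
    rwa [e] at h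
  have htop2 : f ⟨d - 3, bF hd⟩ ≤ H₂ := by
    have h := hCh2.2 ⟨d - 2, bD hd⟩ ⟨d - 1, bC hd⟩ (bM hd)
    rw [asm_mid' hd P₂ f H₂ (d - 2) (bD hd) (bR hd) (bS hd) (bI hd (bD hd) (bS hd)),
        asm_last] at h
    have e : (⟨d - 2 - 1, bI hd (bD hd) (bS hd)⟩ : Fin (d-2)) = ⟨d - 3, bF hd⟩ := Fin.ext bV
    rwa [e] at h
  have hfH1all : ∀ j, f j ≤ H₁ := fun j => le_trans (fmono j ⟨d - 3, bF hd⟩ (bN j.isLt)) htop1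
  have hfH2all : ∀ j, f j ≤ H₂ := fun j => le_trans (fmono j ⟨d - 3, bF hd⟩ (bN j.isLt)) htop2
  -- the only chambers of M with coflag f are the two given ones
  have key : ∀ C, C ∈ M → coflagOf F hd C = f →
      C = assembleD F hd P₁ f H₁ ∨ C = assembleD F hd P₂ f H₂ := by
    have hw' : Set.ncard {C | C ∈ M ∧ coflagOf F hd C = f} = 2 := hw
    obtain ⟨a, b, hab, hset⟩ := Set.ncard_eq_two.mp hw'
    have m1 : assembleD F hd P₁ f H₁ ∈ ({a, b} : Set _) := by
      rw [← hset]; exact ⟨h1, coflag_asm hd P₁ f H₁⟩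
    have m2 : assembleD F hd P₂ f H₂ ∈ ({a, b} : Set _) := by
      rw [← hset]; exact ⟨h2, coflag_asm hd P₂ f H₂⟩
    intro C hC hCf
    have m3 : C ∈ ({a, b} : Set _) := by rw [← hset]; exact ⟨hC, hCf⟩
    simp only [Set.mem_insert_iff, Set.mem_singleton_iff] at m1 m2 m3
    rcases m1 with e1 | e1 <;> rcases m2 with e2 | e2 <;> rcases m3 with e3 | e3 <;>
      first
        | (exact absurd (e1.trans e2.symm) hne)
        | (left; rw [e3, ← e1])
        | (right; rw [e3, ← e2])
  -- P₁ ≠ P₂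
  have hPne : P₁ ≠ P₂ := by
    intro hPP
    have hHne : H₁ ≠ H₂ := by intro h; exact hne (by rw [hPP, h])
    have hinfH : H₁ ⊓ H₂ = f ⟨d - 3, bF hd⟩ := inf_hyp frft frH1 frH2 htop1 htop2 hHne
    obtain ⟨H', frH', hSH', hH'1, hH'2⟩ :=
      third_hyp frft frH1 frH2 htop1 htop2 hHne (bX hd)
    have hfH' : ∀ j, f j ≤ H' := fun j => le_trans (fmono j ⟨d - 3, bF hd⟩ (bN j.isLt)) hSH'
    have hCh' : IsChamberD F d (assembleD F hd P₁ f H') :=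
      isChamber_asm hd P₁ f H' frP1 frH' frf fmono hP1f hfH'
    have hnotM : assembleD F hd P₁ f H' ∉ M := by
      intro hmem
      rcases key _ hmem (coflag_asm hd P₁ f H') with hEq | hEq
      · apply hH'1
        have h := congrFun hEq ⟨d - 1, bC hd⟩
        rwa [asm_last, asm_last] at h
      · apply hH'2
        have h := congrFun hEq ⟨d - 1, bC hd⟩
        rwa [asm_last, asm_last] at h
    have hex : ∃ D ∈ M, OppD F d (assembleD F hd P₁ f H') D := by
      by_contra hcon
      push_neg at hcon
      exact hnotM (hMax _ hCh' hcon)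
    obtain ⟨D, hD, hopp⟩ := hex
    have hChD := hChAll D hD
    have frQ : Module.finrank F ↥(D ⟨0, bA hd⟩) = 1 := by
      have h : Module.finrank F ↥(D ⟨0, bA hd⟩) = 0 + 1 := hChD.1 ⟨0, bA hd⟩
      omega
    have hopp0 : P₁ ⊓ D ⟨d - 1, bC hd⟩ = ⊥ := by
      have h := opp_get hopp 0 (bA hd) (d - 1) (bC hd) rfl
      rwa [asm_zero] at h
    have hoppL : H' ⊓ D ⟨0, bA hd⟩ = ⊥ := by
      have h := opp_get hopp (d - 1) (bC hd) 0 (bA hd) (Nat.sub_self (d-1)).symm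
      rwa [asm_last] at h
    have hmidD : ∀ (iv : ℕ) (hiv : iv < d) (hz : iv ≠ 0) (hl : iv ≠ d - 1),
        f ⟨iv - 1, bI hd hiv hl⟩ ⊓ D ⟨d - 1 - iv, bJ hd⟩ = ⊥ := by
      intro iv hiv hz hl
      have h := opp_get hopp iv hiv (d - 1 - iv) (bJ hd) rfl
      rwa [asm_mid' hd P₁ f H' iv hiv hz hl (bI hd hiv hl)] at h
    rcases decode hd P₁ f H₁ D hmidD (hNopp _ h1 D hD) with h | h
    · exact h hopp0
    have hQ1 : D ⟨0, bA hd⟩ ≤ H₁ := le_of_inf_ne_bot' frQ (by rw [inf_comm]; exact h)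
    rcases decode hd P₂ f H₂ D hmidD (hNopp _ h2 D hD) with h' | h'
    · rw [← hPP] at h'; exact h' hopp0
    have hQ2 : D ⟨0, bA hd⟩ ≤ H₂ := le_of_inf_ne_bot' frQ (by rw [inf_comm]; exact h')
    have hQH' : D ⟨0, bA hd⟩ ≤ H' := by
      refine le_trans ?_ hSH'
      rw [← hinfH]; exact le_inf hQ1 hQ2
    have hbot : D ⟨0, bA hd⟩ = ⊥ := by
      rw [← hoppL]
      exact (inf_eq_right.mpr hQH').symm
    rw [hbot, finrank_bot] at frQ
    omega
  -- H₁ ≠ H₂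
  have hHne : H₁ ≠ H₂ := by
    intro hHH
    obtain ⟨P', frP', hP'f, hP'1, hP'2⟩ := third_point frf0 frP1 frP2 hP1f hP2f hPne
    have hCh' : IsChamberD F d (assembleD F hd P' f H₁) :=
      isChamber_asm hd P' f H₁ frP' frH1 frf fmono hP'f hfH1all
    have hnotM : assembleD F hd P' f H₁ ∉ M := by
      intro hmem
      rcases key _ hmem (coflag_asm hd P' f H₁) with hEq | hEq
      · apply hP'1
        have h := congrFun hEq ⟨0, bA hd⟩
        rwa [asm_zero, asm_zero] at h
      · apply hP'2
        have h := congrFun hEq ⟨0, bA hd⟩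
        rwa [asm_zero, asm_zero] at h
    have hex : ∃ D ∈ M, OppD F d (assembleD F hd P' f H₁) D := by
      by_contra hcon
      push_neg at hcon
      exact hnotM (hMax _ hCh' hcon)
    obtain ⟨D, hD, hopp⟩ := hex
    have hopp0 : P' ⊓ D ⟨d - 1, bC hd⟩ = ⊥ := by
      have h := opp_get hopp 0 (bA hd) (d - 1) (bC hd) rfl
      rwa [asm_zero] at h
    have hoppL : H₁ ⊓ D ⟨0, bA hd⟩ = ⊥ := by
      have h := opp_get hopp (d - 1) (bC hd) 0 (bA hd) (Nat.sub_self (d-1)).symm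
      rwa [asm_last] at h
    have hmidD : ∀ (iv : ℕ) (hiv : iv < d) (hz : iv ≠ 0) (hl : iv ≠ d - 1),
        f ⟨iv - 1, bI hd hiv hl⟩ ⊓ D ⟨d - 1 - iv, bJ hd⟩ = ⊥ := by
      intro iv hiv hz hl
      have h := opp_get hopp iv hiv (d - 1 - iv) (bJ hd) rfl
      rwa [asm_mid' hd P' f H₁ iv hiv hz hl (bI hd hiv hl)] at h
    have hP1R : P₁ ≤ D ⟨d - 1, bC hd⟩ := by
      rcases decode hd P₁ f H₁ D hmidD (hNopp _ h1 D hD) with h | h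
      · exact le_of_inf_ne_bot' frP1 h
      · exact absurd hoppL h
    have hP2R : P₂ ≤ D ⟨d - 1, bC hd⟩ := by
      rcases decode hd P₂ f H₂ D hmidD (hNopp _ h2 D hD) with h | h
      · exact le_of_inf_ne_bot' frP2 h
      · rw [← hHH] at h; exact absurd hoppL h
    have hsup : P₁ ⊔ P₂ = f ⟨0, bE hd⟩ := sup_points frf0 frP1 frP2 hP1f hP2f hPne
    have hP'R : P' ≤ D ⟨d - 1, bC hd⟩ := by
      refine le_trans hP'f ?_
      rw [← hsup]; exact sup_le hP1R hP2R
    have hbot : P' = ⊥ := by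
      rw [← hopp0]
      exact (inf_eq_left.mpr hP'R).symm
    rw [hbot, finrank_bot] at frP'
    omega
  refine ⟨hPne, hHne, ?_⟩
  intro C hC hfopp
  have hChC := hChAll C hC
  have frQ : Module.finrank F ↥(C ⟨0, bA hd⟩) = 1 := by
    have h : Module.finrank F ↥(C ⟨0, bA hd⟩) = 0 + 1 := hChC.1 ⟨0, bA hd⟩
    omega
  have frR : Module.finrank F ↥(C ⟨d - 1, bC hd⟩) = d := by
    have h : Module.finrank F ↥(C ⟨d - 1, bC hd⟩) = d - 1 + 1 := hChC.1 ⟨d - 1, bC hd⟩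
    omega
  have hmidC : ∀ (iv : ℕ) (hiv : iv < d) (hz : iv ≠ 0) (hl : iv ≠ d - 1),
      f ⟨iv - 1, bI hd hiv hl⟩ ⊓ C ⟨d - 1 - iv, bJ hd⟩ = ⊥ := by
    intro iv hiv hz hl
    have hCg : C ⟨d - 1 - iv, bJ hd⟩ = coflagOf F hd C ⟨d - 2 - iv, bK hd hiv hz⟩ := by
      show C _ = C _
      congr 1
      exact Fin.ext (bW hd hiv hl)
    rw [hCg, inf_comm]
    rcases hfopp ⟨d - 2 - iv, bK hd hiv hz⟩ ⟨iv - 1, bI hd hiv hl⟩ with h | h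
    · exact h
    · refine inf_bot_of_sup_top h ?_
      have h1f : Module.finrank F ↥(f ⟨iv - 1, bI hd hiv hl⟩) = iv - 1 + 2 := frf _
      have h2g : Module.finrank F ↥(coflagOf F hd C ⟨d - 2 - iv, bK hd hiv hz⟩)
          = d - 2 - iv + 1 + 1 := hChC.1 ⟨d - 2 - iv + 1, bL hd⟩
      omega
  have convH : ∀ (H : Submodule F (Fin (d+1) → F)),
      H ⊓ C ⟨0, bA hd⟩ ≠ ⊥ → C ⟨0, bA hd⟩ ≤ H := fun H h =>
    le_of_inf_ne_bot' frQ (by rw [inf_comm]; exact h)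
  have hcaseA : ¬ (P₁ ≤ C ⟨d - 1, bC hd⟩ ∧ P₂ ≤ C ⟨d - 1, bC hd⟩) := by
    rintro ⟨hA1, hA2⟩
    have hsup : P₁ ⊔ P₂ = f ⟨0, bE hd⟩ := sup_points frf0 frP1 frP2 hP1f hP2f hPne
    have hf0R : f ⟨0, bE hd⟩ ≤ C ⟨d - 1, bC hd⟩ := by
      rw [← hsup]; exact sup_le hA1 hA2
    have hgR : C ⟨d - 2, bD hd⟩ ≤ C ⟨d - 1, bC hd⟩ :=
      hChC.2 ⟨d - 2, bD hd⟩ ⟨d - 1, bC hd⟩ (bM hd)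
    have hinf : f ⟨0, bE hd⟩ ⊓ C ⟨d - 2, bD hd⟩ = ⊥ := by
      have h := hmidC 1 (bB hd) one_ne_zero (bQ hd)
      have e : (⟨d - 1 - 1, bJ hd⟩ : Fin d) = ⟨d - 2, bD hd⟩ := Fin.ext bT
      have e2 : (⟨1 - 1, bI hd (bB hd) (bQ hd)⟩ : Fin (d - 2)) = ⟨0, bE hd⟩ :=
        Fin.ext (Nat.sub_self 1)
      rwa [e, e2] at h
    have frg3 : Module.finrank F ↥(C ⟨d - 2, bD hd⟩) = d - 2 + 1 := hChC.1 ⟨d - 2, bD hd⟩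
    have hsum := Submodule.finrank_sup_add_finrank_inf_eq (f ⟨0, bE hd⟩) (C ⟨d - 2, bD hd⟩)
    rw [hinf, finrank_bot] at hsum
    have hle : Module.finrank F ↥(f ⟨0, bE hd⟩ ⊔ C ⟨d - 2, bD hd⟩)
        ≤ Module.finrank F ↥(C ⟨d - 1, bC hd⟩) :=
      Submodule.finrank_mono (sup_le hf0R hgR)
    omega
  have hcaseB : ¬ (C ⟨0, bA hd⟩ ≤ H₁ ∧ C ⟨0, bA hd⟩ ≤ H₂) := by
    rintro ⟨hB1, hB2⟩
    have hinfH : H₁ ⊓ H₂ = f ⟨d - 3, bF hd⟩ := inf_hyp frft frH1 frH2 htop1 htop2 hHne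
    have hQf : C ⟨0, bA hd⟩ ≤ f ⟨d - 3, bF hd⟩ := by
      rw [← hinfH]; exact le_inf hB1 hB2
    have hQg : C ⟨0, bA hd⟩ ≤ C ⟨1, bB hd⟩ := hChC.2 ⟨0, bA hd⟩ ⟨1, bB hd⟩ (Nat.zero_le 1)
    have hinf2 : f ⟨d - 3, bF hd⟩ ⊓ C ⟨1, bB hd⟩ = ⊥ := by
      have h := hmidC (d - 2) (bD hd) (bR hd) (bS hd)
      have e : (⟨d - 1 - (d - 2), bJ hd⟩ : Fin d) = ⟨1, bB hd⟩ := Fin.ext (bU hd)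
      have e2 : (⟨d - 2 - 1, bI hd (bD hd) (bS hd)⟩ : Fin (d - 2)) = ⟨d - 3, bF hd⟩ :=
        Fin.ext bV
      rwa [e, e2] at h
    have hbot : C ⟨0, bA hd⟩ = ⊥ := le_bot_iff.mp (by
      rw [← hinf2]; exact le_inf hQf hQg)
    rw [hbot, finrank_bot] at frQ
    omega
  rcases decode hd P₁ f H₁ C hmidC (hNopp _ h1 C hC) with h1' | h1' <;>
    rcases decode hd P₂ f H₂ C hmidC (hNopp _ h2 C hC) with h2' | h2'
  · exact absurd ⟨le_of_inf_ne_bot' frP1 h1', le_of_inf_ne_bot' frP2 h2'⟩ hcaseA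
  · left
    exact ⟨le_of_inf_ne_bot' frP1 h1', convH H₂ h2'⟩
  · right
    exact ⟨le_of_inf_ne_bot' frP2 h2', convH H₁ h1'⟩
  · exact absurd ⟨convH H₁ h1', convH H₂ h2'⟩ hcaseB
end

section
/- Let M be a maximal independent set of the Kneser graph Γ_d on chambers of PG(d,q), let (P,f,H) be a chamber of M, and suppose the coflag f has M-weight one. Then there exist chambers (Q₁,g₁,R₁) and (Q₂,g₂,R₂) in M such that: g₁ and g₂ are both f-opposite to f; P ≤ R₁ and Q₁ is not contained in H; and P is not contained in R₂ and Q₂ ≤ H. -/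
/-!
Since `f` has weight one, `(P,f,H)` is the only chamber of `M` through `f`, so every other
chamber `(P',f,H')` lies outside `M` and, by maximality, is opposite some `D ∈ M`; opposite
chambers have f-opposite coflags. As `D` is not opposite `(P,f,H)`, which shares the coflag
with `(P',f,H')`, the point of `D` lies in `H` or `P` lies in the hyperplane of `D`.
Moving the point (`P' ≠ P` on the line of `f`, `H' = H`) rules out the first alternative,
moving the hyperplane (`P' = P`, `H' ≠ H` through the top of `f`) rules out the second.
-/

open Module Submodule Function

lemma Submodule.inf_eq_bot_iff_not_le_of_finrank_eq_one {K V : Type*} [DivisionRing K]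
    [AddCommGroup V] [Module K V] {P R : Submodule K V} (hP : finrank K P = 1) :
    P ⊓ R = ⊥ ↔ ¬ P ≤ R := by
  rw [← disjoint_iff, (isAtom_iff_finrank_eq_one.mpr hP).not_le_iff_disjoint]

lemma Submodule.exists_le_finrank_eq_succ_ne {K V : Type*} [DivisionRing K] [AddCommGroup V]
    [Module K V] [Module.Finite K V] {W Y L : Submodule K V} (hWY : W ≤ Y) (hYL : Y < L) :
    ∃ X : Submodule K V, W ≤ X ∧ X ≤ L ∧ finrank K X = finrank K W + 1 ∧ X ≠ Y := by
  obtain ⟨v, hvL, hvY⟩ := SetLike.exists_of_lt hYL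
  refine ⟨W ⊔ span K {v}, le_sup_left,
    sup_le (hWY.trans hYL.le) ((span_singleton_le_iff_mem _ _).mpr hvL),
    finrank_sup_span_singleton fun hvW => hvY (hWY hvW), ?_⟩
  rintro rfl
  exact hvY (mem_sup_right (mem_span_singleton_self v))

variable {F : Type} [Field F] {d : ℕ}

lemma OppD.symm {C D : Fin d → Submodule F (Fin (d+1) → F)} (h : OppD F d C D) :
    OppD F d D C := by
  intro i
  have := h ⟨d - 1 - i.val, by omega⟩
  rw [inf_comm]
  simpa only [show d - 1 - (d - 1 - i.val) = i.val by omega] using this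

lemma OppD.pointOf_inf_hypOf (hd : 3 ≤ d) {C D : Fin d → Submodule F (Fin (d+1) → F)}
    (h : OppD F d C D) : pointOf F hd C ⊓ hypOf F hd D = ⊥ :=
  h ⟨0, by omega⟩

lemma OppD.sup_eq_top {C D : Fin d → Submodule F (Fin (d+1) → F)} (hC : IsChamberD F d C)
    (hD : IsChamberD F d D) (h : OppD F d C D) (i : Fin d) :
    C i ⊔ D ⟨d - 1 - i.val, by omega⟩ = ⊤ :=
  eq_top_of_disjoint _ _ (by rw [finrank_fin_fun, hC.1, hD.1]; dsimp only; omega)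
    (disjoint_iff.mpr (h i))

lemma OppD.fOppD_coflagOf (hd : 3 ≤ d) {C D : Fin d → Submodule F (Fin (d+1) → F)}
    (hC : IsChamberD F d C) (hD : IsChamberD F d D) (h : OppD F d C D) :
    FOppD F d (coflagOf F hd C) (coflagOf F hd D) := by
  intro i j
  simp only [coflagOf]
  -- compare `D (j+1)` with `D (d-2-i)`, the entry of `D` complementary to `C (i+1)`
  rcases le_total (j.val + 1) (d - 1 - (i.val + 1)) with hj | hj
  · left
    exact le_bot_iff.mp
      (h ⟨i.val + 1, by omega⟩ ▸ inf_le_inf_left _ (hD.2 _ _ (Fin.mk_le_mk.mpr hj)))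
  · right
    exact top_le_iff.mp (h.sup_eq_top hC hD ⟨i.val + 1, by omega⟩ ▸
      sup_le_sup_left (hD.2 _ _ (Fin.mk_le_mk.mpr hj)) _)

lemma OppD.of_coflagOf_eq (hd : 3 ≤ d) {C C' D : Fin d → Submodule F (Fin (d+1) → F)}
    (h : OppD F d C' D) (hf : coflagOf F hd C = coflagOf F hd C')
    (hP : pointOf F hd C ⊓ hypOf F hd D = ⊥) (hQ : pointOf F hd D ⊓ hypOf F hd C = ⊥) :
    OppD F d C D := by
  rintro ⟨i, hi⟩
  rcases Nat.eq_zero_or_pos i with rfl | hi0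
  · exact hP
  rcases (Nat.le_sub_one_of_lt hi).eq_or_lt with rfl | hi1
  · rw [inf_comm]
    simpa only [Nat.sub_self, pointOf, hypOf] using hQ
  · have hCi := congrFun hf ⟨i - 1, by omega⟩
    simp only [coflagOf, Nat.sub_add_cancel hi0] at hCi
    exact hCi ▸ h ⟨i, hi⟩

lemma IsChamberD.update {C : Fin d → Submodule F (Fin (d+1) → F)} (hC : IsChamberD F d C)
    (i : Fin d) {X : Submodule F (Fin (d+1) → F)} (hX : finrank F X = i.val + 1)
    (hlo : ∀ j < i, C j ≤ X) (hhi : ∀ j, i < j → X ≤ C j) :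
    IsChamberD F d (update C i X) := by
  refine ⟨fun j => ?_, fun j k hjk => ?_⟩
  · rcases eq_or_ne j i with rfl | hj
    · rwa [update_self]
    · rw [update_of_ne hj]
      exact hC.1 j
  · by_cases hj : j = i <;> by_cases hk : k = i
    · subst hj hk; simp
    · subst hj; simpa [hk] using hhi k (lt_of_le_of_ne hjk (Ne.symm hk))
    · subst hk; simpa [hj] using hlo j (lt_of_le_of_ne hjk hj)
    · simpa [hj, hk] using hC.2 j k hjk

lemma coflagOf_assembleD (hd : 3 ≤ d) (P H : Submodule F (Fin (d+1) → F))
    (f : Fin (d-2) → Submodule F (Fin (d+1) → F)) :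
    coflagOf F hd (assembleD F hd P f H) = f := by
  funext i
  simp [coflagOf, assembleD, show i.val + 1 ≠ d - 1 by omega]

lemma pointOf_assembleD (hd : 3 ≤ d) (P H : Submodule F (Fin (d+1) → F))
    (f : Fin (d-2) → Submodule F (Fin (d+1) → F)) :
    pointOf F hd (assembleD F hd P f H) = P := by
  simp [pointOf, assembleD]

lemma hypOf_assembleD (hd : 3 ≤ d) (P H : Submodule F (Fin (d+1) → F))
    (f : Fin (d-2) → Submodule F (Fin (d+1) → F)) :
    hypOf F hd (assembleD F hd P f H) = H := by
  simp [hypOf, assembleD, show d - 1 ≠ 0 by omega]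

lemma eq_of_weightD_eq_one (hd : 3 ≤ d) {M : Set (Fin d → Submodule F (Fin (d+1) → F))}
    {f : Fin (d-2) → Submodule F (Fin (d+1) → F)} (hw : weightD F hd M f = 1)
    {C D : Fin d → Submodule F (Fin (d+1) → F)} (hC : C ∈ M) (hCf : coflagOf F hd C = f)
    (hD : D ∈ M) (hDf : coflagOf F hd D = f) : C = D := by
  obtain ⟨E, hE⟩ := Set.ncard_eq_one.mp hw
  have hCE : C ∈ ({E} : Set _) := hE ▸ ⟨hC, hCf⟩
  have hDE : D ∈ ({E} : Set _) := hE ▸ ⟨hD, hDf⟩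
  exact hCE.trans hDE.symm

lemma MaxIndepD.exists_mem_oppD {M : Set (Fin d → Submodule F (Fin (d+1) → F))}
    (hM : MaxIndepD F d M) {C : Fin d → Submodule F (Fin (d+1) → F)} (hC : IsChamberD F d C)
    (hCM : C ∉ M) : ∃ D ∈ M, OppD F d C D := by
  by_contra! h
  exact hCM (hM.2 C hC h)

section WeightOne

variable (hd : 3 ≤ d) {M : Set (Fin d → Submodule F (Fin (d+1) → F))} (hM : MaxIndepD F d M)
  {C : Fin d → Submodule F (Fin (d+1) → F)} (hC : C ∈ M)
  (hw : weightD F hd M (coflagOf F hd C) = 1)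
include hd hM hC hw

lemma MaxIndepD.exists_mem_fOppD_of_weightD_eq_one {C' : Fin d → Submodule F (Fin (d+1) → F)}
    (hC' : IsChamberD F d C') (hf : coflagOf F hd C' = coflagOf F hd C) (hne : C' ≠ C) :
    ∃ D ∈ M, FOppD F d (coflagOf F hd D) (coflagOf F hd C) ∧
      pointOf F hd C' ⊓ hypOf F hd D = ⊥ ∧ pointOf F hd D ⊓ hypOf F hd C' = ⊥ ∧
      ¬ (pointOf F hd C ⊓ hypOf F hd D = ⊥ ∧ pointOf F hd D ⊓ hypOf F hd C = ⊥) := by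
  obtain ⟨D, hD, hopp⟩ :=
    hM.exists_mem_oppD hC' fun hC'M => hne (eq_of_weightD_eq_one hd hw hC'M hf hC rfl)
  refine ⟨D, hD, hf ▸ hopp.symm.fOppD_coflagOf hd (hM.1.1 D hD) hC', hopp.pointOf_inf_hypOf hd,
    hopp.symm.pointOf_inf_hypOf hd, fun ⟨hP, hQ⟩ => hM.1.2 C hC D hD ?_⟩
  exact hopp.of_coflagOf_eq hd hf.symm hP hQ

lemma MaxIndepD.exists_mem_fOppD_pointOf_le_hypOf :
    ∃ D ∈ M, FOppD F d (coflagOf F hd D) (coflagOf F hd C) ∧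
      pointOf F hd C ≤ hypOf F hd D ∧ ¬ pointOf F hd D ≤ hypOf F hd C := by
  have hCc := hM.1.1 C hC
  have hPL : C ⟨0, by omega⟩ < C ⟨1, by omega⟩ :=
    lt_of_le_of_finrank_lt_finrank (hCc.2 _ _ (by simp)) (by rw [hCc.1, hCc.1]; simp)
  obtain ⟨P', -, hP'L, hP', hP'P⟩ := exists_le_finrank_eq_succ_ne bot_le hPL
  have hC' : IsChamberD F d (update C ⟨0, by omega⟩ P') :=
    hCc.update _ (by simpa using hP') (fun j hj => absurd hj (by simp [Fin.lt_def]))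
      (fun j hj => hP'L.trans (hCc.2 _ _ hj))
  obtain ⟨D, hD, hDf, -, hQH, hnot⟩ := hM.exists_mem_fOppD_of_weightD_eq_one hd hC hw hC'
    (funext fun i => update_of_ne (Fin.ne_of_val_ne (by dsimp only; omega)) _ _)
    (fun h => hP'P (by simpa using congrFun h ⟨0, by omega⟩))
  rw [hypOf, update_of_ne (Fin.ne_of_val_ne (by dsimp only; omega))] at hQH
  have hQ : finrank F (pointOf F hd D) = 1 := (hM.1.1 D hD).1 _
  have hP : finrank F (pointOf F hd C) = 1 := hCc.1 _
  refine ⟨D, hD, hDf, ?_, (inf_eq_bot_iff_not_le_of_finrank_eq_one hQ).mp hQH⟩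
  by_contra hPR
  exact hnot ⟨(inf_eq_bot_iff_not_le_of_finrank_eq_one hP).mpr hPR, hQH⟩

lemma MaxIndepD.exists_mem_fOppD_not_pointOf_le_hypOf :
    ∃ D ∈ M, FOppD F d (coflagOf F hd D) (coflagOf F hd C) ∧
      ¬ pointOf F hd C ≤ hypOf F hd D ∧ pointOf F hd D ≤ hypOf F hd C := by
  have hCc := hM.1.1 C hC
  have hHV : C ⟨d - 1, by omega⟩ < ⊤ :=
    lt_top_of_finrank_lt_finrank (by rw [hCc.1, finrank_fin_fun]; omega)
  have hWH : C ⟨d - 2, by omega⟩ ≤ C ⟨d - 1, by omega⟩ :=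
    hCc.2 _ _ (Fin.mk_le_mk.mpr (by omega))
  obtain ⟨H', hWH', -, hH', hH'H⟩ := exists_le_finrank_eq_succ_ne hWH hHV
  have hlo : ∀ j < (⟨d - 1, by omega⟩ : Fin d), C j ≤ H' := fun j hj =>
    (hCc.2 j _ (Fin.le_def.mpr (by have := Fin.lt_def.mp hj; dsimp only at *; omega))).trans hWH'
  have hC' : IsChamberD F d (update C ⟨d - 1, by omega⟩ H') :=
    hCc.update _ (by rw [hH', hCc.1]; dsimp only; omega) hlo
      (fun j hj => absurd (Fin.lt_def.mp hj) (by dsimp only; omega))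
  obtain ⟨D, hD, hDf, hPR, -, hnot⟩ := hM.exists_mem_fOppD_of_weightD_eq_one hd hC hw hC'
    (funext fun i => update_of_ne (Fin.ne_of_val_ne (by dsimp only; omega)) _ _)
    (fun h => hH'H (by simpa using congrFun h ⟨d - 1, by omega⟩))
  rw [pointOf, update_of_ne (Fin.ne_of_val_ne (by dsimp only; omega))] at hPR
  have hQ : finrank F (pointOf F hd D) = 1 := (hM.1.1 D hD).1 _
  have hP : finrank F (pointOf F hd C) = 1 := hCc.1 _
  refine ⟨D, hD, hDf, (inf_eq_bot_iff_not_le_of_finrank_eq_one hP).mp hPR, ?_⟩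
  by_contra hQH
  exact hnot ⟨hPR, (inf_eq_bot_iff_not_le_of_finrank_eq_one hQ).mpr hQH⟩

end WeightOne

theorem statement_9_general (F : Type) [Field F] (d : ℕ) (hd : 3 ≤ d)
    (M : Set (Fin d → Submodule F (Fin (d+1) → F))) (hM : MaxIndepD F d M)
    (P H : Submodule F (Fin (d+1) → F))
    (f : Fin (d-2) → Submodule F (Fin (d+1) → F))
    (hmem : assembleD F hd P f H ∈ M) (hw : weightD F hd M f = 1) :
    ∃ C₁ ∈ M, ∃ C₂ ∈ M,
      FOppD F d (coflagOf F hd C₁) f ∧ FOppD F d (coflagOf F hd C₂) f ∧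
      P ≤ hypOf F hd C₁ ∧ ¬ pointOf F hd C₁ ≤ H ∧
      ¬ P ≤ hypOf F hd C₂ ∧ pointOf F hd C₂ ≤ H := by
  have hwC : weightD F hd M (coflagOf F hd (assembleD F hd P f H)) = 1 := by
    rwa [coflagOf_assembleD]
  obtain ⟨C₁, hC₁, hf₁, hP₁, hQ₁⟩ :=
    hM.exists_mem_fOppD_pointOf_le_hypOf hd hmem hwC
  obtain ⟨C₂, hC₂, hf₂, hP₂, hQ₂⟩ :=
    hM.exists_mem_fOppD_not_pointOf_le_hypOf hd hmem hwC
  simp only [coflagOf_assembleD, pointOf_assembleD, hypOf_assembleD]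
    at hf₁ hP₁ hQ₁ hf₂ hP₂ hQ₂
  exact ⟨C₁, hC₁, C₂, hC₂, hf₁, hf₂, hP₁, hQ₁, hP₂, hQ₂⟩

/-- If `(P,f,H) ∈ M` and `f` has `M`-weight one, then there are chambers
`(Q₁,g₁,R₁)` and `(Q₂,g₂,R₂)` in `M` with `g₁`, `g₂` f-opposite to `f`, `P ≤ R₁`,
`Q₁ ≰ H`, `P ≰ R₂` and `Q₂ ≤ H`. -/
theorem statement_9 (q : ℕ) (F : Type) [Field F] [Fintype F]
    (hq : Fintype.card F = q) (d : ℕ) (hd : 3 ≤ d)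
    (M : Set (Fin d → Submodule F (Fin (d+1) → F))) (hM : MaxIndepD F d M)
    (P H : Submodule F (Fin (d+1) → F))
    (f : Fin (d-2) → Submodule F (Fin (d+1) → F))
    (hmem : assembleD F hd P f H ∈ M) (hw : weightD F hd M f = 1) :
    ∃ C₁ ∈ M, ∃ C₂ ∈ M,
      FOppD F d (coflagOf F hd C₁) f ∧ FOppD F d (coflagOf F hd C₂) f ∧
      P ≤ hypOf F hd C₁ ∧ ¬ pointOf F hd C₁ ≤ H ∧
      ¬ P ≤ hypOf F hd C₂ ∧ pointOf F hd C₂ ≤ H :=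
  statement_9_general F d hd M hM P H f hmem hw
end

section
/- Let (ℓ₁,π₁) and (ℓ₂,π₂) be two coflags of PG(4,q) with ℓ₁ ≠ ℓ₂ and π₁ ≠ π₂. Then the number of coflags (g,τ) of PG(4,q) that are not f-opposite to (ℓ₁,π₁) and not f-opposite to (ℓ₂,π₂) is at most (q²+q+1)(8q⁴+14q³+16q²+10q+6). -/
/-- A chamber of `PG(4,q)`: a point, line, plane and solid of the projective space
(identified with linear subspaces of `F⁵` of linear dimension 1, 2, 3, 4), mutually incident. -/
structure Chamber4 (F : Type) [Field F] where
  pt : Submodule F (Fin 5 → F)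
  line : Submodule F (Fin 5 → F)
  plane : Submodule F (Fin 5 → F)
  solid : Submodule F (Fin 5 → F)
  dim_pt : Module.finrank F ↥pt = 1
  dim_line : Module.finrank F ↥line = 2
  dim_plane : Module.finrank F ↥plane = 3
  dim_solid : Module.finrank F ↥solid = 4
  le_pt_line : pt ≤ line
  le_line_plane : line ≤ plane
  le_plane_solid : plane ≤ solid

/-- Two chambers of `PG(4,q)` are opposite. -/
def Opp4 {F : Type} [Field F] (C D : Chamber4 F) : Prop :=
  C.pt ⊓ D.solid = ⊥ ∧ D.pt ⊓ C.solid = ⊥ ∧ C.line ⊓ D.plane = ⊥ ∧ D.line ⊓ C.plane = ⊥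

/-- An independent set of the Kneser graph `Γ₄` on chambers of `PG(4,q)`:
a set of pairwise non-opposite chambers. -/
def Indep4 {F : Type} [Field F] (M : Set (Chamber4 F)) : Prop :=
  ∀ C ∈ M, ∀ D ∈ M, ¬ Opp4 C D

/-- A maximal independent set of `Γ₄`: independent, and every chamber opposite to
no chamber of `M` belongs to `M`. -/
def MaxIndep4 {F : Type} [Field F] (M : Set (Chamber4 F)) : Prop :=
  Indep4 M ∧ ∀ C : Chamber4 F, (∀ D ∈ M, ¬ Opp4 C D) → C ∈ M

/-- A coflag of `PG(4,q)`: an incident line–plane pair. -/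
def IsCoflag4 {F : Type} [Field F] (l π : Submodule F (Fin 5 → F)) : Prop :=
  Module.finrank F ↥l = 2 ∧ Module.finrank F ↥π = 3 ∧ l ≤ π

/-- Two coflags `(l₁,π₁)` and `(l₂,π₂)` are f-opposite. -/
def FOpp4 {F : Type} [Field F] (l₁ π₁ l₂ π₂ : Submodule F (Fin 5 → F)) : Prop :=
  l₁ ⊓ π₂ = ⊥ ∧ l₂ ⊓ π₁ = ⊥

/-- `(l,π)` is an `M`-coflag: it occurs in some chamber of `M`. -/
def IsMCoflag {F : Type} [Field F] (M : Set (Chamber4 F)) (l π : Submodule F (Fin 5 → F)) :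
    Prop :=
  ∃ C ∈ M, C.line = l ∧ C.plane = π

/-- The `M`-weight of the coflag `(l,π)`: the number of chambers of `M` containing it. -/
noncomputable def weight4 {F : Type} [Field F] (M : Set (Chamber4 F)) (l π : Submodule F (Fin 5 → F)) : ℕ :=
  Set.ncard {C | C ∈ M ∧ C.line = l ∧ C.plane = π}

open Set Submodule Module

section Fibers
variable {α β : Type*}

lemma fiberUB {S : Set α} (hS : S.Finite) (f : α → β) (n : ℕ)
    (h : ∀ b ∈ f '' S, {a | a ∈ S ∧ f a = b}.ncard ≤ n) :
    S.ncard ≤ n * (f '' S).ncard := by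
  classical
  have hi : (f '' S).Finite := hS.image f
  have himg : hi.toFinset = hS.toFinset.image f := by ext b; simp
  rw [Set.ncard_eq_toFinset_card _ hS, Set.ncard_eq_toFinset_card _ hi, himg]
  refine Finset.card_le_mul_card_image _ n (fun b hb => ?_)
  have hco : ({a | a ∈ S ∧ f a = b} : Set α) = ↑({a ∈ hS.toFinset | f a = b} : Finset α) := by
    ext a; simp
  have := h b (by simpa using hb)
  rwa [hco, Set.ncard_coe_finset] at this

lemma fiberLB {S : Set α} (hS : S.Finite) (f : α → β) (n : ℕ)
    (h : ∀ b ∈ f '' S, n ≤ {a | a ∈ S ∧ f a = b}.ncard) :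
    n * (f '' S).ncard ≤ S.ncard := by
  classical
  have hi : (f '' S).Finite := hS.image f
  have himg : hi.toFinset = hS.toFinset.image f := by ext b; simp
  rw [Set.ncard_eq_toFinset_card _ hS, Set.ncard_eq_toFinset_card _ hi, himg]
  refine Finset.mul_card_image_le_card _ n (fun b hb => ?_)
  have hco : ({a | a ∈ S ∧ f a = b} : Set α) = ↑({a ∈ hS.toFinset | f a = b} : Finset α) := by
    ext a; simp
  have := h b (by simpa using hb)
  rwa [hco, Set.ncard_coe_finset] at this

lemma mono_nn (a b : ℕ) (h : a ≤ b) : a * a - a ≤ b * b - b := by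
  have : a * (a-1) ≤ b * (b-1) := Nat.mul_le_mul h (by omega)
  have e1 : a * (a-1) = a*a - a := by cases a <;> simp [Nat.mul_succ, Nat.succ_mul] <;> omega
  have e2 : b * (b-1) = b*b - b := by cases b <;> simp [Nat.mul_succ, Nat.succ_mul] <;> omega
  omega

end Fibers

set_option linter.unusedSectionVars false
section Modules
variable {F : Type} [Field F] [Fintype F] {V : Type} [AddCommGroup V] [Module F V] [Finite V]

lemma ncard_coe_sub (U : Submodule F V) :
    (U : Set V).ncard = Fintype.card F ^ finrank F U := by
  haveI := Fintype.ofFinite V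
  haveI : Fintype U := Fintype.ofFinite U
  rw [← Nat.card_coe_set_eq]
  have : Nat.card (U : Set V) = Nat.card U := rfl
  rw [this, Nat.card_eq_fintype_card, @card_eq_pow_finrank F _ _ _ _ _ _]

lemma ncard_diff_sub {K U : Submodule F V} (h : K ≤ U) :
    ((U : Set V) \ K).ncard = Fintype.card F ^ finrank F U - Fintype.card F ^ finrank F K := by
  rw [Set.ncard_diff h, ncard_coe_sub, ncard_coe_sub]

lemma span_eq_of_mem {p : Submodule F V} (hp : finrank F p = 1) {x : V} (hx : x ∈ p)
    (h0 : x ≠ 0) : Submodule.span F {x} = p := by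
  haveI : Module.Finite F V := Module.Finite.of_finite
  refine Submodule.eq_of_le_of_finrank_le ?_ ?_
  · exact (Submodule.span_le).2 (Set.singleton_subset_iff.2 hx)
  · rw [hp, finrank_span_singleton h0]

end Modules

section Counts
set_option linter.unusedSectionVars false
variable {F : Type} [Field F] [Fintype F] {V : Type} [AddCommGroup V] [Module F V] [Finite V]

local notation "q" => Fintype.card F

lemma rank_sup_span {K : Submodule F V} {x : V} (hx : x ∉ K) :
    finrank F ↥(K ⊔ Submodule.span F {x}) = finrank F K + 1 := by
  haveI : Module.Finite F V := Module.Finite.of_finite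
  have h0 : x ≠ 0 := fun h => hx (h ▸ K.zero_mem)
  have hs : finrank F ↥(Submodule.span F {x}) = 1 := finrank_span_singleton h0
  have key := Submodule.finrank_sup_add_finrank_inf_eq K (Submodule.span F {x})
  have hinf : finrank F ↥(K ⊓ Submodule.span F {x}) = 0 := by
    by_contra hne
    have hle : K ⊓ Submodule.span F {x} ≤ Submodule.span F {x} := inf_le_right
    have h1 : finrank F ↥(K ⊓ Submodule.span F {x}) ≤ 1 := hs ▸ Submodule.finrank_mono hle
    have : K ⊓ Submodule.span F {x} = Submodule.span F {x} :=
      Submodule.eq_of_le_of_finrank_le hle (by omega)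
    have : x ∈ K := by
      have hx' : x ∈ K ⊓ Submodule.span F {x} := by
        rw [this]; exact Submodule.mem_span_singleton_self x
      exact hx'.1
    exact hx this
  omega

/-- Counting subspaces of rank `r+1` between `K` (rank `r`) and `U`. -/
lemma count_covers {K U : Submodule F V} (hKU : K ≤ U) {r : ℕ} (hK : finrank F K = r) :
    {X : Submodule F V | finrank F X = r + 1 ∧ K ≤ X ∧ X ≤ U}.ncard * (q^(r+1) - q^r) ≤
      q ^ finrank F U - q ^ r := by
  haveI : Module.Finite F V := Module.Finite.of_finite
  classical
  set T : Set V := (U : Set V) \ K with hT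
  set f : V → Submodule F V := fun x => K ⊔ Submodule.span F {x} with hf
  have hprop : ∀ x ∈ T, finrank F ↥(f x) = r + 1 ∧ K ≤ f x ∧ f x ≤ U := by
    intro x hxT
    obtain ⟨hxU, hxK⟩ := hxT
    refine ⟨hK ▸ rank_sup_span hxK, le_sup_left, sup_le hKU ?_⟩
    exact (Submodule.span_le).2 (Set.singleton_subset_iff.2 hxU)
  have hsub : {X : Submodule F V | finrank F X = r + 1 ∧ K ≤ X ∧ X ≤ U} ⊆ f '' T := by
    rintro X ⟨hrk, hKX, hXU⟩
    have : ¬ (X ≤ K) := by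
      intro hle
      have := Submodule.finrank_mono hle
      omega
    obtain ⟨x, hxX, hxK⟩ := SetLike.not_le_iff_exists.1 this
    refine ⟨x, ⟨hXU hxX, hxK⟩, ?_⟩
    have h1 : f x ≤ X := sup_le hKX ((Submodule.span_le).2 (Set.singleton_subset_iff.2 hxX))
    exact Submodule.eq_of_le_of_finrank_le h1 (by rw [hrk, (hprop x ⟨hXU hxX, hxK⟩).1])
  have hfib : ∀ X ∈ f '' T, q^(r+1) - q^r ≤ {x | x ∈ T ∧ f x = X}.ncard := by
    rintro X ⟨x₀, hx₀T, rfl⟩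
    obtain ⟨hrk, hKX, hXU⟩ := hprop x₀ hx₀T
    have hsub2 : ((f x₀ : Set V) \ K) ⊆ {x | x ∈ T ∧ f x = f x₀} := by
      rintro x ⟨hxX, hxK⟩
      have hxT : x ∈ T := ⟨hXU hxX, hxK⟩
      refine ⟨hxT, ?_⟩
      have h1 : f x ≤ f x₀ := sup_le hKX ((Submodule.span_le).2 (Set.singleton_subset_iff.2 hxX))
      exact Submodule.eq_of_le_of_finrank_le h1 (by rw [hrk, (hprop x hxT).1])
    calc q^(r+1) - q^r = ((f x₀ : Set V) \ K).ncard := by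
            rw [ncard_diff_sub hKX, hrk, hK]
      _ ≤ _ := Set.ncard_le_ncard hsub2 (Set.toFinite _)
  have hTcard : T.ncard = q ^ finrank F U - q ^ r := by rw [hT, ncard_diff_sub hKU, hK]
  calc {X : Submodule F V | finrank F X = r + 1 ∧ K ≤ X ∧ X ≤ U}.ncard * (q^(r+1) - q^r)
      ≤ (f '' T).ncard * (q^(r+1) - q^r) :=
        Nat.mul_le_mul_right _ (Set.ncard_le_ncard hsub (Set.toFinite _))
    _ = (q^(r+1) - q^r) * (f '' T).ncard := Nat.mul_comm _ _
    _ ≤ T.ncard := fiberLB (Set.toFinite _) f _ hfib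
    _ = _ := hTcard

/-- Lower bound for the number of rank-1 subspaces of `U`. -/
lemma count_points_lower (U : Submodule F V) :
    q ^ finrank F U - 1 ≤ (q - 1) * {p : Submodule F V | finrank F p = 1 ∧ p ≤ U}.ncard := by
  haveI : Module.Finite F V := Module.Finite.of_finite
  classical
  set T : Set V := (U : Set V) \ (⊥ : Submodule F V) with hT
  set f : V → Submodule F V := fun x => Submodule.span F {x} with hf
  have hTx : ∀ x ∈ T, x ∈ U ∧ x ≠ 0 := by
    intro x hx
    obtain ⟨h1, h2⟩ := hx
    exact ⟨h1, by simpa using h2⟩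
  have h1 : T.ncard = q ^ finrank F U - 1 := by
    rw [hT, ncard_diff_sub bot_le, finrank_bot, pow_zero]
  have himg : f '' T ⊆ {p : Submodule F V | finrank F p = 1 ∧ p ≤ U} := by
    rintro p ⟨x, hxT, rfl⟩
    obtain ⟨hxU, hx0⟩ := hTx x hxT
    exact ⟨finrank_span_singleton hx0, (Submodule.span_le).2 (Set.singleton_subset_iff.2 hxU)⟩
  have hfib : ∀ p ∈ f '' T, {x | x ∈ T ∧ f x = p}.ncard ≤ q - 1 := by
    rintro p hp
    obtain ⟨hp1, hpU⟩ := himg hp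
    have hsub2 : {x | x ∈ T ∧ f x = p} ⊆ ((p : Set V) \ (⊥ : Submodule F V)) := by
      rintro x ⟨hxT, rfl⟩
      obtain ⟨hxU, hx0⟩ := hTx x hxT
      exact ⟨Submodule.mem_span_singleton_self x, by simpa using hx0⟩
    calc {x | x ∈ T ∧ f x = p}.ncard ≤ ((p : Set V) \ (⊥ : Submodule F V)).ncard :=
          Set.ncard_le_ncard hsub2 (Set.toFinite _)
      _ = q - 1 := by rw [ncard_diff_sub bot_le, hp1, finrank_bot, pow_zero, pow_one]
  calc q ^ finrank F U - 1 = T.ncard := h1.symm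
    _ ≤ (q-1) * (f '' T).ncard := fiberUB (Set.toFinite _) f _ hfib
    _ ≤ (q-1) * {p : Submodule F V | finrank F p = 1 ∧ p ≤ U}.ncard :=
        Nat.mul_le_mul_left _ (Set.ncard_le_ncard himg (Set.toFinite _))

end Counts

section Counts2
set_option linter.unusedSectionVars false
variable {F : Type} [Field F] [Fintype F] {V : Type} [AddCommGroup V] [Module F V] [Finite V]

local notation "q" => Fintype.card F

lemma ptsU_mul (U : Submodule F V) :
    {p : Submodule F V | finrank F p = 1 ∧ p ≤ U}.ncard * (q - 1) ≤ q ^ finrank F U - 1 := by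
  have h := count_covers (F := F) (V := V) (K := ⊥) (U := U) bot_le (r := 0) (finrank_bot F V)
  simp only [pow_zero, pow_one, zero_add] at h
  have hset : {X : Submodule F V | finrank F X = 1 ∧ ⊥ ≤ X ∧ X ≤ U} =
      {p : Submodule F V | finrank F p = 1 ∧ p ≤ U} := by
    ext p; simp
  rwa [hset] at h

lemma hq2 : 2 ≤ q := Fintype.one_lt_card

lemma ptsU_le3 {U : Submodule F V} (hd : finrank F U ≤ 3) :
    {p : Submodule F V | finrank F p = 1 ∧ p ≤ U}.ncard ≤ q^2 + q + 1 := by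
  have h := ptsU_mul U
  have hq : 2 ≤ q := hq2
  have h2 : q ^ finrank F U ≤ q^3 := Nat.pow_le_pow_right (by omega) hd
  have h3 : (q^2+q+1)*(q-1) = q^3 - 1 := by
    zify [show 1 ≤ q by omega, show 1 ≤ q^3 from Nat.one_le_pow _ _ (by omega)]; ring
  refine Nat.le_of_mul_le_mul_right ?_ (show 0 < q - 1 by omega)
  omega

lemma ptsU_le2 {U : Submodule F V} (hd : finrank F U ≤ 2) :
    {p : Submodule F V | finrank F p = 1 ∧ p ≤ U}.ncard ≤ q + 1 := by
  have h := ptsU_mul U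
  have hq : 2 ≤ q := hq2
  have h2 : q ^ finrank F U ≤ q^2 := Nat.pow_le_pow_right (by omega) hd
  have h3 : (q+1)*(q-1) = q^2 - 1 := by
    zify [show 1 ≤ q by omega, show 1 ≤ q^2 from Nat.one_le_pow _ _ (by omega)]; ring
  refine Nat.le_of_mul_le_mul_right ?_ (show 0 < q - 1 by omega)
  omega

lemma ptsU_le1 {U : Submodule F V} (hd : finrank F U ≤ 1) :
    {p : Submodule F V | finrank F p = 1 ∧ p ≤ U}.ncard ≤ 1 := by
  have h := ptsU_mul U
  have hq : 2 ≤ q := hq2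
  have h2 : q ^ finrank F U ≤ q^1 := Nat.pow_le_pow_right (by omega) hd
  refine Nat.le_of_mul_le_mul_right ?_ (show 0 < q - 1 by omega)
  have : q^1 = q := pow_one q
  omega

lemma ptsU_ge2 {U : Submodule F V} (hd : finrank F U = 2) :
    q + 1 ≤ {p : Submodule F V | finrank F p = 1 ∧ p ≤ U}.ncard := by
  have h := count_points_lower (F := F) U
  rw [hd] at h
  have hq : 2 ≤ q := hq2
  have h3 : (q-1)*(q+1) = q^2 - 1 := by
    zify [show 1 ≤ q by omega, show 1 ≤ q^2 from Nat.one_le_pow _ _ (by omega)]; ring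
  refine Nat.le_of_mul_le_mul_left ?_ (show 0 < q - 1 by omega)
  omega

lemma points_inf_eq_bot {p₁ p₂ : Submodule F V} (h1 : finrank F p₁ = 1) (h2 : finrank F p₂ = 1)
    (hne : p₁ ≠ p₂) : p₁ ⊓ p₂ = ⊥ := by
  haveI : Module.Finite F V := Module.Finite.of_finite
  by_contra hb
  have hle1 : p₁ ⊓ p₂ ≤ p₁ := inf_le_left
  have hr : finrank F ↥(p₁ ⊓ p₂) ≤ 1 := h1 ▸ Submodule.finrank_mono hle1
  have hr0 : finrank F ↥(p₁ ⊓ p₂) ≠ 0 := by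
    intro h0
    exact hb (Submodule.finrank_eq_zero.1 h0)
  have e1 : p₁ ⊓ p₂ = p₁ := Submodule.eq_of_le_of_finrank_le inf_le_left (by omega)
  have e2 : p₁ ⊓ p₂ = p₂ := Submodule.eq_of_le_of_finrank_le inf_le_right (by omega)
  exact hne (e1.symm.trans e2)

lemma points_sup_rank {p₁ p₂ : Submodule F V} (h1 : finrank F p₁ = 1) (h2 : finrank F p₂ = 1)
    (hne : p₁ ≠ p₂) : finrank F ↥(p₁ ⊔ p₂) = 2 := by
  haveI : Module.Finite F V := Module.Finite.of_finite
  have key := Submodule.finrank_sup_add_finrank_inf_eq p₁ p₂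
  rw [points_inf_eq_bot h1 h2 hne, finrank_bot, h1, h2] at key
  omega

lemma exists_point_le {X : Submodule F V} (hX : X ≠ ⊥) :
    ∃ p : Submodule F V, finrank F p = 1 ∧ p ≤ X := by
  obtain ⟨x, hxX, hx0⟩ := Submodule.exists_mem_ne_zero_of_ne_bot hX
  exact ⟨Submodule.span F {x}, finrank_span_singleton hx0,
    (Submodule.span_le).2 (Set.singleton_subset_iff.2 hxX)⟩

/-- Core line-counting bound via pairs of distinct points. -/
lemma linesU_mul {U : Submodule F V} {N : ℕ}
    (hN : {p : Submodule F V | finrank F p = 1 ∧ p ≤ U}.ncard ≤ N) :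
    {g : Submodule F V | finrank F g = 2 ∧ g ≤ U}.ncard * (q^2 + q) ≤ N * N - N := by
  classical
  haveI : Module.Finite F V := Module.Finite.of_finite
  have hq : 2 ≤ q := hq2
  set pts : Set (Submodule F V) := {p | finrank F p = 1 ∧ p ≤ U} with hpts
  set T : Set (Submodule F V × Submodule F V) :=
    {pr | pr.1 ∈ pts ∧ pr.2 ∈ pts ∧ pr.1 ≠ pr.2} with hTdef
  set f : Submodule F V × Submodule F V → Submodule F V := fun pr => pr.1 ⊔ pr.2 with hf
  -- pairs of distinct points of a subspace X, as a set
  have hDcard : ∀ X : Submodule F V,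
      {pr : Submodule F V × Submodule F V |
        pr.1 ∈ {p : Submodule F V | finrank F p = 1 ∧ p ≤ X} ∧
        pr.2 ∈ {p : Submodule F V | finrank F p = 1 ∧ p ≤ X} ∧ pr.1 ≠ pr.2}.ncard =
      {p : Submodule F V | finrank F p = 1 ∧ p ≤ X}.ncard *
        {p : Submodule F V | finrank F p = 1 ∧ p ≤ X}.ncard -
        {p : Submodule F V | finrank F p = 1 ∧ p ≤ X}.ncard := by
    intro X
    set s := (Set.toFinite {p : Submodule F V | finrank F p = 1 ∧ p ≤ X}).toFinset with hs
    have hco : {pr : Submodule F V × Submodule F V |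
        pr.1 ∈ {p : Submodule F V | finrank F p = 1 ∧ p ≤ X} ∧
        pr.2 ∈ {p : Submodule F V | finrank F p = 1 ∧ p ≤ X} ∧ pr.1 ≠ pr.2} = ↑s.offDiag := by
      ext pr
      simp only [Set.mem_setOf_eq, Finset.mem_coe, Finset.mem_offDiag,
        Set.Finite.mem_toFinset, hs]
    rw [hco, Set.ncard_coe_finset, Finset.offDiag_card,
      Set.ncard_eq_toFinset_card _ (Set.toFinite _)]
  -- lines are sups of distinct point pairs
  have hsub : {g : Submodule F V | finrank F g = 2 ∧ g ≤ U} ⊆ f '' T := by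
    rintro g ⟨hg2, hgU⟩
    have hlow : q + 1 ≤ {p : Submodule F V | finrank F p = 1 ∧ p ≤ g}.ncard := ptsU_ge2 hg2
    have h1lt : 1 < {p : Submodule F V | finrank F p = 1 ∧ p ≤ g}.ncard := by omega
    obtain ⟨p₁, hp₁, p₂, hp₂, hne⟩ := (Set.one_lt_ncard (Set.toFinite _)).1 h1lt
    refine ⟨(p₁, p₂), ⟨⟨hp₁.1, hp₁.2.trans hgU⟩, ⟨hp₂.1, hp₂.2.trans hgU⟩, by simpa using hne⟩, ?_⟩
    have hsle : p₁ ⊔ p₂ ≤ g := sup_le hp₁.2 hp₂.2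
    exact Submodule.eq_of_le_of_finrank_le hsle (by rw [hg2, points_sup_rank hp₁.1 hp₂.1 hne])
  -- fibers are large
  have hfib : ∀ g ∈ f '' T, q^2 + q ≤ {pr | pr ∈ T ∧ f pr = g}.ncard := by
    rintro g ⟨pr₀, hpr₀, rfl⟩
    obtain ⟨hp₁, hp₂, hne⟩ := hpr₀
    have hg2 : finrank F ↥(f pr₀) = 2 := points_sup_rank hp₁.1 hp₂.1 hne
    have hsubD : {pr : Submodule F V × Submodule F V |
        pr.1 ∈ {p : Submodule F V | finrank F p = 1 ∧ p ≤ f pr₀} ∧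
        pr.2 ∈ {p : Submodule F V | finrank F p = 1 ∧ p ≤ f pr₀} ∧ pr.1 ≠ pr.2} ⊆
        {pr | pr ∈ T ∧ f pr = f pr₀} := by
      rintro pr ⟨h1, h2, hne'⟩
      have hgU : f pr₀ ≤ U := sup_le hp₁.2 hp₂.2
      refine ⟨⟨⟨h1.1, h1.2.trans hgU⟩, ⟨h2.1, h2.2.trans hgU⟩, hne'⟩, ?_⟩
      exact Submodule.eq_of_le_of_finrank_le (sup_le h1.2 h2.2)
        (by rw [hg2, points_sup_rank h1.1 h2.1 hne'])
    have hlow : q + 1 ≤ {p : Submodule F V | finrank F p = 1 ∧ p ≤ f pr₀}.ncard := ptsU_ge2 hg2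
    have hcard := hDcard (f pr₀)
    have hmono := mono_nn (q+1) _ hlow
    have hexp : (q+1)*(q+1) = q^2 + 2*q + 1 := by ring
    have := Set.ncard_le_ncard hsubD (Set.toFinite _)
    omega
  have hTsub : T.ncard ≤ N * N - N := by
    have h := hDcard U
    rw [← hpts] at h
    rw [← hTdef] at h
    have hm := mono_nn pts.ncard N hN
    omega
  calc {g : Submodule F V | finrank F g = 2 ∧ g ≤ U}.ncard * (q^2+q)
      ≤ (f '' T).ncard * (q^2+q) := Nat.mul_le_mul_right _ (Set.ncard_le_ncard hsub (Set.toFinite _))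
    _ = (q^2+q) * (f '' T).ncard := Nat.mul_comm _ _
    _ ≤ T.ncard := fiberLB (Set.toFinite _) f _ hfib
    _ ≤ N * N - N := hTsub

end Counts2

section Counts3
set_option linter.unusedSectionVars false
variable {F : Type} [Field F] [Fintype F] {V : Type} [AddCommGroup V] [Module F V] [Finite V]

local notation "q" => Fintype.card F

lemma linesU_le3 {U : Submodule F V} (hd : finrank F U ≤ 3) :
    {g : Submodule F V | finrank F g = 2 ∧ g ≤ U}.ncard ≤ q^2 + q + 1 := by
  have h := linesU_mul (U := U) (N := q^2+q+1) (ptsU_le3 hd)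
  have hq : 2 ≤ q := hq2
  have hid : (q^2+q+1)*(q^2+q+1) - (q^2+q+1) = (q^2+q+1)*(q^2+q) := by
    have : (q^2+q+1)*(q^2+q+1) = (q^2+q+1)*(q^2+q) + (q^2+q+1) := by ring
    omega
  refine Nat.le_of_mul_le_mul_right ?_ (show 0 < q^2 + q by positivity)
  omega

lemma ptsU_le4 {U : Submodule F V} (hd : finrank F U ≤ 4) :
    {p : Submodule F V | finrank F p = 1 ∧ p ≤ U}.ncard ≤ q^3 + q^2 + q + 1 := by
  have h := ptsU_mul U
  have hq : 2 ≤ q := hq2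
  have h2 : q ^ finrank F U ≤ q^4 := Nat.pow_le_pow_right (by omega) hd
  have h3 : (q^3+q^2+q+1)*(q-1) = q^4 - 1 := by
    zify [show 1 ≤ q by omega, show 1 ≤ q^4 from Nat.one_le_pow _ _ (by omega)]; ring
  refine Nat.le_of_mul_le_mul_right ?_ (show 0 < q - 1 by omega)
  omega

lemma lines_top_le4 (hd : finrank F V = 4) :
    {g : Submodule F V | finrank F g = 2}.ncard ≤ (q^2+1) * (q^2+q+1) := by
  have hq : 2 ≤ q := hq2
  have hN : {p : Submodule F V | finrank F p = 1 ∧ p ≤ (⊤ : Submodule F V)}.ncard ≤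
      q^3+q^2+q+1 := ptsU_le4 (by rw [finrank_top]; omega)
  have h := linesU_mul (U := (⊤ : Submodule F V)) hN
  have hset : {g : Submodule F V | finrank F g = 2 ∧ g ≤ (⊤ : Submodule F V)} =
      {g : Submodule F V | finrank F g = 2} := by ext g; simp
  rw [hset] at h
  have hid : (q^3+q^2+q+1)*(q^3+q^2+q+1) - (q^3+q^2+q+1) =
      ((q^2+1)*(q^2+q+1)) * (q^2+q) := by
    have : (q^3+q^2+q+1)*(q^3+q^2+q+1) =
        ((q^2+1)*(q^2+q+1)) * (q^2+q) + (q^3+q^2+q+1) := by ring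
    omega
  refine Nat.le_of_mul_le_mul_right ?_ (show 0 < q^2 + q by positivity)
  omega

lemma planes_thru_pt (hn : finrank F V = 5) {p₀ : Submodule F V} (hp : finrank F p₀ = 1) :
    {τ : Submodule F V | finrank F τ = 3 ∧ p₀ ≤ τ}.ncard ≤ (q^2+1) * (q^2+q+1) := by
  classical
  haveI : Module.Finite F V := Module.Finite.of_finite
  haveI : Finite (V ⧸ p₀) := Quotient.finite _
  set S := {τ : Submodule F V | finrank F τ = 3 ∧ p₀ ≤ τ} with hS
  set φ : Submodule F V → Submodule F (V ⧸ p₀) := fun τ => Submodule.map p₀.mkQ τ with hφ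
  have hQrank : finrank F (V ⧸ p₀) = 4 := by
    have := Submodule.finrank_quotient_add_finrank p₀
    omega
  have hinj : Set.InjOn φ S := by
    intro τ₁ h₁ τ₂ h₂ he
    have e1 : Submodule.comap p₀.mkQ (φ τ₁) = τ₁ := by
      rw [hφ]; rw [Submodule.comap_map_eq, Submodule.ker_mkQ]
      exact sup_eq_left.2 h₁.2
    have e2 : Submodule.comap p₀.mkQ (φ τ₂) = τ₂ := by
      rw [hφ]; rw [Submodule.comap_map_eq, Submodule.ker_mkQ]
      exact sup_eq_left.2 h₂.2
    rw [← e1, ← e2, he]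
  have hrank : ∀ τ ∈ S, finrank F ↥(φ τ) = 2 := by
    rintro τ ⟨hτ3, hpτ⟩
    set f : ↥τ →ₗ[F] V ⧸ p₀ := p₀.mkQ.comp τ.subtype with hfdef
    have h1 := LinearMap.finrank_range_add_finrank_ker f
    have hr : LinearMap.range f = φ τ := by
      rw [hfdef, LinearMap.range_comp, Submodule.range_subtype]
    have hk : LinearMap.ker f = Submodule.comap τ.subtype p₀ := by
      rw [hfdef, LinearMap.ker_comp, Submodule.ker_mkQ]
    have hkr : finrank F ↥(LinearMap.ker f) = 1 := by
      rw [hk, LinearEquiv.finrank_eq (Submodule.comapSubtypeEquivOfLe hpτ), hp]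
    rw [hr, hk] at h1
    rw [hk] at hkr
    have hτ : finrank F ↥τ = 3 := hτ3
    omega
  have himg : φ '' S ⊆ {g : Submodule F (V ⧸ p₀) | finrank F g = 2} := by
    rintro g ⟨τ, hτ, rfl⟩
    exact hrank τ hτ
  calc S.ncard = (φ '' S).ncard := (Set.ncard_image_of_injOn hinj).symm
    _ ≤ {g : Submodule F (V ⧸ p₀) | finrank F g = 2}.ncard :=
        Set.ncard_le_ncard himg (Set.toFinite _)
    _ ≤ (q^2+1) * (q^2+q+1) := lines_top_le4 hQrank

end Counts3

section PairHelpers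
variable {α β : Type*} [Finite α] [Finite β]

lemma ncard_sprod (A : Set α) (B : Set β) : (A ×ˢ B).ncard = A.ncard * B.ncard := by
  classical
  rw [Set.ncard_eq_toFinset_card _ (Set.toFinite _), Set.ncard_eq_toFinset_card _ (Set.toFinite _),
    Set.ncard_eq_toFinset_card _ (Set.toFinite _)]
  rw [← Finset.card_product]
  congr 1
  ext pr
  simp [Set.Finite.mem_toFinset]

/-- Generic double counting: if every element of `S` is related to some element of `P`,
and each element of `P` is related to at most `n` elements, then `|S| ≤ |P| * n`. -/
lemma pairUB {S : Set β} {P : Set α} (R : α → β → Prop)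
    (hcover : ∀ b ∈ S, ∃ a ∈ P, R a b) (n : ℕ) (hfib : ∀ a ∈ P, {b | R a b}.ncard ≤ n) :
    S.ncard ≤ P.ncard * n := by
  classical
  set T : Set (α × β) := {pr | pr.1 ∈ P ∧ R pr.1 pr.2} with hT
  have hS : S ⊆ Prod.snd '' T := by
    intro b hb
    obtain ⟨a, haP, haR⟩ := hcover b hb
    exact ⟨(a, b), ⟨haP, haR⟩, rfl⟩
  have hfib' : ∀ a ∈ Prod.fst '' T, {pr | pr ∈ T ∧ pr.1 = a}.ncard ≤ n := by
    rintro a ⟨pr₀, hpr₀, rfl⟩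
    have hsub : {pr | pr ∈ T ∧ pr.1 = pr₀.1} ⊆ (fun b => (pr₀.1, b)) '' {b | R pr₀.1 b} := by
      rintro ⟨a', b⟩ ⟨⟨haP, haR⟩, h⟩
      cases h
      exact ⟨b, haR, rfl⟩
    calc {pr | pr ∈ T ∧ pr.1 = pr₀.1}.ncard
        ≤ ((fun b => (pr₀.1, b)) '' {b | R pr₀.1 b}).ncard :=
          Set.ncard_le_ncard hsub (Set.toFinite _)
      _ = {b | R pr₀.1 b}.ncard := Set.ncard_image_of_injective _ (fun x y h => by
          simpa using h)
      _ ≤ n := hfib pr₀.1 hpr₀.1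
  have himg : Prod.fst '' T ⊆ P := by rintro a ⟨pr, hpr, rfl⟩; exact hpr.1
  calc S.ncard ≤ (Prod.snd '' T).ncard := Set.ncard_le_ncard hS (Set.toFinite _)
    _ ≤ T.ncard := Set.ncard_image_le (Set.toFinite _)
    _ ≤ n * (Prod.fst '' T).ncard := fiberUB (Set.toFinite _) Prod.fst n hfib'
    _ ≤ n * P.ncard := Nat.mul_le_mul_left _ (Set.ncard_le_ncard himg (Set.toFinite _))
    _ = P.ncard * n := Nat.mul_comm _ _

end PairHelpers

section Counts4
set_option linter.unusedSectionVars false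
variable {F : Type} [Field F] [Fintype F] {V : Type} [AddCommGroup V] [Module F V] [Finite V]

local notation "q" => Fintype.card F

lemma lines_thru_pt (hn : finrank F V = 5) {p : Submodule F V} (hp : finrank F p = 1) :
    {g : Submodule F V | finrank F g = 2 ∧ p ≤ g}.ncard ≤ q^3 + q^2 + q + 1 := by
  have hq : 2 ≤ q := hq2
  have h := count_covers (F := F) (V := V) (K := p) (U := ⊤) le_top (r := 1) hp
  have hset : {X : Submodule F V | finrank F X = 1 + 1 ∧ p ≤ X ∧ X ≤ ⊤} =
      {g : Submodule F V | finrank F g = 2 ∧ p ≤ g} := by ext g; simp [and_comm]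
  rw [hset, finrank_top, hn] at h
  have e1 : q^1 ≤ q^(1+1) := Nat.pow_le_pow_right (by omega) (by omega)
  have e2 : q ≤ q^5 := by
    have : q^1 ≤ q^5 := Nat.pow_le_pow_right (by omega) (by omega)
    simpa using this
  have hid : (q^3+q^2+q+1) * (q^(1+1) - q^1) = q^5 - q := by
    zify [e1, e2]
    ring
  have hpos : 0 < q^(1+1) - q^1 := by
    have : q^1 < q^(1+1) := Nat.pow_lt_pow_right (by omega) (by omega)
    omega
  refine Nat.le_of_mul_le_mul_right ?_ hpos
  have h5 : q^5 - q^1 = q^5 - q := by rw [pow_one]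
  omega

lemma planes_thru_line (hn : finrank F V = 5) {g : Submodule F V} (hg : finrank F g = 2) :
    {τ : Submodule F V | finrank F τ = 3 ∧ g ≤ τ}.ncard ≤ q^2 + q + 1 := by
  have hq : 2 ≤ q := hq2
  have h := count_covers (F := F) (V := V) (K := g) (U := ⊤) le_top (r := 2) hg
  have hset : {X : Submodule F V | finrank F X = 2 + 1 ∧ g ≤ X ∧ X ≤ ⊤} =
      {τ : Submodule F V | finrank F τ = 3 ∧ g ≤ τ} := by ext τ; simp [and_comm]
  rw [hset, finrank_top, hn] at h
  have e1 : q^2 ≤ q^(2+1) := Nat.pow_le_pow_right (by omega) (by omega)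
  have e2 : q^2 ≤ q^5 := Nat.pow_le_pow_right (by omega) (by omega)
  have hid : (q^2+q+1) * (q^(2+1) - q^2) = q^5 - q^2 := by
    zify [e1, e2]
    ring
  have hpos : 0 < q^(2+1) - q^2 := by
    have : q^2 < q^(2+1) := Nat.pow_lt_pow_right (by omega) (by omega)
    omega
  refine Nat.le_of_mul_le_mul_right ?_ hpos
  omega

lemma lines_meeting (hn : finrank F V = 5) {A : Submodule F V} {NP : ℕ}
    (hA : {p : Submodule F V | finrank F p = 1 ∧ p ≤ A}.ncard ≤ NP) :
    {g : Submodule F V | finrank F g = 2 ∧ g ⊓ A ≠ ⊥}.ncard ≤ NP * (q^3+q^2+q+1) := by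
  have h := pairUB (α := Submodule F V) (β := Submodule F V)
    (S := {g : Submodule F V | finrank F g = 2 ∧ g ⊓ A ≠ ⊥})
    (P := {p : Submodule F V | finrank F p = 1 ∧ p ≤ A})
    (fun p g => finrank F g = 2 ∧ p ≤ g)
    (by
      rintro g ⟨hg2, hgA⟩
      obtain ⟨p, hp1, hple⟩ := exists_point_le hgA
      exact ⟨p, ⟨hp1, hple.trans inf_le_right⟩, hg2, hple.trans inf_le_left⟩)
    (q^3+q^2+q+1)
    (fun p hp => lines_thru_pt hn hp.1)
  calc {g : Submodule F V | finrank F g = 2 ∧ g ⊓ A ≠ ⊥}.ncard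
      ≤ {p : Submodule F V | finrank F p = 1 ∧ p ≤ A}.ncard * (q^3+q^2+q+1) := h
    _ ≤ NP * (q^3+q^2+q+1) := Nat.mul_le_mul_right _ hA

end Counts4

section Counts5
set_option linter.unusedSectionVars false
variable {F : Type} [Field F] [Fintype F] {V : Type} [AddCommGroup V] [Module F V] [Finite V]

local notation "q" => Fintype.card F

lemma point_ne_bot {p : Submodule F V} (hp : finrank F p = 1) : p ≠ ⊥ := by
  intro h
  rw [h, finrank_bot] at hp
  omega

lemma bound_LA (hn : finrank F V = 5) {π₁ π₂ : Submodule F V}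
    (h1 : finrank F π₁ = 3) (h2 : finrank F π₂ = 3) (hne : π₁ ≠ π₂) :
    {g : Submodule F V | finrank F g = 2 ∧ g ⊓ π₁ ≠ ⊥ ∧ g ⊓ π₂ ≠ ⊥}.ncard ≤
      (q^3+q^2+q+1) + (q^2+q+1)*(q^2+q+1) ∨
    {g : Submodule F V | finrank F g = 2 ∧ g ⊓ π₁ ≠ ⊥ ∧ g ⊓ π₂ ≠ ⊥}.ncard ≤
      (q+1)*(q^3+q^2+q+1) + q^2*(q^2+q+1) := by
  classical
  haveI : Module.Finite F V := Module.Finite.of_finite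
  have hq : 2 ≤ q := hq2
  set m := π₁ ⊓ π₂ with hm
  have hm2 : finrank F m ≤ 2 := by
    have hle : finrank F m ≤ 3 := h1 ▸ Submodule.finrank_mono inf_le_left
    by_contra hgt
    have e1 : m = π₁ := Submodule.eq_of_le_of_finrank_le inf_le_left (by omega)
    have e2 : m = π₂ := Submodule.eq_of_le_of_finrank_le inf_le_right (by omega)
    exact hne (e1.symm.trans e2)
  set S := {g : Submodule F V | finrank F g = 2 ∧ g ⊓ π₁ ≠ ⊥ ∧ g ⊓ π₂ ≠ ⊥} with hS
  set S1 := {g : Submodule F V | finrank F g = 2 ∧ g ⊓ m ≠ ⊥} with hS1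
  set S2 := {g : Submodule F V | finrank F g = 2 ∧ g ⊓ π₁ ≠ ⊥ ∧ g ⊓ π₂ ≠ ⊥ ∧ g ⊓ m = ⊥}
    with hS2
  have hsplit : S ⊆ S1 ∪ S2 := by
    intro g hg
    by_cases hb : g ⊓ m = ⊥
    · exact Or.inr ⟨hg.1, hg.2.1, hg.2.2, hb⟩
    · exact Or.inl ⟨hg.1, hb⟩
  have hS1c : S1.ncard ≤
      {p : Submodule F V | finrank F p = 1 ∧ p ≤ m}.ncard * (q^3+q^2+q+1) :=
    lines_meeting hn le_rfl
  -- S2 is covered by sups of pairs of points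
  have hS2c : S2.ncard ≤
      ({p : Submodule F V | finrank F p = 1 ∧ p ≤ π₁} \
        {p : Submodule F V | finrank F p = 1 ∧ p ≤ π₂}).ncard *
      {p : Submodule F V | finrank F p = 1 ∧ p ≤ π₂}.ncard := by
    have himg : S2 ⊆ (fun pr : Submodule F V × Submodule F V => pr.1 ⊔ pr.2) ''
        (({p : Submodule F V | finrank F p = 1 ∧ p ≤ π₁} \
          {p : Submodule F V | finrank F p = 1 ∧ p ≤ π₂}) ×ˢ
          {p : Submodule F V | finrank F p = 1 ∧ p ≤ π₂}) := by
      rintro g ⟨hg2, hgπ₁, hgπ₂, hgm⟩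
      obtain ⟨p₁, hp₁, hple₁⟩ := exists_point_le hgπ₁
      obtain ⟨p₂, hp₂, hple₂⟩ := exists_point_le hgπ₂
      have hp₁g : p₁ ≤ g := hple₁.trans inf_le_left
      have hp₁π : p₁ ≤ π₁ := hple₁.trans inf_le_right
      have hp₂g : p₂ ≤ g := hple₂.trans inf_le_left
      have hp₂π : p₂ ≤ π₂ := hple₂.trans inf_le_right
      have hnot : ¬ p₁ ≤ π₂ := by
        intro hcon
        have : p₁ ≤ g ⊓ m := le_inf hp₁g (le_inf hp₁π hcon)
        rw [hgm] at this
        exact point_ne_bot hp₁ (le_bot_iff.1 this)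
      have hne12 : p₁ ≠ p₂ := fun h => hnot (h ▸ hp₂π)
      exact ⟨(p₁, p₂), ⟨⟨⟨hp₁, hp₁π⟩, fun hcon => hnot hcon.2⟩, hp₂, hp₂π⟩,
        Submodule.eq_of_le_of_finrank_le (sup_le hp₁g hp₂g)
        (by rw [hg2, points_sup_rank hp₁ hp₂ hne12])⟩
    calc S2.ncard ≤ _ := Set.ncard_le_ncard himg (Set.toFinite _)
      _ ≤ _ := Set.ncard_image_le (Set.toFinite _)
      _ = _ := ncard_sprod _ _
  have hB : {p : Submodule F V | finrank F p = 1 ∧ p ≤ π₂}.ncard ≤ q^2+q+1 :=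
    ptsU_le3 (by omega)
  have hcard : S.ncard ≤ S1.ncard + S2.ncard :=
    le_trans (Set.ncard_le_ncard hsplit (Set.toFinite _)) (Set.ncard_union_le _ _)
  rcases Nat.lt_or_ge (finrank F m) 2 with hcase | hcase
  · left
    have hpm : {p : Submodule F V | finrank F p = 1 ∧ p ≤ m}.ncard ≤ 1 := ptsU_le1 (by omega)
    have hA : ({p : Submodule F V | finrank F p = 1 ∧ p ≤ π₁} \
        {p : Submodule F V | finrank F p = 1 ∧ p ≤ π₂}).ncard ≤ q^2+q+1 :=
      le_trans (Set.ncard_le_ncard Set.diff_subset (Set.toFinite _)) (ptsU_le3 (by omega))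
    have m1 := Nat.mul_le_mul hpm (le_refl (q^3+q^2+q+1))
    have m2 := Nat.mul_le_mul hA hB
    omega
  · right
    have hm2' : finrank F m = 2 := by omega
    have hpm : {p : Submodule F V | finrank F p = 1 ∧ p ≤ m}.ncard ≤ q+1 := ptsU_le2 (by omega)
    have hlow : q+1 ≤ {p : Submodule F V | finrank F p = 1 ∧ p ≤ m}.ncard := ptsU_ge2 hm2'
    have hsubm : {p : Submodule F V | finrank F p = 1 ∧ p ≤ m} ⊆
        {p : Submodule F V | finrank F p = 1 ∧ p ≤ π₂} := by
      rintro p ⟨hp1, hpm'⟩; exact ⟨hp1, hpm'.trans inf_le_right⟩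
    have hsubm1 : {p : Submodule F V | finrank F p = 1 ∧ p ≤ m} ⊆
        {p : Submodule F V | finrank F p = 1 ∧ p ≤ π₁} := by
      rintro p ⟨hp1, hpm'⟩; exact ⟨hp1, hpm'.trans inf_le_left⟩
    have hA : ({p : Submodule F V | finrank F p = 1 ∧ p ≤ π₁} \
        {p : Submodule F V | finrank F p = 1 ∧ p ≤ π₂}).ncard ≤ q^2 := by
      have hsub2 : ({p : Submodule F V | finrank F p = 1 ∧ p ≤ π₁} \
          {p : Submodule F V | finrank F p = 1 ∧ p ≤ π₂}) ⊆
          ({p : Submodule F V | finrank F p = 1 ∧ p ≤ π₁} \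
          {p : Submodule F V | finrank F p = 1 ∧ p ≤ m}) :=
        Set.diff_subset_diff_right hsubm
      have hdiff := Set.ncard_diff hsubm1 (Set.toFinite _)
      have hup : {p : Submodule F V | finrank F p = 1 ∧ p ≤ π₁}.ncard ≤ q^2+q+1 :=
        ptsU_le3 (by omega)
      have := Set.ncard_le_ncard hsub2 (Set.toFinite _)
      omega
    have m1 := Nat.mul_le_mul hpm (le_refl (q^3+q^2+q+1))
    have m2 := Nat.mul_le_mul hA hB
    omega

lemma bound_PD (hn : finrank F V = 5) {l₁ l₂ : Submodule F V}
    (h1 : finrank F l₁ = 2) (h2 : finrank F l₂ = 2) (hne : l₁ ≠ l₂) :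
    {τ : Submodule F V | finrank F τ = 3 ∧ l₁ ⊓ τ ≠ ⊥ ∧ l₂ ⊓ τ ≠ ⊥}.ncard ≤
      ((q+1)*(q+1))*(q^2+q+1) ∨
    {τ : Submodule F V | finrank F τ = 3 ∧ l₁ ⊓ τ ≠ ⊥ ∧ l₂ ⊓ τ ≠ ⊥}.ncard ≤
      (q^2+1)*(q^2+q+1) + (q*q)*(q^2+q+1) := by
  classical
  haveI : Module.Finite F V := Module.Finite.of_finite
  have hq : 2 ≤ q := hq2
  have hm1 : finrank F ↥(l₁ ⊓ l₂) ≤ 1 := by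
    have hle : finrank F ↥(l₁ ⊓ l₂) ≤ 2 := h1 ▸ Submodule.finrank_mono inf_le_left
    by_contra hgt
    have e1 : l₁ ⊓ l₂ = l₁ := Submodule.eq_of_le_of_finrank_le inf_le_left (by omega)
    have e2 : l₁ ⊓ l₂ = l₂ := Submodule.eq_of_le_of_finrank_le inf_le_right (by omega)
    exact hne (e1.symm.trans e2)
  by_cases hbot : l₁ ⊓ l₂ = ⊥
  · left
    have h := pairUB (α := Submodule F V × Submodule F V) (β := Submodule F V)
      (S := {τ : Submodule F V | finrank F τ = 3 ∧ l₁ ⊓ τ ≠ ⊥ ∧ l₂ ⊓ τ ≠ ⊥})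
      (P := {p : Submodule F V | finrank F p = 1 ∧ p ≤ l₁} ×ˢ
            {p : Submodule F V | finrank F p = 1 ∧ p ≤ l₂})
      (fun pr τ => finrank F τ = 3 ∧ pr.1 ≤ τ ∧ pr.2 ≤ τ)
      (by
        rintro τ ⟨hτ3, hτ1, hτ2⟩
        obtain ⟨p₁, hp₁, hple₁⟩ := exists_point_le hτ1
        obtain ⟨p₂, hp₂, hple₂⟩ := exists_point_le hτ2
        exact ⟨(p₁, p₂), ⟨⟨hp₁, hple₁.trans inf_le_left⟩, ⟨hp₂, hple₂.trans inf_le_left⟩⟩,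
          hτ3, hple₁.trans inf_le_right, hple₂.trans inf_le_right⟩)
      (q^2+q+1)
      (by
        rintro ⟨p₁, p₂⟩ ⟨⟨hp₁1, hp₁l⟩, hp₂1, hp₂l⟩
        have hne12 : p₁ ≠ p₂ := by
          rintro rfl
          have : p₁ ≤ l₁ ⊓ l₂ := le_inf hp₁l hp₂l
          rw [hbot] at this
          exact point_ne_bot hp₁1 (le_bot_iff.1 this)
        have hsub : {τ : Submodule F V | finrank F τ = 3 ∧ p₁ ≤ τ ∧ p₂ ≤ τ} ⊆
            {τ : Submodule F V | finrank F τ = 3 ∧ p₁ ⊔ p₂ ≤ τ} := by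
          rintro τ ⟨a, b, c⟩; exact ⟨a, sup_le b c⟩
        exact le_trans (Set.ncard_le_ncard hsub (Set.toFinite _))
          (planes_thru_line hn (points_sup_rank hp₁1 hp₂1 hne12)))
    rw [ncard_sprod] at h
    have hb1 : {p : Submodule F V | finrank F p = 1 ∧ p ≤ l₁}.ncard ≤ q+1 := ptsU_le2 (by omega)
    have hb2 : {p : Submodule F V | finrank F p = 1 ∧ p ≤ l₂}.ncard ≤ q+1 := ptsU_le2 (by omega)
    calc {τ : Submodule F V | finrank F τ = 3 ∧ l₁ ⊓ τ ≠ ⊥ ∧ l₂ ⊓ τ ≠ ⊥}.ncard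
        ≤ _ := h
      _ ≤ ((q+1)*(q+1))*(q^2+q+1) :=
          Nat.mul_le_mul_right _ (Nat.mul_le_mul hb1 hb2)
  · right
    set p₀ := l₁ ⊓ l₂ with hp₀
    have hm : finrank F p₀ = 1 := by
      have : finrank F p₀ ≠ 0 := fun h => hbot (Submodule.finrank_eq_zero.1 h)
      omega
    have hsplit : {τ : Submodule F V | finrank F τ = 3 ∧ l₁ ⊓ τ ≠ ⊥ ∧ l₂ ⊓ τ ≠ ⊥} ⊆
        {τ : Submodule F V | finrank F τ = 3 ∧ p₀ ≤ τ} ∪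
        {τ : Submodule F V | (finrank F τ = 3 ∧ l₁ ⊓ τ ≠ ⊥ ∧ l₂ ⊓ τ ≠ ⊥) ∧ ¬ p₀ ≤ τ} := by
      intro τ hτ
      by_cases hb : p₀ ≤ τ
      · exact Or.inl ⟨hτ.1, hb⟩
      · exact Or.inr ⟨hτ, hb⟩
    have hc1 : {τ : Submodule F V | finrank F τ = 3 ∧ p₀ ≤ τ}.ncard ≤ (q^2+1)*(q^2+q+1) :=
      planes_thru_pt hn hm
    have hc2 : {τ : Submodule F V |
        (finrank F τ = 3 ∧ l₁ ⊓ τ ≠ ⊥ ∧ l₂ ⊓ τ ≠ ⊥) ∧ ¬ p₀ ≤ τ}.ncard ≤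
        (q*q)*(q^2+q+1) := by
      have h := pairUB (α := Submodule F V × Submodule F V) (β := Submodule F V)
        (S := {τ : Submodule F V | (finrank F τ = 3 ∧ l₁ ⊓ τ ≠ ⊥ ∧ l₂ ⊓ τ ≠ ⊥) ∧ ¬ p₀ ≤ τ})
        (P := ({p : Submodule F V | finrank F p = 1 ∧ p ≤ l₁} \ {p₀}) ×ˢ
              ({p : Submodule F V | finrank F p = 1 ∧ p ≤ l₂} \ {p₀}))
        (fun pr τ => finrank F τ = 3 ∧ pr.1 ≤ τ ∧ pr.2 ≤ τ)
        (by
          rintro τ ⟨⟨hτ3, hτ1, hτ2⟩, hnp⟩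
          obtain ⟨p₁, hp₁, hple₁⟩ := exists_point_le hτ1
          obtain ⟨p₂, hp₂, hple₂⟩ := exists_point_le hτ2
          have hne₁ : p₁ ≠ p₀ := by
            rintro rfl
            exact hnp (hple₁.trans inf_le_right)
          have hne₂ : p₂ ≠ p₀ := by
            rintro rfl
            exact hnp (hple₂.trans inf_le_right)
          exact ⟨(p₁, p₂),
            ⟨⟨⟨hp₁, hple₁.trans inf_le_left⟩, by simpa using hne₁⟩,
             ⟨⟨hp₂, hple₂.trans inf_le_left⟩, by simpa using hne₂⟩⟩,
            hτ3, hple₁.trans inf_le_right, hple₂.trans inf_le_right⟩)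
        (q^2+q+1)
        (by
          rintro ⟨p₁, p₂⟩ ⟨⟨⟨hp₁1, hp₁l⟩, hne₁⟩, ⟨hp₂1, hp₂l⟩, hne₂⟩
          simp only [Set.mem_singleton_iff] at hne₁ hne₂
          have hne12 : p₁ ≠ p₂ := by
            rintro rfl
            have hle : p₁ ≤ p₀ := le_inf hp₁l hp₂l
            exact hne₁ (Submodule.eq_of_le_of_finrank_le hle (by rw [hm, hp₁1]))
          have hsub : {τ : Submodule F V | finrank F τ = 3 ∧ p₁ ≤ τ ∧ p₂ ≤ τ} ⊆
              {τ : Submodule F V | finrank F τ = 3 ∧ p₁ ⊔ p₂ ≤ τ} := by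
            rintro τ ⟨a, b, c⟩; exact ⟨a, sup_le b c⟩
          exact le_trans (Set.ncard_le_ncard hsub (Set.toFinite _))
            (planes_thru_line hn (points_sup_rank hp₁1 hp₂1 hne12)))
      rw [ncard_sprod] at h
      have hmem₁ : p₀ ∈ {p : Submodule F V | finrank F p = 1 ∧ p ≤ l₁} := ⟨hm, inf_le_left⟩
      have hmem₂ : p₀ ∈ {p : Submodule F V | finrank F p = 1 ∧ p ≤ l₂} := ⟨hm, inf_le_right⟩
      have hd1 : ({p : Submodule F V | finrank F p = 1 ∧ p ≤ l₁} \ {p₀}).ncard ≤ q := by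
        have := Set.ncard_diff (Set.singleton_subset_iff.2 hmem₁)
          (Set.toFinite ({p₀} : Set (Submodule F V)))
        have hb := ptsU_le2 (U := l₁) (F := F) (by omega)
        have := Set.ncard_singleton p₀
        omega
      have hd2 : ({p : Submodule F V | finrank F p = 1 ∧ p ≤ l₂} \ {p₀}).ncard ≤ q := by
        have := Set.ncard_diff (Set.singleton_subset_iff.2 hmem₂)
          (Set.toFinite ({p₀} : Set (Submodule F V)))
        have hb := ptsU_le2 (U := l₂) (F := F) (by omega)
        have := Set.ncard_singleton p₀
        omega
      exact le_trans h (Nat.mul_le_mul_right _ (Nat.mul_le_mul hd1 hd2))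
    calc {τ : Submodule F V | finrank F τ = 3 ∧ l₁ ⊓ τ ≠ ⊥ ∧ l₂ ⊓ τ ≠ ⊥}.ncard
        ≤ _ := le_trans (Set.ncard_le_ncard hsplit (Set.toFinite _)) (Set.ncard_union_le _ _)
      _ ≤ (q^2+1)*(q^2+q+1) + (q*q)*(q^2+q+1) := Nat.add_le_add hc1 hc2

end Counts5

section Counts6
set_option linter.unusedSectionVars false
variable {F : Type} [Field F] [Fintype F] {V : Type} [AddCommGroup V] [Module F V] [Finite V]

local notation "q" => Fintype.card F

lemma coflags_over_lines (hn : finrank F V = 5) {L : Set (Submodule F V)}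
    {S : Set (Submodule F V × Submodule F V)}
    (hS : ∀ pr ∈ S, pr.1 ∈ L ∧ finrank F pr.2 = 3 ∧ pr.1 ≤ pr.2)
    (hL : ∀ g ∈ L, finrank F g = 2) :
    S.ncard ≤ L.ncard * (q^2+q+1) := by
  refine pairUB (fun g pr => pr.1 = g ∧ finrank F pr.2 = 3 ∧ g ≤ pr.2)
    (fun pr hpr => ⟨pr.1, (hS pr hpr).1, rfl, (hS pr hpr).2⟩) (q^2+q+1) ?_
  intro g hg
  have hsub : {pr : Submodule F V × Submodule F V |
      pr.1 = g ∧ finrank F pr.2 = 3 ∧ g ≤ pr.2} ⊆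
      (fun τ => (g, τ)) '' {τ : Submodule F V | finrank F τ = 3 ∧ g ≤ τ} := by
    rintro ⟨g', τ⟩ ⟨rfl, h3, hle⟩
    exact ⟨τ, ⟨h3, hle⟩, rfl⟩
  calc _ ≤ _ := Set.ncard_le_ncard hsub (Set.toFinite _)
    _ ≤ {τ : Submodule F V | finrank F τ = 3 ∧ g ≤ τ}.ncard :=
        Set.ncard_image_le (Set.toFinite _)
    _ ≤ q^2+q+1 := planes_thru_line hn (hL g hg)

lemma coflags_over_planes {P : Set (Submodule F V)}
    {S : Set (Submodule F V × Submodule F V)}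
    (hS : ∀ pr ∈ S, pr.2 ∈ P ∧ finrank F pr.1 = 2 ∧ pr.1 ≤ pr.2)
    (hP : ∀ τ ∈ P, finrank F τ = 3) :
    S.ncard ≤ P.ncard * (q^2+q+1) := by
  refine pairUB (fun τ pr => pr.2 = τ ∧ finrank F pr.1 = 2 ∧ pr.1 ≤ τ)
    (fun pr hpr => ⟨pr.2, (hS pr hpr).1, rfl, (hS pr hpr).2.1, (hS pr hpr).2.2⟩) (q^2+q+1) ?_
  intro τ hτ
  have hsub : {pr : Submodule F V × Submodule F V |
      pr.2 = τ ∧ finrank F pr.1 = 2 ∧ pr.1 ≤ τ} ⊆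
      (fun g => (g, τ)) '' {g : Submodule F V | finrank F g = 2 ∧ g ≤ τ} := by
    rintro ⟨g, τ'⟩ ⟨rfl, h2, hle⟩
    exact ⟨g, ⟨h2, hle⟩, rfl⟩
  calc _ ≤ _ := Set.ncard_le_ncard hsub (Set.toFinite _)
    _ ≤ {g : Submodule F V | finrank F g = 2 ∧ g ≤ τ}.ncard :=
        Set.ncard_image_le (Set.toFinite _)
    _ ≤ q^2+q+1 := linesU_le3 (le_of_eq (hP τ hτ))

lemma coflags_SB2 (hn : finrank F V = 5) {π l : Submodule F V}
    (hπ : finrank F π = 3) (hl : finrank F l = 2) :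
    {pr : Submodule F V × Submodule F V |
      (finrank F pr.1 = 2 ∧ finrank F pr.2 = 3 ∧ pr.1 ≤ pr.2) ∧
       pr.1 ⊓ π ≠ ⊥ ∧ pr.1 ⊓ l = ⊥ ∧ l ⊓ pr.2 ≠ ⊥}.ncard ≤
      ((q^2+q+1) * (q^3+q^2+q+1)) * (q+1) := by
  classical
  haveI : Module.Finite F V := Module.Finite.of_finite
  have hP : {g : Submodule F V | finrank F g = 2 ∧ g ⊓ π ≠ ⊥ ∧ g ⊓ l = ⊥}.ncard ≤
      (q^2+q+1)*(q^3+q^2+q+1) := by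
    refine le_trans (Set.ncard_le_ncard ?_ (Set.toFinite _))
      (lines_meeting hn (ptsU_le3 (le_of_eq hπ)))
    rintro g ⟨a, b, _⟩; exact ⟨a, b⟩
  have hmain := pairUB (α := Submodule F V) (β := Submodule F V × Submodule F V)
    (S := {pr : Submodule F V × Submodule F V |
      (finrank F pr.1 = 2 ∧ finrank F pr.2 = 3 ∧ pr.1 ≤ pr.2) ∧
       pr.1 ⊓ π ≠ ⊥ ∧ pr.1 ⊓ l = ⊥ ∧ l ⊓ pr.2 ≠ ⊥})
    (P := {g : Submodule F V | finrank F g = 2 ∧ g ⊓ π ≠ ⊥ ∧ g ⊓ l = ⊥})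
    (fun g pr => pr.1 = g ∧ finrank F pr.2 = 3 ∧ g ≤ pr.2 ∧ l ⊓ pr.2 ≠ ⊥)
    (by
      rintro pr ⟨⟨h2, h3, hle⟩, hπ', hl', hlτ⟩
      exact ⟨pr.1, ⟨h2, hπ', hl'⟩, rfl, h3, hle, hlτ⟩)
    (q+1)
    (by
      rintro g ⟨hg2, hgπ, hgl⟩
      have hsub : {pr : Submodule F V × Submodule F V |
          pr.1 = g ∧ finrank F pr.2 = 3 ∧ g ≤ pr.2 ∧ l ⊓ pr.2 ≠ ⊥} ⊆
          (fun p => (g, g ⊔ p)) '' {p : Submodule F V | finrank F p = 1 ∧ p ≤ l} := by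
        rintro ⟨g', τ⟩ ⟨rfl, h3, hgτ, hlτ⟩
        obtain ⟨p, hp1, hple⟩ := exists_point_le hlτ
        have hpl : p ≤ l := hple.trans inf_le_left
        have hpτ : p ≤ τ := hple.trans inf_le_right
        have hginfp : g' ⊓ p = ⊥ := by
          have : g' ⊓ p ≤ g' ⊓ l := inf_le_inf_left g' hpl
          rw [hgl] at this
          exact le_bot_iff.1 this
        have hrank : finrank F ↥(g' ⊔ p) = 3 := by
          have key := Submodule.finrank_sup_add_finrank_inf_eq g' p
          rw [hginfp, finrank_bot, hg2, hp1] at key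
          omega
        have heq : g' ⊔ p = τ :=
          Submodule.eq_of_le_of_finrank_le (sup_le hgτ hpτ) (by rw [h3, hrank])
        refine ⟨p, ⟨hp1, hpl⟩, ?_⟩
        show (g', g' ⊔ p) = (g', τ)
        rw [heq]
      calc _ ≤ _ := Set.ncard_le_ncard hsub (Set.toFinite _)
        _ ≤ {p : Submodule F V | finrank F p = 1 ∧ p ≤ l}.ncard :=
            Set.ncard_image_le (Set.toFinite _)
        _ ≤ q+1 := ptsU_le2 (le_of_eq hl))
  exact le_trans hmain (Nat.mul_le_mul_right _ hP)

end Counts6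

section Numerics

lemma num_factor (q A D : ℕ)
    (h : A + D + 4*((q+1)*(q^3+q^2+q+1)) ≤ 8*q^4+14*q^3+16*q^2+10*q+6) :
    A*(q^2+q+1) + ((q+1)*(q^3+q^2+q+1))*(q^2+q+1) +
      ((q^2+q+1)*(q^3+q^2+q+1))*(q+1) + ((q+1)*(q^3+q^2+q+1))*(q^2+q+1) +
      ((q^2+q+1)*(q^3+q^2+q+1))*(q+1) + D*(q^2+q+1) ≤
      (q^2+q+1)*(8*q^4+14*q^3+16*q^2+10*q+6) := by
  have e : A*(q^2+q+1) + ((q+1)*(q^3+q^2+q+1))*(q^2+q+1) +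
      ((q^2+q+1)*(q^3+q^2+q+1))*(q+1) + ((q+1)*(q^3+q^2+q+1))*(q^2+q+1) +
      ((q^2+q+1)*(q^3+q^2+q+1))*(q+1) + D*(q^2+q+1) =
      (q^2+q+1) * (A + D + 4*((q+1)*(q^3+q^2+q+1))) := by ring
  rw [e]
  exact Nat.mul_le_mul_left _ h

lemma combo11 (q : ℕ) (hq : 2 ≤ q) :
    ((q^3+q^2+q+1) + (q^2+q+1)*(q^2+q+1)) + ((q+1)*(q+1))*(q^2+q+1) +
      4*((q+1)*(q^3+q^2+q+1)) ≤ 8*q^4+14*q^3+16*q^2+10*q+6 := by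
  obtain ⟨r, rfl⟩ : ∃ r, q = r + 2 := ⟨q - 2, by omega⟩
  nlinarith [pow_nonneg (Nat.zero_le r) 2, pow_nonneg (Nat.zero_le r) 3,
    pow_nonneg (Nat.zero_le r) 4, Nat.zero_le r]

lemma combo12 (q : ℕ) (hq : 2 ≤ q) :
    ((q^3+q^2+q+1) + (q^2+q+1)*(q^2+q+1)) + ((q^2+1)*(q^2+q+1) + (q*q)*(q^2+q+1)) +
      4*((q+1)*(q^3+q^2+q+1)) ≤ 8*q^4+14*q^3+16*q^2+10*q+6 := by
  obtain ⟨r, rfl⟩ : ∃ r, q = r + 2 := ⟨q - 2, by omega⟩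
  nlinarith [pow_nonneg (Nat.zero_le r) 2, pow_nonneg (Nat.zero_le r) 3,
    pow_nonneg (Nat.zero_le r) 4, Nat.zero_le r]

lemma combo21 (q : ℕ) (hq : 2 ≤ q) :
    ((q+1)*(q^3+q^2+q+1) + q^2*(q^2+q+1)) + ((q+1)*(q+1))*(q^2+q+1) +
      4*((q+1)*(q^3+q^2+q+1)) ≤ 8*q^4+14*q^3+16*q^2+10*q+6 := by
  obtain ⟨r, rfl⟩ : ∃ r, q = r + 2 := ⟨q - 2, by omega⟩
  nlinarith [pow_nonneg (Nat.zero_le r) 2, pow_nonneg (Nat.zero_le r) 3,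
    pow_nonneg (Nat.zero_le r) 4, Nat.zero_le r]

lemma combo22 (q : ℕ) (hq : 2 ≤ q) :
    ((q+1)*(q^3+q^2+q+1) + q^2*(q^2+q+1)) + ((q^2+1)*(q^2+q+1) + (q*q)*(q^2+q+1)) +
      4*((q+1)*(q^3+q^2+q+1)) ≤ 8*q^4+14*q^3+16*q^2+10*q+6 := by
  obtain ⟨r, rfl⟩ : ∃ r, q = r + 2 := ⟨q - 2, by omega⟩
  nlinarith [pow_nonneg (Nat.zero_le r) 2, pow_nonneg (Nat.zero_le r) 3,
    pow_nonneg (Nat.zero_le r) 4, Nat.zero_le r]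

end Numerics

set_option maxHeartbeats 2000000 in
/-- For two coflags `(ℓ₁,π₁)`, `(ℓ₂,π₂)` of `PG(4,q)` with `ℓ₁ ≠ ℓ₂` and `π₁ ≠ π₂`, the
number of coflags non-f-opposite to both is at most `(q²+q+1)(8q⁴+14q³+16q²+10q+6)`. -/
theorem statement_10 (q : ℕ) (F : Type) [Field F] [Fintype F]
    (hq : Fintype.card F = q) (l₁ π₁ l₂ π₂ : Submodule F (Fin 5 → F))
    (h1 : IsCoflag4 l₁ π₁) (h2 : IsCoflag4 l₂ π₂) (hl : l₁ ≠ l₂) (hπ : π₁ ≠ π₂) :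
    Set.ncard {p : Submodule F (Fin 5 → F) × Submodule F (Fin 5 → F) |
        IsCoflag4 p.1 p.2 ∧ ¬ FOpp4 p.1 p.2 l₁ π₁ ∧ ¬ FOpp4 p.1 p.2 l₂ π₂} ≤
      (q^2+q+1)*(8*q^4+14*q^3+16*q^2+10*q+6) := by
  classical
  subst hq
  obtain ⟨hl₁r, hπ₁r, hlp₁⟩ := h1
  obtain ⟨hl₂r, hπ₂r, hlp₂⟩ := h2
  have hqq : 2 ≤ Fintype.card F := Fintype.one_lt_card
  have hn : Module.finrank F (Fin 5 → F) = 5 := Module.finrank_fin_fun F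
  set SA := {pr : Submodule F (Fin 5 → F) × Submodule F (Fin 5 → F) |
    (Module.finrank F pr.1 = 2 ∧ Module.finrank F pr.2 = 3 ∧ pr.1 ≤ pr.2) ∧
    pr.1 ⊓ π₁ ≠ ⊥ ∧ pr.1 ⊓ π₂ ≠ ⊥} with hSAdef
  set SB1 := {pr : Submodule F (Fin 5 → F) × Submodule F (Fin 5 → F) |
    (Module.finrank F pr.1 = 2 ∧ Module.finrank F pr.2 = 3 ∧ pr.1 ≤ pr.2) ∧
    pr.1 ⊓ l₂ ≠ ⊥} with hSB1def
  set SB2 := {pr : Submodule F (Fin 5 → F) × Submodule F (Fin 5 → F) |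
    (Module.finrank F pr.1 = 2 ∧ Module.finrank F pr.2 = 3 ∧ pr.1 ≤ pr.2) ∧
    pr.1 ⊓ π₁ ≠ ⊥ ∧ pr.1 ⊓ l₂ = ⊥ ∧ l₂ ⊓ pr.2 ≠ ⊥} with hSB2def
  set SC1 := {pr : Submodule F (Fin 5 → F) × Submodule F (Fin 5 → F) |
    (Module.finrank F pr.1 = 2 ∧ Module.finrank F pr.2 = 3 ∧ pr.1 ≤ pr.2) ∧
    pr.1 ⊓ l₁ ≠ ⊥} with hSC1def
  set SC2 := {pr : Submodule F (Fin 5 → F) × Submodule F (Fin 5 → F) |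
    (Module.finrank F pr.1 = 2 ∧ Module.finrank F pr.2 = 3 ∧ pr.1 ≤ pr.2) ∧
    pr.1 ⊓ π₂ ≠ ⊥ ∧ pr.1 ⊓ l₁ = ⊥ ∧ l₁ ⊓ pr.2 ≠ ⊥} with hSC2def
  set SD := {pr : Submodule F (Fin 5 → F) × Submodule F (Fin 5 → F) |
    (Module.finrank F pr.1 = 2 ∧ Module.finrank F pr.2 = 3 ∧ pr.1 ≤ pr.2) ∧
    l₁ ⊓ pr.2 ≠ ⊥ ∧ l₂ ⊓ pr.2 ≠ ⊥} with hSDdef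
  have hcover : {p : Submodule F (Fin 5 → F) × Submodule F (Fin 5 → F) |
      IsCoflag4 p.1 p.2 ∧ ¬ FOpp4 p.1 p.2 l₁ π₁ ∧ ¬ FOpp4 p.1 p.2 l₂ π₂} ⊆
      SA ∪ SB1 ∪ SB2 ∪ SC1 ∪ SC2 ∪ SD := by
    intro pr hpr
    simp only [Set.mem_setOf_eq, IsCoflag4, FOpp4] at hpr
    obtain ⟨⟨hg2, hτ3, hgτ⟩, hf1, hf2⟩ := hpr
    have h1' : pr.1 ⊓ π₁ ≠ ⊥ ∨ l₁ ⊓ pr.2 ≠ ⊥ := not_and_or.1 hf1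
    have h2' : pr.1 ⊓ π₂ ≠ ⊥ ∨ l₂ ⊓ pr.2 ≠ ⊥ := not_and_or.1 hf2
    have hmem : pr ∈ SA ∨ pr ∈ SB1 ∨ pr ∈ SB2 ∨ pr ∈ SC1 ∨ pr ∈ SC2 ∨ pr ∈ SD := by
      rcases h1' with hA1 | hB1 <;> rcases h2' with hA2 | hB2
      · exact Or.inl ⟨⟨hg2, hτ3, hgτ⟩, hA1, hA2⟩
      · by_cases hgl : pr.1 ⊓ l₂ = ⊥
        · exact Or.inr (Or.inr (Or.inl ⟨⟨hg2, hτ3, hgτ⟩, hA1, hgl, hB2⟩))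
        · exact Or.inr (Or.inl ⟨⟨hg2, hτ3, hgτ⟩, hgl⟩)
      · by_cases hgl : pr.1 ⊓ l₁ = ⊥
        · exact Or.inr (Or.inr (Or.inr (Or.inr (Or.inl
            ⟨⟨hg2, hτ3, hgτ⟩, hA2, hgl, hB1⟩))))
        · exact Or.inr (Or.inr (Or.inr (Or.inl ⟨⟨hg2, hτ3, hgτ⟩, hgl⟩)))
      · exact Or.inr (Or.inr (Or.inr (Or.inr (Or.inr ⟨⟨hg2, hτ3, hgτ⟩, hB1, hB2⟩))))
    simp only [Set.mem_union]
    tauto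
  set LA := {g : Submodule F (Fin 5 → F) |
    Module.finrank F g = 2 ∧ g ⊓ π₁ ≠ ⊥ ∧ g ⊓ π₂ ≠ ⊥} with hLAdef
  set PD := {τ : Submodule F (Fin 5 → F) |
    Module.finrank F τ = 3 ∧ l₁ ⊓ τ ≠ ⊥ ∧ l₂ ⊓ τ ≠ ⊥} with hPDdef
  have hSAb : SA.ncard ≤ LA.ncard * (Fintype.card F^2 + Fintype.card F + 1) :=
    coflags_over_lines hn
      (by rintro pr ⟨⟨h2', h3', hle'⟩, hA1, hA2⟩; exact ⟨⟨h2', hA1, hA2⟩, h3', hle'⟩)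
      (fun g hg => hg.1)
  have hSDb : SD.ncard ≤ PD.ncard * (Fintype.card F^2 + Fintype.card F + 1) :=
    coflags_over_planes
      (by rintro pr ⟨⟨h2', h3', hle'⟩, hB1, hB2⟩; exact ⟨⟨h3', hB1, hB2⟩, h2', hle'⟩)
      (fun τ hτ => hτ.1)
  have hSB1b : SB1.ncard ≤
      ((Fintype.card F+1)*(Fintype.card F^3+Fintype.card F^2+Fintype.card F+1)) *
      (Fintype.card F^2+Fintype.card F+1) := by
    have hL : {g : Submodule F (Fin 5 → F) |
        Module.finrank F g = 2 ∧ g ⊓ l₂ ≠ ⊥}.ncard ≤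
        (Fintype.card F+1)*(Fintype.card F^3+Fintype.card F^2+Fintype.card F+1) :=
      lines_meeting hn (ptsU_le2 (le_of_eq hl₂r))
    refine le_trans (coflags_over_lines hn
      (by rintro pr ⟨⟨h2', h3', hle'⟩, hgl⟩; exact ⟨⟨h2', hgl⟩, h3', hle'⟩)
      (fun g hg => hg.1)) (Nat.mul_le_mul_right _ hL)
  have hSC1b : SC1.ncard ≤
      ((Fintype.card F+1)*(Fintype.card F^3+Fintype.card F^2+Fintype.card F+1)) *
      (Fintype.card F^2+Fintype.card F+1) := by
    have hL : {g : Submodule F (Fin 5 → F) |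
        Module.finrank F g = 2 ∧ g ⊓ l₁ ≠ ⊥}.ncard ≤
        (Fintype.card F+1)*(Fintype.card F^3+Fintype.card F^2+Fintype.card F+1) :=
      lines_meeting hn (ptsU_le2 (le_of_eq hl₁r))
    refine le_trans (coflags_over_lines hn
      (by rintro pr ⟨⟨h2', h3', hle'⟩, hgl⟩; exact ⟨⟨h2', hgl⟩, h3', hle'⟩)
      (fun g hg => hg.1)) (Nat.mul_le_mul_right _ hL)
  have hSB2b : SB2.ncard ≤
      ((Fintype.card F^2+Fintype.card F+1) *
        (Fintype.card F^3+Fintype.card F^2+Fintype.card F+1)) * (Fintype.card F+1) :=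
    coflags_SB2 hn hπ₁r hl₂r
  have hSC2b : SC2.ncard ≤
      ((Fintype.card F^2+Fintype.card F+1) *
        (Fintype.card F^3+Fintype.card F^2+Fintype.card F+1)) * (Fintype.card F+1) :=
    coflags_SB2 hn hπ₂r hl₁r
  have hunion : {p : Submodule F (Fin 5 → F) × Submodule F (Fin 5 → F) |
      IsCoflag4 p.1 p.2 ∧ ¬ FOpp4 p.1 p.2 l₁ π₁ ∧ ¬ FOpp4 p.1 p.2 l₂ π₂}.ncard ≤
      SA.ncard + SB1.ncard + SB2.ncard + SC1.ncard + SC2.ncard + SD.ncard := by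
    have u0 := Set.ncard_le_ncard hcover (Set.toFinite _)
    have u1 := Set.ncard_union_le (SA ∪ SB1 ∪ SB2 ∪ SC1 ∪ SC2) SD
    have u2 := Set.ncard_union_le (SA ∪ SB1 ∪ SB2 ∪ SC1) SC2
    have u3 := Set.ncard_union_le (SA ∪ SB1 ∪ SB2) SC1
    have u4 := Set.ncard_union_le (SA ∪ SB1) SB2
    have u5 := Set.ncard_union_le SA SB1
    omega
  have hLAb := bound_LA hn hπ₁r hπ₂r hπ
  have hPDb := bound_PD hn hl₁r hl₂r hl
  rw [← hLAdef] at hLAb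
  rw [← hPDdef] at hPDb
  rcases hLAb with hA | hA <;> rcases hPDb with hD | hD
  · have hnum := num_factor (Fintype.card F) LA.ncard PD.ncard
      (by have := combo11 (Fintype.card F) hqq; omega)
    omega
  · have hnum := num_factor (Fintype.card F) LA.ncard PD.ncard
      (by have := combo12 (Fintype.card F) hqq; omega)
    omega
  · have hnum := num_factor (Fintype.card F) LA.ncard PD.ncard
      (by have := combo21 (Fintype.card F) hqq; omega)
    omega
  · have hnum := num_factor (Fintype.card F) LA.ncard PD.ncard
      (by have := combo22 (Fintype.card F) hqq; omega)
    omega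
end

section
/- Let (ℓ₁,π₁) and (ℓ₂,π₂) be two coflags of PG(4,q) with ℓ₁ ≠ ℓ₂ and π₁ ≠ π₂, and let P₀ be a point with P₀ ≤ π₁ ∩ π₂ such that P₀ is contained in neither ℓ₁ nor ℓ₂. Then the number of coflags (g,τ) of PG(4,q) with P₀ ≤ τ and P₀ not contained in g that are not f-opposite to (ℓ₁,π₁) and not f-opposite to (ℓ₂,π₂) is at most 2q⁵+12q⁴+11q³+8q²+3q+3. -/
set_option linter.unusedSectionVars false

open Module

instance instFiniteSubmodule5 {F : Type} [Field F] [Fintype F] :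
    Finite (Submodule F (Fin 5 → F)) :=
  Finite.of_injective (fun p => (p : Set (Fin 5 → F))) SetLike.coe_injective

lemma geom_mul_aux {q : ℕ} (hq : 1 ≤ q) (d : ℕ) :
    (q - 1) * (∑ i ∈ Finset.range d, q ^ i) + 1 = q ^ d := by
  obtain ⟨m, rfl⟩ := Nat.exists_eq_add_of_le hq
  simp only [Nat.add_sub_cancel_left]
  induction d with
  | zero => simp
  | succ n ih =>
    rw [Finset.sum_range_succ, pow_succ]
    nlinarith [ih]

lemma points_ncard_le {F : Type} [Field F] [Fintype F] (q d : ℕ)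
    (hq : Fintype.card F = q) (W : Submodule F (Fin 5 → F))
    (hd : Module.finrank F ↥W = d) :
    Set.ncard {P : Submodule F (Fin 5 → F) | Module.finrank F ↥P = 1 ∧ P ≤ W}
      ≤ ∑ i ∈ Finset.range d, q ^ i := by
  classical
  have hq2 : 2 ≤ q := hq ▸ Fintype.one_lt_card
  set f : (Fin 5 → F) → Submodule F (Fin 5 → F) := fun x => Submodule.span F {x} with hf
  set A : Finset (Fin 5 → F) := (Finset.univ.filter (fun x => x ∈ W)).erase 0 with hA
  have hmemA : ∀ x, x ∈ A ↔ x ≠ 0 ∧ x ∈ W := by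
    intro x; simp [hA]
  have hset : {P : Submodule F (Fin 5 → F) | Module.finrank F ↥P = 1 ∧ P ≤ W}
      = ↑(A.image f) := by
    ext P
    simp only [Set.mem_setOf_eq, Finset.coe_image, Set.mem_image, Finset.mem_coe]
    constructor
    · rintro ⟨h1, hle⟩
      have hPne : P ≠ ⊥ := by
        intro h; rw [h, finrank_bot] at h1; exact absurd h1 one_ne_zero.symm
      obtain ⟨x, hxP, hx0⟩ := (Submodule.ne_bot_iff P).1 hPne
      refine ⟨x, (hmemA x).2 ⟨hx0, hle hxP⟩, ?_⟩
      have hsle : Submodule.span F {x} ≤ P := by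
        rw [Submodule.span_le]; simpa using hxP
      exact Submodule.eq_of_le_of_finrank_le hsle
        (by rw [h1, finrank_span_singleton hx0])
    · rintro ⟨x, hxA, rfl⟩
      obtain ⟨hx0, hxW⟩ := (hmemA x).1 hxA
      exact ⟨finrank_span_singleton hx0, by rw [Submodule.span_le]; simpa using hxW⟩
  rw [hset, Set.ncard_coe_finset]
  have hfiber : ∀ P ∈ A.image f, q - 1 ≤ (A.filter (fun x => f x = P)).card := by
    intro P hP
    obtain ⟨x₀, hx₀, rfl⟩ := Finset.mem_image.1 hP
    obtain ⟨hx₀0, hx₀W⟩ := (hmemA x₀).1 hx₀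
    have hsub : (Finset.univ.erase (0 : F)).image (fun c => c • x₀)
        ⊆ A.filter (fun x => f x = f x₀) := by
      intro y hy
      obtain ⟨c, hc, rfl⟩ := Finset.mem_image.1 hy
      have hc0 : c ≠ 0 := Finset.ne_of_mem_erase hc
      refine Finset.mem_filter.2 ⟨(hmemA _).2 ⟨?_, W.smul_mem c hx₀W⟩, ?_⟩
      · exact smul_ne_zero hc0 hx₀0
      · exact Submodule.span_singleton_smul_eq (IsUnit.mk0 c hc0) x₀
    have hinj : ((Finset.univ.erase (0 : F)).image (fun c => c • x₀)).card = q - 1 := by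
      rw [Finset.card_image_of_injective _ (smul_left_injective F hx₀0),
        Finset.card_erase_of_mem (Finset.mem_univ _), Finset.card_univ, hq]
    calc q - 1 = _ := hinj.symm
      _ ≤ _ := Finset.card_le_card hsub
  have key := Finset.mul_card_image_le_card A (q - 1) hfiber
  have hAcard : A.card + 1 = q ^ d := by
    have h0 : (0 : Fin 5 → F) ∈ Finset.univ.filter (fun x => x ∈ W) := by
      simp [W.zero_mem]
    have h1 : Fintype.card ↥W = q ^ d := by
      rw [card_eq_pow_finrank (K := F) (V := ↥W), hd, hq]
    have h2 : (Finset.univ.filter (fun x => x ∈ W)).card = Fintype.card ↥W := by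
      rw [Fintype.card_subtype]
    rw [hA, Finset.card_erase_of_mem h0, h2, h1]
    have : 1 ≤ q ^ d := Nat.one_le_pow _ _ (by omega)
    omega
  have hgeom := geom_mul_aux (by omega : 1 ≤ q) d
  have : (q - 1) * (A.image f).card ≤ (q - 1) * (∑ i ∈ Finset.range d, q ^ i) := by
    omega
  exact Nat.le_of_mul_le_mul_left this (by omega)

lemma ncard_sup_pairs_le {F : Type} [Field F] [Fintype F]
    (A B S : Set (Submodule F (Fin 5 → F)))
    (h : ∀ g ∈ S, ∃ P ∈ A, ∃ Q ∈ B, g = P ⊔ Q) :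
    S.ncard ≤ A.ncard * B.ncard := by
  have hsub : S ⊆ (fun pq : Submodule F (Fin 5 → F) × Submodule F (Fin 5 → F) =>
      pq.1 ⊔ pq.2) '' (A ×ˢ B) := by
    rintro g hg
    obtain ⟨P, hP, Q, hQ, rfl⟩ := h g hg
    exact ⟨(P, Q), ⟨hP, hQ⟩, rfl⟩
  calc S.ncard ≤ _ := Set.ncard_le_ncard hsub (Set.toFinite _)
    _ ≤ (A ×ˢ B).ncard := Set.ncard_image_le (Set.toFinite _)
    _ = A.ncard * B.ncard := by
        rw [← Nat.card_coe_set_eq, ← Nat.card_coe_set_eq, ← Nat.card_coe_set_eq,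
          Nat.card_congr (Equiv.Set.prod A B), Nat.card_prod]




section AuxGeo

variable {F : Type} [Field F] [Fintype F]

lemma span_inf_bot' {y z : Fin 5 → F} (hz : z ∉ Submodule.span F {y}) :
    Submodule.span F {y} ⊓ Submodule.span F {z} = ⊥ := by
  by_contra hne
  obtain ⟨v, hv, hv0⟩ := (Submodule.ne_bot_iff _).1 hne
  obtain ⟨hv1, hv2⟩ := Submodule.mem_inf.1 hv
  obtain ⟨a, ha⟩ := Submodule.mem_span_singleton.1 hv1
  obtain ⟨b, hb⟩ := Submodule.mem_span_singleton.1 hv2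
  have hb0 : b ≠ 0 := by rintro rfl; rw [zero_smul] at hb; exact hv0 hb.symm
  apply hz
  have hzeq : z = (b⁻¹ * a) • y := by
    rw [mul_smul, ha, ← hb, smul_smul, inv_mul_cancel₀ hb0, one_smul]
  rw [hzeq]
  exact Submodule.mem_span_singleton.2 ⟨_, rfl⟩

lemma line_eq_sup {g : Submodule F (Fin 5 → F)}
    (hg : Module.finrank F ↥g = 2) {y z : Fin 5 → F} (hy : y ∈ g) (hy0 : y ≠ 0)
    (hz : z ∈ g) (hzy : z ∉ Submodule.span F {y}) :
    g = Submodule.span F {y} ⊔ Submodule.span F {z} := by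
  have hle : Submodule.span F {y} ⊔ Submodule.span F {z} ≤ g :=
    sup_le (by rwa [Submodule.span_le, Set.singleton_subset_iff])
      (by rwa [Submodule.span_le, Set.singleton_subset_iff])
  have hz0 : z ≠ 0 := fun h => hzy (h ▸ Submodule.zero_mem _)
  have hinf := span_inf_bot' hzy
  have hdim := Submodule.finrank_sup_add_finrank_inf_eq
    (Submodule.span F {y}) (Submodule.span F {z})
  rw [hinf, finrank_bot, finrank_span_singleton hy0, finrank_span_singleton hz0] at hdim
  exact (Submodule.eq_of_le_of_finrank_le hle (by omega)).symm

lemma exists_second_point {g : Submodule F (Fin 5 → F)}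
    (hg : Module.finrank F ↥g = 2) {y : Fin 5 → F} (hy : y ∈ g) :
    ∃ z ∈ g, z ∉ Submodule.span F {y} := by
  have hrk : Module.finrank F ↥(Submodule.span F {y}) ≤ 1 := by
    rcases eq_or_ne y 0 with rfl | hy0
    · rw [Submodule.span_zero_singleton, finrank_bot]; omega
    · rw [finrank_span_singleton hy0]
  have hlt : Submodule.span F {y} < g := by
    refine lt_of_le_of_ne (by rwa [Submodule.span_le, Set.singleton_subset_iff]) ?_
    intro h
    rw [h, hg] at hrk; omega
  obtain ⟨-, z, hzg, hzn⟩ := SetLike.lt_iff_le_and_exists.1 hlt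
  exact ⟨z, hzg, hzn⟩

end AuxGeo

lemma final_arith {q : ℕ} (hq2 : 2 ≤ q) :
    (q^2+q+1) * (q^2+q+1) + (q+1) * (q^4+q^3+q^2+q+1)
      ≤ 2*q^5+12*q^4+11*q^3+8*q^2+3*q+3 := by
  nlinarith [hq2, sq_nonneg q, sq_nonneg (q-1)]

/-- For two coflags `(ℓ₁,π₁)`, `(ℓ₂,π₂)` of `PG(4,q)` with `ℓ₁ ≠ ℓ₂`, `π₁ ≠ π₂` and a
point `P₀ ≤ π₁ ∩ π₂` on neither line, the number of coflags `(g,τ)` with `P₀ ≤ τ`,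
`P₀ ≰ g` that are non-f-opposite to both is at most `2q⁵+12q⁴+11q³+8q²+3q+3`. -/
theorem statement_11 (q : ℕ) (F : Type) [Field F] [Fintype F]
    (hq : Fintype.card F = q) (l₁ π₁ l₂ π₂ P₀ : Submodule F (Fin 5 → F))
    (h1 : IsCoflag4 l₁ π₁) (h2 : IsCoflag4 l₂ π₂) (hl : l₁ ≠ l₂) (hπ : π₁ ≠ π₂)
    (hP₀ : Module.finrank F ↥P₀ = 1) (hP₀le : P₀ ≤ π₁ ⊓ π₂)
    (hP₀l₁ : ¬ P₀ ≤ l₁) (hP₀l₂ : ¬ P₀ ≤ l₂) :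
    Set.ncard {p : Submodule F (Fin 5 → F) × Submodule F (Fin 5 → F) |
        IsCoflag4 p.1 p.2 ∧ P₀ ≤ p.2 ∧ ¬ P₀ ≤ p.1 ∧
        ¬ FOpp4 p.1 p.2 l₁ π₁ ∧ ¬ FOpp4 p.1 p.2 l₂ π₂} ≤
      2*q^5+12*q^4+11*q^3+8*q^2+3*q+3 := by
  classical
  obtain ⟨hl₁d, hπ₁d, hl₁π₁⟩ := h1
  obtain ⟨hl₂d, hπ₂d, hl₂π₂⟩ := h2
  have hq2 : 2 ≤ q := hq ▸ Fintype.one_lt_card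
  have hP₀π₁ : P₀ ≤ π₁ := hP₀le.trans inf_le_left
  have hP₀π₂ : P₀ ≤ π₂ := hP₀le.trans inf_le_right
  set T : Set (Submodule F (Fin 5 → F)) :=
    {g | Module.finrank F ↥g = 2 ∧ ¬ P₀ ≤ g ∧ g ⊓ π₁ ≠ ⊥ ∧ g ⊓ π₂ ≠ ⊥} with hTdef
  -- Step 1 : the coflag set injects into T
  have hstep1 : {p : Submodule F (Fin 5 → F) × Submodule F (Fin 5 → F) |
        IsCoflag4 p.1 p.2 ∧ P₀ ≤ p.2 ∧ ¬ P₀ ≤ p.1 ∧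
        ¬ FOpp4 p.1 p.2 l₁ π₁ ∧ ¬ FOpp4 p.1 p.2 l₂ π₂}
      ⊆ (fun g => (g, g ⊔ P₀)) '' T := by
    rintro ⟨g, τ⟩ ⟨⟨hg2, hτ3, hgτ⟩, hP₀τ, hP₀g, hnf1, hnf2⟩
    have hginf : g ⊓ P₀ = ⊥ := by
      by_contra hne
      apply hP₀g
      have h1' : 1 ≤ Module.finrank F ↥(g ⊓ P₀) := Submodule.one_le_finrank_iff.2 hne
      have heq := Submodule.eq_of_le_of_finrank_le (inf_le_right : g ⊓ P₀ ≤ P₀)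
        (by rw [hP₀]; exact h1')
      rw [← heq]
      exact inf_le_left
    have hsup3 : Module.finrank F ↥(g ⊔ P₀) = 3 := by
      have hh := Submodule.finrank_sup_add_finrank_inf_eq g P₀
      rw [hginf, finrank_bot, hg2, hP₀] at hh
      omega
    have hτeq : g ⊔ P₀ = τ :=
      Submodule.eq_of_le_of_finrank_le (sup_le hgτ hP₀τ) (by rw [hsup3, hτ3])
    have hmain : ∀ l π : Submodule F (Fin 5 → F), l ≤ π → ¬ P₀ ≤ l → P₀ ≤ π →
        ¬ FOpp4 g τ l π → g ⊓ π ≠ ⊥ := by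
      intro l π hlπ hP₀l hPπ hnf
      by_cases hgπ : g ⊓ π = ⊥
      · exfalso
        have hlτ : l ⊓ τ ≠ ⊥ := fun h => hnf ⟨hgπ, h⟩
        obtain ⟨x, hx, hx0⟩ := (Submodule.ne_bot_iff _).1 hlτ
        obtain ⟨hxl, hxτ⟩ := Submodule.mem_inf.1 hx
        rw [← hτeq] at hxτ
        obtain ⟨y, hyg, z, hzP, hyz⟩ := Submodule.mem_sup.1 hxτ
        have hy0 : y ≠ 0 := by
          rintro rfl
          rw [zero_add] at hyz
          apply hP₀l
          have hsleP : Submodule.span F {x} ≤ P₀ := by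
            rw [Submodule.span_le, Set.singleton_subset_iff]
            rw [← hyz]; exact hzP
          have hPeq : Submodule.span F {x} = P₀ := Submodule.eq_of_le_of_finrank_le hsleP
            (by rw [hP₀, finrank_span_singleton hx0])
          rw [← hPeq, Submodule.span_le, Set.singleton_subset_iff]
          exact hxl
        have hyπ : y ∈ π := by
          have hyx : y = x - z := by rw [← hyz]; abel
          rw [hyx]
          exact Submodule.sub_mem _ (hlπ hxl) (hPπ hzP)
        have hmem : y ∈ g ⊓ π := Submodule.mem_inf.2 ⟨hyg, hyπ⟩
        rw [hgπ] at hmem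
        exact hy0 ((Submodule.mem_bot F).1 hmem)
      · exact hgπ
    refine ⟨g, ⟨hg2, hP₀g, hmain l₁ π₁ hl₁π₁ hP₀l₁ hP₀π₁ hnf1,
      hmain l₂ π₂ hl₂π₂ hP₀l₂ hP₀π₂ hnf2⟩, ?_⟩
    simp [hτeq]
  have hS_le : Set.ncard {p : Submodule F (Fin 5 → F) × Submodule F (Fin 5 → F) |
        IsCoflag4 p.1 p.2 ∧ P₀ ≤ p.2 ∧ ¬ P₀ ≤ p.1 ∧
        ¬ FOpp4 p.1 p.2 l₁ π₁ ∧ ¬ FOpp4 p.1 p.2 l₂ π₂} ≤ T.ncard :=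
    (Set.ncard_le_ncard hstep1 (Set.toFinite _)).trans (Set.ncard_image_le (Set.toFinite _))
  -- Step 2 : bound T
  set W : Submodule F (Fin 5 → F) := π₁ ⊓ π₂ with hWdef
  have hWle : Module.finrank F ↥W ≤ 3 := hπ₁d ▸ Submodule.finrank_mono inf_le_left
  have hWge : 1 ≤ Module.finrank F ↥W := hP₀ ▸ Submodule.finrank_mono hP₀le
  have hWne3 : Module.finrank F ↥W ≠ 3 := by
    intro h3
    have hWeq : W = π₁ := Submodule.eq_of_le_of_finrank_le inf_le_left (by rw [h3, hπ₁d])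
    apply hπ
    exact Submodule.eq_of_le_of_finrank_le (by rw [← hWeq]; exact inf_le_right)
      (by rw [hπ₁d, hπ₂d])
  have hclass : ∀ g ∈ T,
      (∃ P ∈ {P : Submodule F (Fin 5 → F) | Module.finrank F ↥P = 1 ∧ P ≤ π₁},
        ∃ Q ∈ {Q : Submodule F (Fin 5 → F) | Module.finrank F ↥Q = 1 ∧ Q ≤ π₂},
        g = P ⊔ Q) ∨ g ⊓ W ≠ ⊥ := by
    intro g hg
    obtain ⟨hg2, hP₀g, hgπ₁, hgπ₂⟩ := hg
    obtain ⟨y₁, hy₁, hy₁0⟩ := (Submodule.ne_bot_iff _).1 hgπ₁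
    obtain ⟨y₂, hy₂, hy₂0⟩ := (Submodule.ne_bot_iff _).1 hgπ₂
    obtain ⟨hy₁g, hy₁π⟩ := Submodule.mem_inf.1 hy₁
    obtain ⟨hy₂g, hy₂π⟩ := Submodule.mem_inf.1 hy₂
    by_cases hsp : y₂ ∈ Submodule.span F {y₁}
    · right
      obtain ⟨a, ha⟩ := Submodule.mem_span_singleton.1 hsp
      have ha0 : a ≠ 0 := by rintro rfl; rw [zero_smul] at ha; exact hy₂0 ha.symm
      have hy₁π₂ : y₁ ∈ π₂ := by
        have h' : y₁ = a⁻¹ • y₂ := by rw [← ha, smul_smul, inv_mul_cancel₀ ha0, one_smul]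
        rw [h']
        exact π₂.smul_mem _ hy₂π
      intro hbot
      have hmem : y₁ ∈ g ⊓ W :=
        Submodule.mem_inf.2 ⟨hy₁g, Submodule.mem_inf.2 ⟨hy₁π, hy₁π₂⟩⟩
      rw [hbot] at hmem
      exact hy₁0 ((Submodule.mem_bot F).1 hmem)
    · left
      refine ⟨Submodule.span F {y₁}, ⟨finrank_span_singleton hy₁0,
          by rw [Submodule.span_le, Set.singleton_subset_iff]; exact hy₁π⟩,
        Submodule.span F {y₂}, ⟨finrank_span_singleton hy₂0,
          by rw [Submodule.span_le, Set.singleton_subset_iff]; exact hy₂π⟩,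
        line_eq_sup hg2 hy₁g hy₁0 hy₂g hsp⟩
  set T1 : Set (Submodule F (Fin 5 → F)) :=
    {g | ∃ P ∈ {P : Submodule F (Fin 5 → F) | Module.finrank F ↥P = 1 ∧ P ≤ π₁},
      ∃ Q ∈ {Q : Submodule F (Fin 5 → F) | Module.finrank F ↥Q = 1 ∧ Q ≤ π₂},
      g = P ⊔ Q} with hT1def
  set T2 : Set (Submodule F (Fin 5 → F)) := {g | g ∈ T ∧ g ⊓ W ≠ ⊥} with hT2def
  have hTsub : T ⊆ T1 ∪ T2 := fun g hg =>
    (hclass g hg).elim (fun h => Or.inl h) (fun h => Or.inr ⟨hg, h⟩)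
  have hT_le : T.ncard ≤ T1.ncard + T2.ncard :=
    (Set.ncard_le_ncard hTsub (Set.toFinite _)).trans (Set.ncard_union_le _ _)
  have hT1 : T1.ncard ≤ (q^2+q+1) * (q^2+q+1) := by
    have hb1 := points_ncard_le q 3 hq π₁ hπ₁d
    have hb2 := points_ncard_le q 3 hq π₂ hπ₂d
    have hsum : ∑ i ∈ Finset.range 3, q ^ i = q^2+q+1 := by
      rw [Finset.sum_range_succ, Finset.sum_range_succ, Finset.sum_range_succ]
      simp; ring
    rw [hsum] at hb1 hb2
    exact (ncard_sup_pairs_le _ _ _ (fun g hg => hg)).trans (Nat.mul_le_mul hb1 hb2)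
  have hT2 : T2.ncard ≤ (q+1) * (q^4+q^3+q^2+q+1) := by
    rcases (by omega : Module.finrank F ↥W = 1 ∨ Module.finrank F ↥W = 2) with hd1 | hd2
    · have hWP : P₀ = W := Submodule.eq_of_le_of_finrank_le hP₀le (by rw [hP₀, hd1])
      have hempty : T2 = ∅ := by
        ext g
        simp only [hT2def, Set.mem_setOf_eq, Set.mem_empty_iff_false, iff_false, not_and]
        rintro ⟨hg2, hP₀g, -, -⟩ hne
        apply hP₀g
        obtain ⟨y, hy, hy0⟩ := (Submodule.ne_bot_iff _).1 hne
        obtain ⟨hyg, hyW⟩ := Submodule.mem_inf.1 hy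
        have hsle : Submodule.span F {y} ≤ P₀ := by
          rw [hWP, Submodule.span_le, Set.singleton_subset_iff]; exact hyW
        have heq : Submodule.span F {y} = P₀ := Submodule.eq_of_le_of_finrank_le hsle
          (by rw [hP₀, finrank_span_singleton hy0])
        rw [← heq, Submodule.span_le, Set.singleton_subset_iff]
        exact hyg
      rw [hempty, Set.ncard_empty]
      positivity
    · have hdec : ∀ g ∈ T2,
          ∃ P ∈ {P : Submodule F (Fin 5 → F) | Module.finrank F ↥P = 1 ∧ P ≤ W},
          ∃ Q ∈ {Q : Submodule F (Fin 5 → F) | Module.finrank F ↥Q = 1 ∧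
            Q ≤ (⊤ : Submodule F (Fin 5 → F))}, g = P ⊔ Q := by
        rintro g ⟨⟨hg2, -, -, -⟩, hne⟩
        obtain ⟨y, hy, hy0⟩ := (Submodule.ne_bot_iff _).1 hne
        obtain ⟨hyg, hyW⟩ := Submodule.mem_inf.1 hy
        obtain ⟨z, hzg, hz⟩ := exists_second_point hg2 hyg
        exact ⟨Submodule.span F {y}, ⟨finrank_span_singleton hy0,
            by rw [Submodule.span_le, Set.singleton_subset_iff]; exact hyW⟩,
          Submodule.span F {z}, ⟨finrank_span_singleton
            (fun h => hz (h ▸ Submodule.zero_mem _)), le_top⟩,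
          line_eq_sup hg2 hyg hy0 hzg hz⟩
      have hPW := points_ncard_le q 2 hq W hd2
      have hPT := points_ncard_le q 5 hq ⊤
        (by rw [finrank_top]; exact Module.finrank_fin_fun F)
      have hs2 : ∑ i ∈ Finset.range 2, q ^ i = q+1 := by
        rw [Finset.sum_range_succ]; simp; ring
      have hs5 : ∑ i ∈ Finset.range 5, q ^ i = q^4+q^3+q^2+q+1 := by
        rw [Finset.sum_range_succ, Finset.sum_range_succ, Finset.sum_range_succ,
          Finset.sum_range_succ]
        simp; ring
      rw [hs2] at hPW
      rw [hs5] at hPT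
      exact (ncard_sup_pairs_le _ _ _ hdec).trans (Nat.mul_le_mul hPW hPT)
  calc Set.ncard {p : Submodule F (Fin 5 → F) × Submodule F (Fin 5 → F) |
        IsCoflag4 p.1 p.2 ∧ P₀ ≤ p.2 ∧ ¬ P₀ ≤ p.1 ∧
        ¬ FOpp4 p.1 p.2 l₁ π₁ ∧ ¬ FOpp4 p.1 p.2 l₂ π₂} ≤ T.ncard := hS_le
    _ ≤ T1.ncard + T2.ncard := hT_le
    _ ≤ (q^2+q+1) * (q^2+q+1) + (q+1) * (q^4+q^3+q^2+q+1) := Nat.add_le_add hT1 hT2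
    _ ≤ 2*q^5+12*q^4+11*q^3+8*q^2+3*q+3 := final_arith hq2
end

section
/- Let M be an independent set of the Kneser graph Γ₄ on chambers of PG(4,q). Suppose (ℓ₁,π₁,S₁) and (ℓ₂,π₂,S₂) are incident line–plane–solid triples (ℓᵢ ≤ πᵢ ≤ Sᵢ) such that for each i = 1,2 all q+1 chambers (P,ℓᵢ,πᵢ,Sᵢ) with P a point of ℓᵢ belong to M. Then the coflags (ℓ₁,π₁) and (ℓ₂,π₂) are not f-opposite. -/
private lemma exists_pt_avoid {F : Type} [Field F]
    (l S πS : Submodule F (Fin 5 → F))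
    (hl : Module.finrank F ↥l = 2) (hπ : Module.finrank F ↥πS = 3)
    (hS : Module.finrank F ↥S = 4) (hπle : πS ≤ S) (hbot : l ⊓ πS = ⊥) :
    ∃ P : Submodule F (Fin 5 → F), Module.finrank F ↥P = 1 ∧ P ≤ l ∧ P ⊓ S = ⊥ := by
  have hnle : ¬ l ≤ S := by
    intro hle
    have hsup : l ⊔ πS ≤ S := sup_le hle hπle
    have h1 : Module.finrank F ↥(l ⊔ πS) ≤ 4 := hS ▸ Submodule.finrank_mono hsup
    have h2 := Submodule.finrank_sup_add_finrank_inf_eq l πS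
    rw [hbot, hl, hπ] at h2
    simp [finrank_bot] at h2
    omega
  obtain ⟨v, hvl, hvS⟩ := SetLike.not_le_iff_exists.mp hnle
  have hv0 : v ≠ 0 := fun h => hvS (h ▸ S.zero_mem)
  refine ⟨Submodule.span F {v}, finrank_span_singleton hv0,
    Submodule.span_le.mpr (by simpa using hvl), ?_⟩
  rw [eq_bot_iff]
  rintro x ⟨hx1, hx2⟩
  obtain ⟨c, rfl⟩ := Submodule.mem_span_singleton.mp hx1
  rcases eq_or_ne c 0 with rfl | hc
  · simp
  · exact absurd (by simpa [smul_smul, inv_mul_cancel₀ hc] using S.smul_mem c⁻¹ hx2) hvS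

/-- If for each of two incident line–plane–solid triples all `q+1` chambers through the
respective triple belong to an independent set `M` of `Γ₄`, then the two coflags are
not f-opposite. -/
theorem statement_13 (q : ℕ) (F : Type) [Field F] [Fintype F]
    (hq : Fintype.card F = q) (M : Set (Chamber4 F)) (hM : Indep4 M)
    (l₁ π₁ S₁ l₂ π₂ S₂ : Submodule F (Fin 5 → F))
    (hl₁ : Module.finrank F ↥l₁ = 2) (hπ₁ : Module.finrank F ↥π₁ = 3)
    (hS₁ : Module.finrank F ↥S₁ = 4) (hle₁ : l₁ ≤ π₁) (hle₁' : π₁ ≤ S₁)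
    (hl₂ : Module.finrank F ↥l₂ = 2) (hπ₂ : Module.finrank F ↥π₂ = 3)
    (hS₂ : Module.finrank F ↥S₂ = 4) (hle₂ : l₂ ≤ π₂) (hle₂' : π₂ ≤ S₂)
    (hch₁ : ∀ P : Submodule F (Fin 5 → F), Module.finrank F ↥P = 1 → P ≤ l₁ →
      ∃ C ∈ M, C.pt = P ∧ C.line = l₁ ∧ C.plane = π₁ ∧ C.solid = S₁)
    (hch₂ : ∀ P : Submodule F (Fin 5 → F), Module.finrank F ↥P = 1 → P ≤ l₂ →
      ∃ C ∈ M, C.pt = P ∧ C.line = l₂ ∧ C.plane = π₂ ∧ C.solid = S₂) :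
    ¬ FOpp4 l₁ π₁ l₂ π₂ := by
  rintro ⟨h12, h21⟩
  obtain ⟨P₁, hP₁d, hP₁l, hP₁S⟩ := exists_pt_avoid l₁ S₂ π₂ hl₁ hπ₂ hS₂ hle₂' h12
  obtain ⟨P₂, hP₂d, hP₂l, hP₂S⟩ := exists_pt_avoid l₂ S₁ π₁ hl₂ hπ₁ hS₁ hle₁' h21
  obtain ⟨C₁, hC₁M, hC₁p, hC₁l, hC₁π, hC₁S⟩ := hch₁ P₁ hP₁d hP₁l
  obtain ⟨C₂, hC₂M, hC₂p, hC₂l, hC₂π, hC₂S⟩ := hch₂ P₂ hP₂d hP₂l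
  exact hM C₁ hC₁M C₂ hC₂M ⟨by rw [hC₁p, hC₂S]; exact hP₁S,
    by rw [hC₂p, hC₁S]; exact hP₂S, by rw [hC₁l, hC₂π]; exact h12,
    by rw [hC₂l, hC₁π]; exact h21⟩
end

section
/- Let M be a maximal independent set of the Kneser graph Γ₄ on chambers of PG(4,q) for which Case A holds. Let σ be a plane and let Y be the set of all chambers (P,ℓ,π,S) of M such that the coflag (ℓ,π) has M-weight at most two and P ≤ σ. Then |Y| ≤ 6q⁵+12q⁴+8q³+4q². -/
/-- Case B for `M`: the number of `M`-coflags of `M`-weight `(q+1)²` is at most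
`4q⁴+9q³+4q²+q+1`. -/
def CaseB (q : ℕ) {F : Type} [Field F] (M : Set (Chamber4 F)) : Prop :=
  Set.ncard {p : Submodule F (Fin 5 → F) × Submodule F (Fin 5 → F) |
      IsMCoflag M p.1 p.2 ∧ weight4 M p.1 p.2 = (q+1)^2} ≤ 4*q^4+9*q^3+4*q^2+q+1

/-- Case A1 for `M` with witness point `P₀`: every coflag whose line contains `P₀` has
`M`-weight `(q+1)²`, and every `M`-coflag of `M`-weight `< (q+1)²` has its plane
containing `P₀` and its line not containing `P₀`. -/
def CaseA1 (q : ℕ) {F : Type} [Field F] (M : Set (Chamber4 F))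
    (P₀ : Submodule F (Fin 5 → F)) : Prop :=
  Module.finrank F ↥P₀ = 1 ∧
  (∀ l π : Submodule F (Fin 5 → F), IsCoflag4 l π → P₀ ≤ l → weight4 M l π = (q+1)^2) ∧
  (∀ l π : Submodule F (Fin 5 → F), IsMCoflag M l π → weight4 M l π < (q+1)^2 →
    P₀ ≤ π ∧ ¬ P₀ ≤ l)

/-- Case A2 for `M` with witness solid `S₀`: every coflag whose plane lies in `S₀` has
`M`-weight `(q+1)²`, and every `M`-coflag of `M`-weight `< (q+1)²` has its line
contained in `S₀` and its plane not contained in `S₀`. -/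
def CaseA2 (q : ℕ) {F : Type} [Field F] (M : Set (Chamber4 F))
    (S₀ : Submodule F (Fin 5 → F)) : Prop :=
  Module.finrank F ↥S₀ = 4 ∧
  (∀ l π : Submodule F (Fin 5 → F), IsCoflag4 l π → π ≤ S₀ → weight4 M l π = (q+1)^2) ∧
  (∀ l π : Submodule F (Fin 5 → F), IsMCoflag M l π → weight4 M l π < (q+1)^2 →
    l ≤ S₀ ∧ ¬ π ≤ S₀)

/-- Case A for `M`. -/
def CaseA (q : ℕ) {F : Type} [Field F] (M : Set (Chamber4 F)) : Prop :=
  (∃ P₀, CaseA1 q M P₀) ∨ (∃ S₀, CaseA2 q M S₀)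


/-!
Every chamber of `Y` has a coflag of weight at most two, so `|Y|` is at most twice the number of
coflags that can occur, and these are counted by choosing their subspaces one after the other.
As `2 < (q+1)²`, Case A constrains these coflags. In Case A1 the plane is the span of the line
and `P₀`, so the point and the line determine the chamber up to two choices. In Case A2 the line
lies in `S₀` and the plane does not, so the plane meets `S₀` exactly in the line. If `σ ≰ S₀`,
the point lies on the line `σ ⊓ S₀`. If `σ ≤ S₀`, the chambers whose solid contains `σ` have
their line in `σ`. For the others we double count pairs. A chamber meets few others in a point of
its line. Two chambers whose lines are skew can only fail to be opposite because the point of one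
lies in the solid of the other, and that solid meets `σ` in a line.
-/

open Module Submodule Set

section DoubleCounting

variable {α β : Type*} [Finite α] [Finite β]

theorem ncard_eq_ncard_mul_of_mapsTo {s : Set α} {t : Set β} {f : α → β} (hf : MapsTo f s t)
    {k : ℕ} (h : ∀ b ∈ t, {a ∈ s | f a = b}.ncard = k) : s.ncard = t.ncard * k := by
  classical
  obtain ⟨s, rfl⟩ := s.toFinite.exists_finset_coe
  obtain ⟨t, rfl⟩ := t.toFinite.exists_finset_coe
  have h' : ∀ b ∈ t, (s.filter (f · = b)).card = k := fun b hb => by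
    rw [← Set.ncard_coe_finset, Finset.coe_filter]
    exact h b hb
  rw [Set.ncard_coe_finset, Set.ncard_coe_finset, Finset.card_eq_sum_card_fiberwise hf,
    Finset.sum_congr rfl h', Finset.sum_const, smul_eq_mul]

theorem ncard_le_mul_ncard_of_mapsTo {s : Set α} {t : Set β} {f : α → β} (hf : MapsTo f s t)
    {k : ℕ} (h : ∀ b ∈ t, {a ∈ s | f a = b}.ncard ≤ k) : s.ncard ≤ k * t.ncard := by
  classical
  obtain ⟨s, rfl⟩ := s.toFinite.exists_finset_coe
  obtain ⟨t, rfl⟩ := t.toFinite.exists_finset_coe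
  rw [Set.ncard_coe_finset, Set.ncard_coe_finset]
  refine Finset.card_le_mul_card_image_of_maps_to hf k fun b hb => ?_
  rw [← Set.ncard_coe_finset, Finset.coe_filter]
  exact h b hb

theorem ncard_prod_le_mul {s : Set (α × β)} {t : Set α} {u : α → Set β}
    (hs : ∀ x ∈ s, x.1 ∈ t ∧ x.2 ∈ u x.1) {m : ℕ} (hu : ∀ a ∈ t, (u a).ncard ≤ m) :
    s.ncard ≤ t.ncard * m := by
  rw [mul_comm]
  refine ncard_le_mul_ncard_of_mapsTo (f := Prod.fst) (fun x hx => (hs x hx).1) fun a ha => ?_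
  refine le_trans ?_ (hu a ha)
  refine ncard_le_ncard_of_injOn Prod.snd ?_ ?_
  · rintro x ⟨hx, rfl⟩
    exact (hs x hx).2
  · rintro x ⟨-, hx⟩ y ⟨-, hy⟩ hxy
    exact Prod.ext (hx.trans hy.symm) hxy

theorem ncard_mul_eq_ncard_mul {s : Set α} {t : Set β} (r : α → β → Prop) {m n : ℕ}
    (hs : ∀ a ∈ s, {b ∈ t | r a b}.ncard = m) (ht : ∀ b ∈ t, {a ∈ s | r a b}.ncard = n) :
    s.ncard * m = t.ncard * n := by
  classical
  obtain ⟨s, rfl⟩ := s.toFinite.exists_finset_coe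
  obtain ⟨t, rfl⟩ := t.toFinite.exists_finset_coe
  rw [Set.ncard_coe_finset, Set.ncard_coe_finset]
  refine Finset.card_mul_eq_card_mul r (fun a ha => ?_) fun b hb => ?_
  · rw [Finset.bipartiteAbove, ← Set.ncard_coe_finset, Finset.coe_filter]
    exact hs a ha
  · rw [Finset.bipartiteBelow, ← Set.ncard_coe_finset, Finset.coe_filter]
    exact ht b hb

theorem ncard_le_add_two_mul_of_forall_or {s : Set α} (r₁ r₂ : α → α → Prop) {k₁ k₂ : ℕ}
    (h : ∀ a ∈ s, ∀ b ∈ s, r₁ a b ∨ r₂ a b ∨ r₂ b a)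
    (h₁ : ∀ a ∈ s, {b ∈ s | r₁ a b}.ncard ≤ k₁) (h₂ : ∀ b ∈ s, {a ∈ s | r₂ a b}.ncard ≤ k₂) :
    s.ncard ≤ k₁ + 2 * k₂ := by
  classical
  obtain ⟨s, rfl⟩ := s.toFinite.exists_finset_coe
  have h₁' : ∀ a ∈ s, (s.filter (r₁ a)).card ≤ k₁ := fun a ha => by
    rw [← Set.ncard_coe_finset, Finset.coe_filter]; exact h₁ a ha
  have h₂' : ∀ b ∈ s, (s.filter (r₂ · b)).card ≤ k₂ := fun b hb => by
    rw [← Set.ncard_coe_finset, Finset.coe_filter]; exact h₂ b hb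
  rw [Set.ncard_coe_finset]
  rcases s.eq_empty_or_nonempty with rfl | hne
  · simp
  refine Nat.le_of_mul_le_mul_left ?_ hne.card_pos
  calc s.card * s.card = ∑ a ∈ s, ∑ b ∈ s, 1 := by simp
    _ ≤ ∑ a ∈ s, ∑ b ∈ s,
        ((if r₁ a b then 1 else 0) + (if r₂ a b then 1 else 0) + (if r₂ b a then 1 else 0)) :=
      Finset.sum_le_sum fun a ha => Finset.sum_le_sum fun b hb => by
        rcases h a ha b hb with h | h | h <;> simp only [h, if_true] <;> omega
    _ = ∑ a ∈ s, (s.filter (r₁ a)).card + ∑ b ∈ s, (s.filter (r₂ · b)).card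
        + ∑ a ∈ s, (s.filter (r₂ · a)).card := by
      simp only [Finset.sum_add_distrib, Finset.card_filter]
      rw [Finset.sum_comm (f := fun a b => if r₂ a b then 1 else 0)]
    _ ≤ ∑ _a ∈ s, k₁ + ∑ _b ∈ s, k₂ + ∑ _a ∈ s, k₂ := by
      gcongr with a ha b hb c hc
      exacts [h₁' a ha, h₂' b hb, h₂' c hc]
    _ = s.card * (k₁ + 2 * k₂) := by simp only [Finset.sum_const, smul_eq_mul]; ring

end DoubleCounting

instance Submodule.finite_of_finite {R M : Type*} [Semiring R] [AddCommMonoid M] [Module R M]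
    [Finite M] : Finite (Submodule R M) :=
  Finite.of_injective _ SetLike.coe_injective

section SubspaceCounting

variable {F V : Type*} [Field F] [AddCommGroup V] [Module F V]

theorem Submodule.exists_le_finrank_eq_one {W : Submodule F V} (h : W ≠ ⊥) :
    ∃ P : Submodule F V, P ≤ W ∧ finrank F P = 1 := by
  obtain ⟨v, hvW, hv⟩ := exists_mem_ne_zero_of_ne_bot h
  exact ⟨span F {v}, (span_singleton_le_iff_mem _ _).2 hvW, finrank_span_singleton hv⟩

variable [FiniteDimensional F V]

theorem Submodule.covBy_of_finrank_eq_succ {p X : Submodule F V} (hpX : p ≤ X)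
    (hX : finrank F X = finrank F p + 1) : p ⋖ X := by
  refine ⟨lt_of_le_of_ne hpX fun h => by rw [h] at hX; omega, fun Y hpY hYX => ?_⟩
  have := finrank_lt_finrank_of_lt hpY
  have := finrank_lt_finrank_of_lt hYX
  omega

theorem Submodule.finrank_add_finrank_le_finrank_inf {A B W : Submodule F V} (hA : A ≤ W)
    (hB : B ≤ W) : finrank F A + finrank F B ≤ finrank F W + finrank F ↥(A ⊓ B) := by
  rw [← finrank_sup_add_finrank_inf_eq]
  have := finrank_mono (sup_le hA hB)
  omega

theorem Submodule.le_of_finrank_eq_one {P W : Submodule F V} (hP : finrank F P = 1)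
    (h : P ⊓ W ≠ ⊥) : P ≤ W :=
  ((covBy_of_finrank_eq_succ bot_le (by rw [hP, finrank_bot])).eq_or_eq bot_le
    inf_le_left).resolve_left h ▸ inf_le_right

variable [Fintype F] {q : ℕ}

theorem ncard_coe_submodule (hq : Fintype.card F = q) (W : Submodule F V) :
    (W : Set V).ncard = q ^ finrank F W := by
  rw [← Nat.card_coe_set_eq, SetLike.coe_sort_coe, Module.natCard_eq_pow_finrank (K := F),
    Nat.card_eq_fintype_card, hq]

variable [Finite V]

theorem ncard_diff_submodule (hq : Fintype.card F = q) {A B : Submodule F V} (h : A ≤ B) :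
    ((B : Set V) \ A).ncard = q ^ finrank F B - q ^ finrank F A := by
  rw [Set.ncard_sdiff h, ncard_coe_submodule hq, ncard_coe_submodule hq]

/-- Each `X` is reached from exactly the vectors of `X \ p` by `v ↦ p ⊔ span {v}`, since
`X ⊓ A = p`. -/
theorem ncard_covers_not_le_mul (hq : Fintype.card F = q) {p A B : Submodule F V}
    (hpA : p ≤ A) (hAB : A ≤ B) :
    {X : Submodule F V | p ≤ X ∧ X ≤ B ∧ ¬X ≤ A ∧ finrank F X = finrank F p + 1}.ncard *
      (q ^ (finrank F p + 1) - q ^ finrank F p) = q ^ finrank F B - q ^ finrank F A := by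
  rw [← ncard_diff_submodule hq hAB]
  refine (ncard_eq_ncard_mul_of_mapsTo (f := fun v => p ⊔ span F {v}) ?_ ?_).symm
  · rintro v ⟨hvB, hvA⟩
    exact ⟨le_sup_left, sup_le (hpA.trans hAB) ((span_singleton_le_iff_mem _ _).2 hvB),
      fun h => hvA (h (mem_sup_right (mem_span_singleton_self v))),
      finrank_sup_span_singleton fun h => hvA (hpA h)⟩
  · rintro X ⟨hpX, hXB, hXA, hX⟩
    have hcov := covBy_of_finrank_eq_succ hpX hX
    have hXA : X ⊓ A = p :=
      ((hcov.eq_or_eq (le_inf hpX hpA) inf_le_left).resolve_right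
        fun h => hXA (h ▸ inf_le_right))
    rw [← hX, ← ncard_diff_submodule hq hpX]
    congr 1
    ext v
    simp only [Set.mem_ofPred_eq, Set.mem_sdiff, SetLike.mem_coe]
    constructor
    · rintro ⟨⟨-, hvA⟩, rfl⟩
      exact ⟨mem_sup_right (mem_span_singleton_self v), fun h => hvA (hpA h)⟩
    · rintro ⟨hvX, hvp⟩
      refine ⟨⟨hXB hvX, fun hvA => hvp (hXA ▸ ⟨hvX, hvA⟩)⟩, ?_⟩
      exact (hcov.eq_or_eq le_sup_left
        (sup_le hpX ((span_singleton_le_iff_mem _ _).2 hvX))).resolve_left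
        fun h => hvp (h ▸ mem_sup_right (mem_span_singleton_self v))

theorem ncard_covers_not_le_of_finrank_eq_succ (hq : Fintype.card F = q)
    {p A B : Submodule F V} (hpA : p ≤ A) (hAB : A ≤ B) (hB : finrank F B = finrank F A + 1) :
    {X : Submodule F V | p ≤ X ∧ X ≤ B ∧ ¬X ≤ A ∧ finrank F X = finrank F p + 1}.ncard =
      q ^ (finrank F A - finrank F p) := by
  have hq1 : 1 < q := hq ▸ Fintype.one_lt_card
  have h := ncard_covers_not_le_mul hq hpA hAB
  obtain ⟨d, hd⟩ := Nat.exists_eq_add_of_le (Submodule.finrank_mono hpA)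
  rw [hB, hd] at h
  rw [hd, Nat.add_sub_cancel_left]
  refine Nat.eq_of_mul_eq_mul_right (Nat.sub_pos_of_lt (Nat.pow_lt_pow_right hq1 (by omega)))
    (h.trans ?_)
  rw [Nat.mul_sub, ← pow_add, ← pow_add]
  ring_nf

theorem ncard_covers_eq_geom_sum (hq : Fintype.card F = q) {p B : Submodule F V} (hpB : p ≤ B) :
    {X : Submodule F V | p ≤ X ∧ X ≤ B ∧ finrank F X = finrank F p + 1}.ncard =
      ∑ i ∈ Finset.range (finrank F B - finrank F p), q ^ i := by
  have hq1 : 1 < q := hq ▸ Fintype.one_lt_card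
  have h := ncard_covers_not_le_mul hq le_rfl hpB
  have hset : {X : Submodule F V | p ≤ X ∧ X ≤ B ∧ ¬X ≤ p ∧ finrank F X = finrank F p + 1} =
      {X : Submodule F V | p ≤ X ∧ X ≤ B ∧ finrank F X = finrank F p + 1} := by
    ext X
    refine ⟨fun ⟨h1, h2, _, h4⟩ => ⟨h1, h2, h4⟩, fun ⟨h1, h2, h4⟩ => ⟨h1, h2, fun hXp => ?_, h4⟩⟩
    have := finrank_mono hXp
    omega
  rw [hset] at h
  obtain ⟨d, hd⟩ := Nat.exists_eq_add_of_le (Submodule.finrank_mono hpB)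
  rw [hd, Nat.add_sub_cancel_left]
  rw [hd] at h
  set k := finrank F p
  set n := {X : Submodule F V | p ≤ X ∧ X ≤ B ∧ finrank F X = k + 1}.ncard
  have hpos : (q : ℤ) ^ k * (q - 1) ≠ 0 := by
    have : (1 : ℤ) < q := by exact_mod_cast hq1
    positivity
  have hz : (n : ℤ) * (q ^ k * (q - 1)) = (∑ i ∈ Finset.range d, (q : ℤ) ^ i) *
      (q ^ k * (q - 1)) := by
    have := congrArg (Nat.cast (R := ℤ)) h
    push_cast [Nat.cast_sub (Nat.pow_le_pow_right hq1.le (Nat.le_add_right k 1)),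
      Nat.cast_sub (Nat.pow_le_pow_right hq1.le (Nat.le_add_right k d))] at this
    linear_combination this - (q : ℤ) ^ k * geom_sum_mul (q : ℤ) d
  exact_mod_cast mul_right_cancel₀ hpos hz

theorem ncard_points_eq_geom_sum (hq : Fintype.card F = q) (B : Submodule F V) :
    {X : Submodule F V | X ≤ B ∧ finrank F X = 1}.ncard =
      ∑ i ∈ Finset.range (finrank F B), q ^ i := by
  simpa only [bot_le, true_and, finrank_bot, zero_add, Nat.sub_zero] using
    ncard_covers_eq_geom_sum hq (bot_le : ⊥ ≤ B)

theorem ncard_lines_eq_ncard_points (hq : Fintype.card F = q) {σ : Submodule F V}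
    (hσ : finrank F σ = 3) :
    {l : Submodule F V | l ≤ σ ∧ finrank F l = 2}.ncard =
      {P : Submodule F V | P ≤ σ ∧ finrank F P = 1}.ncard := by
  refine Nat.eq_of_mul_eq_mul_right (m := q + 1) (by omega)
    (ncard_mul_eq_ncard_mul (fun l P => P ≤ l) (fun l hl => ?_) fun P hP => ?_)
  · have h := ncard_points_eq_geom_sum hq l
    rw [hl.2] at h
    norm_num at h
    rw [← h]
    congr 1
    ext P
    exact ⟨fun h => ⟨h.2, h.1.2⟩, fun h => ⟨⟨h.1.trans hl.1, h.2⟩, h.1⟩⟩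
  · have h := ncard_covers_eq_geom_sum hq hP.1
    rw [hσ, hP.2] at h
    norm_num at h
    rw [← h]
    congr 1
    ext l
    simp only [Set.mem_ofPred_eq]
    tauto

end SubspaceCounting

section SmallCounts

variable {F V : Type*} [Field F] [AddCommGroup V] [Module F V] [Finite V] [Fintype F] {q : ℕ}

theorem ncard_points_of_finrank_eq_two (hq : Fintype.card F = q) {W : Submodule F V}
    (hW : finrank F W = 2) : {P : Submodule F V | P ≤ W ∧ finrank F P = 1}.ncard = q + 1 := by
  rw [ncard_points_eq_geom_sum hq, hW]
  simp [Finset.sum_range_succ, add_comm]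

theorem ncard_points_of_finrank_eq_three (hq : Fintype.card F = q) {W : Submodule F V}
    (hW : finrank F W = 3) :
    {P : Submodule F V | P ≤ W ∧ finrank F P = 1}.ncard = q ^ 2 + q + 1 := by
  rw [ncard_points_eq_geom_sum hq, hW]
  simp only [Finset.sum_range_succ, Finset.range_one, Finset.sum_singleton, pow_zero, pow_one]
  ring

theorem ncard_lines_through_of_finrank_eq_four (hq : Fintype.card F = q) {P S : Submodule F V}
    (hP : finrank F P = 1) (hPS : P ≤ S) (hS : finrank F S = 4) :
    {l : Submodule F V | P ≤ l ∧ l ≤ S ∧ finrank F l = 2}.ncard = q ^ 2 + q + 1 := by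
  have h := ncard_covers_eq_geom_sum hq hPS
  rw [hS, hP] at h
  norm_num [Finset.sum_range_succ] at h
  rw [h]
  ring

theorem ncard_lines_through_of_finrank_eq_five (hq : Fintype.card F = q)
    (hV : finrank F V = 5) {P : Submodule F V} (hP : finrank F P = 1) :
    {l : Submodule F V | P ≤ l ∧ finrank F l = 2}.ncard = q ^ 3 + q ^ 2 + q + 1 := by
  have h := ncard_covers_eq_geom_sum hq (le_top : P ≤ ⊤)
  rw [finrank_top, hV, hP] at h
  norm_num [Finset.sum_range_succ] at h
  rw [h]
  ring

theorem ncard_covers_not_le_hyperplane (hq : Fintype.card F = q) {p S : Submodule F V}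
    (hpS : p ≤ S) (hS : finrank F S + 1 = finrank F V) :
    {X : Submodule F V | p ≤ X ∧ ¬X ≤ S ∧ finrank F X = finrank F p + 1}.ncard =
      q ^ (finrank F S - finrank F p) := by
  rw [← ncard_covers_not_le_of_finrank_eq_succ hq hpS le_top (by rw [finrank_top, hS])]
  simp only [le_top, true_and]

/-- Lines through `P` in `S` skew to `l` avoid the plane `l ⊔ P`, and there are `q²` such lines
when `P ≰ l`. -/
theorem ncard_lines_through_inf_eq_bot_le (hq : Fintype.card F = q) {P l S : Submodule F V}
    (hP : finrank F P = 1) (hl : finrank F l = 2) (hS : finrank F S = 4) (hPS : P ≤ S)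
    (hlS : l ≤ S) :
    {b : Submodule F V | P ≤ b ∧ b ≤ S ∧ finrank F b = 2 ∧ b ⊓ l = ⊥}.ncard ≤ q ^ 2 := by
  by_cases hPl : P ≤ l
  · refine ((ncard_eq_zero (s := {b | _})).2 (eq_empty_of_forall_notMem ?_)).trans_le
      (Nat.zero_le _)
    rintro b ⟨hPb, -, -, hbl⟩
    have := finrank_mono (le_inf hPb hPl)
    rw [hbl, finrank_bot] at this
    omega
  have hPl' : P ⊓ l = ⊥ := by
    by_contra h
    exact hPl (le_of_finrank_eq_one hP h)
  have hlP : finrank F ↥(l ⊔ P) = 3 := by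
    have := finrank_sup_add_finrank_inf_eq l P
    rw [inf_comm, hPl', finrank_bot, hl, hP] at this
    omega
  have h := ncard_covers_not_le_of_finrank_eq_succ hq (le_sup_right : P ≤ l ⊔ P)
    (sup_le hlS hPS) (by rw [hS, hlP])
  rw [hlP, hP] at h
  norm_num at h
  rw [← h]
  refine ncard_le_ncard fun b ⟨hPb, hbS, hb, hbl⟩ => ⟨hPb, hbS, fun hble => ?_, hb⟩
  have := finrank_add_finrank_le_finrank_inf hble (le_sup_left : l ≤ l ⊔ P)
  rw [hb, hl, hlP, hbl, finrank_bot] at this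
  omega

end SmallCounts

section Chambers

variable {F : Type} [Field F]

local notation "Sub₅" => Submodule F (Fin 5 → F)

theorem Chamber4.line_covBy_plane (C : Chamber4 F) : C.line ⋖ C.plane :=
  covBy_of_finrank_eq_succ C.le_line_plane (by rw [C.dim_line, C.dim_plane])

theorem Chamber4.plane_inf_eq_line {C : Chamber4 F} {S : Sub₅} (hlS : C.line ≤ S)
    (hπS : ¬C.plane ≤ S) : C.plane ⊓ S = C.line :=
  (C.line_covBy_plane.eq_or_eq (le_inf C.le_line_plane hlS) inf_le_left).resolve_right
    fun h => hπS (h ▸ inf_le_right)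

/-- Lines of `S` that are skew are also skew to the other chamber's plane, so only the
point–solid conditions can prevent `C` and `D` from being opposite. -/
theorem Chamber4.pt_le_solid_or_of_not_opp {C D : Chamber4 F} {S : Sub₅} (hCS : C.line ≤ S)
    (hDS : D.line ≤ S) (hCπ : ¬C.plane ≤ S) (hDπ : ¬D.plane ≤ S) (hCD : C.line ⊓ D.line = ⊥)
    (h : ¬Opp4 C D) : C.pt ≤ D.solid ∨ D.pt ≤ C.solid := by
  have hCD' : C.line ⊓ D.plane = ⊥ := by
    rw [← inf_eq_left.2 hCS, inf_assoc, inf_comm S, plane_inf_eq_line hDS hDπ, hCD]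
  have hDC' : D.line ⊓ C.plane = ⊥ := by
    rw [← inf_eq_left.2 hDS, inf_assoc, inf_comm S, plane_inf_eq_line hCS hCπ, inf_comm, hCD]
  refine or_iff_not_imp_left.2 fun hC => by_contra fun hD => h ⟨?_, ?_, hCD', hDC'⟩
  · exact by_contra fun h' => hC (le_of_finrank_eq_one C.dim_pt h')
  · exact by_contra fun h' => hD (le_of_finrank_eq_one D.dim_pt h')

theorem finrank_inf_eq_two_of_not_le {σ S : Sub₅} (hσ : finrank F σ = 3)
    (hS : finrank F S = 4) (h : ¬σ ≤ S) : finrank F ↥(σ ⊓ S) = 2 := by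
  have := finrank_add_finrank_le_finrank_inf (le_top : σ ≤ ⊤) (le_top : S ≤ ⊤)
  rw [finrank_top, finrank_fin_fun] at this
  have := finrank_lt_finrank_of_lt (inf_lt_left.2 h)
  omega

variable [Fintype F] {q : ℕ}

instance : Finite (Chamber4 F) :=
  Finite.of_injective (fun C : Chamber4 F => (C.pt, C.line, C.plane, C.solid)) fun C D h => by
    cases C; cases D; simp_all

theorem ncard_planes_not_le_solid (hq : Fintype.card F = q) {l S : Sub₅}
    (hl : finrank F l = 2) (hS : finrank F S = 4) (hlS : l ≤ S) :
    {π : Sub₅ | l ≤ π ∧ ¬π ≤ S ∧ finrank F π = 3}.ncard = q ^ 2 := by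
  have h := ncard_covers_not_le_hyperplane hq hlS (by rw [hS, finrank_fin_fun])
  rw [hS, hl] at h
  exact h

theorem ncard_le_two_mul_of_exists_coflag {β : Type*} [Finite β] {M s : Set (Chamber4 F)}
    (hs : ∀ C ∈ s, C ∈ M ∧ weight4 M C.line C.plane ≤ 2) {T : Set β} (g : β → Sub₅ × Sub₅)
    (hT : ∀ C ∈ s, ∃ x ∈ T, g x = (C.line, C.plane)) : s.ncard ≤ 2 * T.ncard := by
  calc s.ncard ≤ 2 * (g '' T ∩ {c | weight4 M c.1 c.2 ≤ 2}).ncard := by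
        refine ncard_le_mul_ncard_of_mapsTo (f := fun C => (C.line, C.plane))
          (fun C hC => ?_) fun c hc => le_trans (ncard_le_ncard ?_) hc.2
        · exact ⟨hT C hC, (hs C hC).2⟩
        · rintro C ⟨hCs, rfl⟩
          exact ⟨(hs C hCs).1, rfl, rfl⟩
    _ ≤ 2 * T.ncard := by
        gcongr
        exact (ncard_inter_le_ncard_left _ _).trans (ncard_image_le T.toFinite)

theorem ncard_le_of_lines_through_points (hq : Fintype.card F = q) {M s : Set (Chamber4 F)}
    (hs : ∀ C ∈ s, C ∈ M ∧ weight4 M C.line C.plane ≤ 2) {S : Sub₅} (hS : finrank F S = 4)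
    (hπS : ∀ C ∈ s, ¬C.plane ≤ S) {t : Set Sub₅} {u : Sub₅ → Set Sub₅} {n m : ℕ}
    (ht : t.ncard ≤ n) (hu : ∀ P ∈ t, (u P).ncard ≤ m)
    (huS : ∀ P ∈ t, ∀ l ∈ u P, l ≤ S ∧ finrank F l = 2) (hst : ∀ C ∈ s, ∃ P ∈ t, C.line ∈ u P) :
    s.ncard ≤ 2 * (n * (m * q ^ 2)) := by
  let planes (l : Sub₅) := {π : Sub₅ | l ≤ π ∧ ¬π ≤ S ∧ finrank F π = 3}
  let T := {x : Sub₅ × Sub₅ × Sub₅ | x.1 ∈ t ∧ x.2.1 ∈ u x.1 ∧ x.2.2 ∈ planes x.2.1}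
  calc s.ncard ≤ 2 * T.ncard := by
        refine ncard_le_two_mul_of_exists_coflag hs Prod.snd fun C hC => ?_
        obtain ⟨P, hP, hl⟩ := hst C hC
        exact ⟨(P, C.line, C.plane), ⟨hP, hl, C.le_line_plane, hπS C hC, C.dim_plane⟩, rfl⟩
    _ ≤ 2 * (n * (m * q ^ 2)) := by
        gcongr
        refine (ncard_prod_le_mul
          (u := fun P => {y : Sub₅ × Sub₅ | y.1 ∈ u P ∧ y.2 ∈ planes y.1}) (fun x hx => hx)
          fun P hP => ?_).trans (Nat.mul_le_mul_right _ ht)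
        refine (ncard_prod_le_mul (fun y hy => hy) fun l hl => ?_).trans
          (Nat.mul_le_mul_right _ (hu P hP))
        exact (ncard_planes_not_le_solid hq (huS P hP l hl).2 hS (huS P hP l hl).1).le

theorem ncard_le_of_caseA1 (hq : Fintype.card F = q) {M s : Set (Chamber4 F)}
    (hs : ∀ C ∈ s, C ∈ M ∧ weight4 M C.line C.plane ≤ 2) {σ : Sub₅} (hσ : finrank F σ = 3)
    (hsσ : ∀ C ∈ s, C.pt ≤ σ) {P₀ : Sub₅} (hP₀ : ∀ C ∈ s, P₀ ≤ C.plane ∧ ¬P₀ ≤ C.line) :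
    s.ncard ≤ 2 * ((q ^ 2 + q + 1) * (q ^ 3 + q ^ 2 + q + 1)) := by
  let T := {x : Sub₅ × Sub₅ | x.1 ∈ {P : Sub₅ | P ≤ σ ∧ finrank F P = 1} ∧
    x.2 ∈ {l : Sub₅ | x.1 ≤ l ∧ finrank F l = 2}}
  calc s.ncard ≤ 2 * T.ncard := by
        refine ncard_le_two_mul_of_exists_coflag hs (fun x => (x.2, x.2 ⊔ P₀)) fun C hC => ?_
        obtain ⟨hP₀π, hP₀l⟩ := hP₀ C hC
        refine ⟨(C.pt, C.line), ⟨⟨hsσ C hC, C.dim_pt⟩, C.le_pt_line, C.dim_line⟩, Prod.ext rfl ?_⟩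
        exact (C.line_covBy_plane.eq_or_eq le_sup_left (sup_le C.le_line_plane hP₀π)).resolve_left
          fun h => hP₀l (h ▸ le_sup_right)
    _ ≤ _ := by
        gcongr
        refine (ncard_prod_le_mul (s := T) (t := {P : Sub₅ | P ≤ σ ∧ finrank F P = 1})
          (u := fun P => {l : Sub₅ | P ≤ l ∧ finrank F l = 2}) (m := q ^ 3 + q ^ 2 + q + 1)
          (fun x hx => hx) fun P hP => ?_).trans_eq ?_
        · exact (ncard_lines_through_of_finrank_eq_five hq (finrank_fin_fun F) hP.2).le
        · rw [ncard_points_of_finrank_eq_three hq hσ]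

theorem ncard_le_of_caseA2_of_not_le (hq : Fintype.card F = q) {M s : Set (Chamber4 F)}
    (hs : ∀ C ∈ s, C ∈ M ∧ weight4 M C.line C.plane ≤ 2) {σ S₀ : Sub₅} (hσ : finrank F σ = 3)
    (hS₀ : finrank F S₀ = 4) (hσS₀ : ¬σ ≤ S₀) (hsσ : ∀ C ∈ s, C.pt ≤ σ)
    (hsS₀ : ∀ C ∈ s, C.line ≤ S₀ ∧ ¬C.plane ≤ S₀) :
    s.ncard ≤ 2 * ((q + 1) * ((q ^ 2 + q + 1) * q ^ 2)) :=
  ncard_le_of_lines_through_points hq hs hS₀ (fun C hC => (hsS₀ C hC).2)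
    (t := {P | P ≤ σ ⊓ S₀ ∧ finrank F P = 1})
    (u := fun P => {l | P ≤ l ∧ l ≤ S₀ ∧ finrank F l = 2})
    (ncard_points_of_finrank_eq_two hq (finrank_inf_eq_two_of_not_le hσ hS₀ hσS₀)).le
    (fun _ hP =>
      (ncard_lines_through_of_finrank_eq_four hq hP.2 (hP.1.trans inf_le_right) hS₀).le)
    (fun _ _ _ hl => ⟨hl.2.1, hl.2.2⟩) fun C hC =>
      ⟨C.pt, ⟨le_inf (hsσ C hC) (C.le_pt_line.trans (hsS₀ C hC).1), C.dim_pt⟩, C.le_pt_line,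
        (hsS₀ C hC).1, C.dim_line⟩

theorem ncard_le_of_caseA2_of_le_solid (hq : Fintype.card F = q) {M s : Set (Chamber4 F)}
    (hs : ∀ C ∈ s, C ∈ M ∧ weight4 M C.line C.plane ≤ 2) {σ S₀ : Sub₅} (hσ : finrank F σ = 3)
    (hS₀ : finrank F S₀ = 4) (hσS₀ : σ ≤ S₀) (hsS₀ : ∀ C ∈ s, C.line ≤ S₀ ∧ ¬C.plane ≤ S₀)
    (hsolid : ∀ C ∈ s, σ ≤ C.solid) :
    s.ncard ≤ 2 * ((q ^ 2 + q + 1) * q ^ 2) := by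
  let T := {x : Sub₅ × Sub₅ | x.1 ∈ {l : Sub₅ | l ≤ σ ∧ finrank F l = 2} ∧
    x.2 ∈ {π : Sub₅ | x.1 ≤ π ∧ ¬π ≤ S₀ ∧ finrank F π = 3}}
  calc s.ncard ≤ 2 * T.ncard := by
        refine ncard_le_two_mul_of_exists_coflag hs id fun C hC => ?_
        obtain ⟨hCS, hπS⟩ := hsS₀ C hC
        -- `π ⊓ σ` has dimension at least `3 + 3 - 4` and lies in `π ⊓ S₀ = ℓ`
        have hπσ : C.plane ⊓ σ = C.line := by
          refine eq_of_le_of_finrank_le (C.plane_inf_eq_line hCS hπS ▸ inf_le_inf_left _ hσS₀) ?_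
          have := finrank_add_finrank_le_finrank_inf C.le_plane_solid (hsolid C hC)
          rw [C.dim_plane, hσ, C.dim_solid] at this
          rw [C.dim_line]
          omega
        exact ⟨(C.line, C.plane), ⟨⟨hπσ ▸ inf_le_right, C.dim_line⟩, C.le_line_plane, hπS,
          C.dim_plane⟩, rfl⟩
    _ ≤ _ := by
        gcongr
        refine (ncard_prod_le_mul (s := T) (t := {l : Sub₅ | l ≤ σ ∧ finrank F l = 2})
          (u := fun l => {π : Sub₅ | l ≤ π ∧ ¬π ≤ S₀ ∧ finrank F π = 3}) (m := q ^ 2)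
          (fun x hx => hx) fun l hl => ?_).trans_eq ?_
        · exact (ncard_planes_not_le_solid hq hl.2 hS₀ (hl.1.trans hσS₀)).le
        · rw [ncard_lines_eq_ncard_points hq hσ, ncard_points_of_finrank_eq_three hq hσ]

/-- Pairs of chambers with meeting lines are counted from each chamber through the common point;
pairs with skew lines are non-opposite only through a point–solid incidence, counted from the
chamber owning the solid. -/
theorem ncard_le_of_caseA2_of_not_le_solid (hq : Fintype.card F = q) {M s : Set (Chamber4 F)}
    (hM : Indep4 M) (hs : ∀ C ∈ s, C ∈ M ∧ weight4 M C.line C.plane ≤ 2) {σ S₀ : Sub₅}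
    (hσ : finrank F σ = 3) (hS₀ : finrank F S₀ = 4) (hσS₀ : σ ≤ S₀) (hsσ : ∀ C ∈ s, C.pt ≤ σ)
    (hsS₀ : ∀ C ∈ s, C.line ≤ S₀ ∧ ¬C.plane ≤ S₀) (hsolid : ∀ C ∈ s, ¬σ ≤ C.solid) :
    s.ncard ≤
      2 * ((q + 1) * ((q ^ 2 + q + 1) * q ^ 2)) + 2 * (2 * ((q + 1) * (q ^ 2 * q ^ 2))) := by
  refine ncard_le_add_two_mul_of_forall_or (fun C D => C.line ⊓ D.line ≠ ⊥)
    (fun C D => C.line ⊓ D.line = ⊥ ∧ C.pt ≤ D.solid) (fun C hC D hD => ?_) (fun C hC => ?_)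
    fun D hD => ?_
  · by_cases hCD : C.line ⊓ D.line = ⊥
    · rcases Chamber4.pt_le_solid_or_of_not_opp (hsS₀ C hC).1 (hsS₀ D hD).1 (hsS₀ C hC).2
        (hsS₀ D hD).2 hCD (hM C (hs C hC).1 D (hs D hD).1) with h | h
      · exact Or.inr (Or.inl ⟨hCD, h⟩)
      · exact Or.inr (Or.inr ⟨inf_comm C.line D.line ▸ hCD, h⟩)
    · exact Or.inl hCD
  · refine ncard_le_of_lines_through_points hq (fun D hD => hs D hD.1) hS₀
      (fun D hD => (hsS₀ D hD.1).2) (t := {P | P ≤ C.line ∧ finrank F P = 1})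
      (u := fun P => {l | P ≤ l ∧ l ≤ S₀ ∧ finrank F l = 2})
      (ncard_points_of_finrank_eq_two hq C.dim_line).le
      (fun _ hP => (ncard_lines_through_of_finrank_eq_four hq hP.2
        (hP.1.trans (hsS₀ C hC).1) hS₀).le)
      (fun _ _ _ hl => ⟨hl.2.1, hl.2.2⟩) fun D ⟨hD, hCD⟩ => ?_
    obtain ⟨P, hP, hP1⟩ := exists_le_finrank_eq_one hCD
    exact ⟨P, ⟨hP.trans inf_le_left, hP1⟩, hP.trans inf_le_right, (hsS₀ D hD).1, D.dim_line⟩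
  · refine ncard_le_of_lines_through_points hq (fun C hC => hs C hC.1) hS₀
      (fun C hC => (hsS₀ C hC.1).2) (t := {P | P ≤ σ ⊓ D.solid ∧ finrank F P = 1})
      (u := fun P => {l | P ≤ l ∧ l ≤ S₀ ∧ finrank F l = 2 ∧ l ⊓ D.line = ⊥})
      (ncard_points_of_finrank_eq_two hq
        (finrank_inf_eq_two_of_not_le hσ D.dim_solid (hsolid D hD))).le
      (fun _ hP => ncard_lines_through_inf_eq_bot_le hq hP.2 D.dim_line hS₀
        (hP.1.trans (inf_le_left.trans hσS₀)) (hsS₀ D hD).1)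
      (fun _ _ _ hl => ⟨hl.2.1, hl.2.2.1⟩) fun C ⟨hC, hCD, hCpt⟩ => ?_
    exact ⟨C.pt, ⟨le_inf (hsσ C hC) hCpt, C.dim_pt⟩, C.le_pt_line, (hsS₀ C hC).1, C.dim_line, hCD⟩

theorem ncard_le_of_caseA2_of_le (hq : Fintype.card F = q) {M s : Set (Chamber4 F)}
    (hM : Indep4 M) (hs : ∀ C ∈ s, C ∈ M ∧ weight4 M C.line C.plane ≤ 2) {σ S₀ : Sub₅}
    (hσ : finrank F σ = 3) (hS₀ : finrank F S₀ = 4) (hσS₀ : σ ≤ S₀) (hsσ : ∀ C ∈ s, C.pt ≤ σ)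
    (hsS₀ : ∀ C ∈ s, C.line ≤ S₀ ∧ ¬C.plane ≤ S₀) :
    s.ncard ≤ 2 * ((q ^ 2 + q + 1) * q ^ 2) +
      (2 * ((q + 1) * ((q ^ 2 + q + 1) * q ^ 2)) + 2 * (2 * ((q + 1) * (q ^ 2 * q ^ 2)))) := by
  rw [← ncard_inter_add_ncard_sdiff_eq_ncard s {C | σ ≤ C.solid}]
  exact add_le_add
    (ncard_le_of_caseA2_of_le_solid hq (fun C hC => hs C hC.1) hσ hS₀ hσS₀
      (fun C hC => hsS₀ C hC.1) fun C hC => hC.2)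
    (ncard_le_of_caseA2_of_not_le_solid hq hM (fun C hC => hs C hC.1) hσ hS₀ hσS₀
      (fun C hC => hsσ C hC.1) (fun C hC => hsS₀ C hC.1) fun C hC => hC.2)

end Chambers

/-- In Case A, for a plane `σ`, the set `Y` of chambers of `M` whose coflag has
`M`-weight at most two and whose point lies in `σ` satisfies
`|Y| ≤ 6q⁵+12q⁴+8q³+4q²`. -/
theorem statement_17 (q : ℕ) (F : Type) [Field F] [Fintype F]
    (hq : Fintype.card F = q) (M : Set (Chamber4 F)) (hM : MaxIndep4 M)
    (hA : CaseA q M) (σ : Submodule F (Fin 5 → F)) (hσ : Module.finrank F ↥σ = 3) :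
    Set.ncard {C | C ∈ M ∧ weight4 M C.line C.plane ≤ 2 ∧ C.pt ≤ σ} ≤
      6*q^5+12*q^4+8*q^3+4*q^2 := by
  set Y := {C | C ∈ M ∧ weight4 M C.line C.plane ≤ 2 ∧ C.pt ≤ σ}
  have hq2 : 2 ≤ q := hq ▸ Fintype.one_lt_card
  have hY : ∀ C ∈ Y, C ∈ M ∧ weight4 M C.line C.plane ≤ 2 := fun C hC => ⟨hC.1, hC.2.1⟩
  have hlow : ∀ C ∈ Y, IsMCoflag M C.line C.plane ∧ weight4 M C.line C.plane < (q + 1) ^ 2 :=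
    fun C hC => ⟨⟨C, hC.1, rfl, rfl⟩, by nlinarith [hC.2.1]⟩
  rcases hA with ⟨P₀, -, -, hP₀⟩ | ⟨S₀, hS₀, -, hS₀low⟩
  · refine (ncard_le_of_caseA1 hq hY hσ (fun C hC => hC.2.2)
      fun C hC => hP₀ _ _ (hlow C hC).1 (hlow C hC).2).trans ?_
    obtain ⟨r, rfl⟩ := Nat.exists_eq_add_of_le hq2
    ring_nf
    omega
  have hYS₀ : ∀ C ∈ Y, C.line ≤ S₀ ∧ ¬C.plane ≤ S₀ :=
    fun C hC => hS₀low _ _ (hlow C hC).1 (hlow C hC).2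
  by_cases hσS₀ : σ ≤ S₀
  · exact (ncard_le_of_caseA2_of_le hq hM.1 hY hσ hS₀ hσS₀ (fun C hC => hC.2.2) hYS₀).trans
      (by nlinarith)
  · exact (ncard_le_of_caseA2_of_not_le hq hY hσ hS₀ hσS₀ (fun C hC => hC.2.2) hYS₀).trans
      (by nlinarith [pow_pos (by omega : 0 < q) 5])
end
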